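/- arXiv:1811.04297 — 6 statements merged into one kernel-verified Lean document; each statement's English description precedes it below -/
import Mathlib

section
/- Let ℓ ≥ 1, let Q(T₁,…,T_ℓ) be a polynomial of degree δ ≥ 1 with nonnegative real coefficients, let m be a positive odd integer, and let G > 0 and c₀ > 0. There is a constant C, depending only on Q, ℓ, m, G, and c₀, such that the following holds. Let (A, X, h, (E_d)) be a sieve setup, let P be a finite set of primes, and let g₁,…,g_ℓ be nonnegative strongly additive functions with g_j(p) ≤ G for all p ∈ P and all j. Set 𝔎 = max_{1≤i,j≤ℓ} |κ^P(g_i,g_j)| and 𝔐 = max_{1≤i≤ℓ} μ^P(g_i), and assume 𝔎 ≥ 1, 𝔐 ≥ 1, μ^P(1) ≥ 1, and μ^P(1)^{δm}·Σ_{d ∈ D_{δm}(P)} |E_d| ≤ c₀·X·𝔎^{δm/2 − 1}. Then |M_m| ≤ C·(X·B_Q(P)^{m−1} + X·𝔐^{δm − (m+1)/2}), where M_m = Σ_{a ∈ A} (Q(g₁^P(a),…,g_ℓ^P(a)) − A_Q(P))^m. -/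
open MeasureTheory Filter
open scoped Classical

noncomputable section

/-- A function `g : ℕ → ℝ` is strongly additive if `g (m * n) = g m + g n` whenever
`m` and `n` are coprime, and `g (p ^ α) = g p` for every prime `p` and `α ≥ 1`. -/
def StronglyAdditive (g : ℕ → ℝ) : Prop :=
  (∀ m n : ℕ, 0 < m → 0 < n → Nat.Coprime m n → g (m * n) = g m + g n) ∧
  ∀ p α : ℕ, p.Prime → 1 ≤ α → g (p ^ α) = g p

/-- A sieve setup: a finite multiset `A` of positive integers, an approximation `X > 0`
to `#A`, a multiplicative function `h` with `0 ≤ h(d) ≤ d`, and remainder terms `E d`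
defined by `#A_d = (h(d)/d)·X + E_d`, where `A_d` is the sub-multiset of multiples of `d`. -/
structure SieveSetup where
  A : Multiset ℕ
  X : ℝ
  h : ℕ → ℝ
  E : ℕ → ℝ
  mem_pos : ∀ a ∈ A, 0 < a
  X_pos : 0 < X
  h_one : h 1 = 1
  h_mult : ∀ m n : ℕ, Nat.Coprime m n → h (m * n) = h m * h n
  h_nonneg : ∀ d : ℕ, 0 < d → 0 ≤ h d
  h_le : ∀ d : ℕ, 0 < d → h d ≤ (d : ℝ)
  count_eq : ∀ d : ℕ, 0 < d →
    ((A.filter (fun a => d ∣ a)).card : ℝ) = h d / d * X + E d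

/-- `μ^P(g) = ∑_{p ∈ P} g(p) h(p)/p`. -/
def muP (h : ℕ → ℝ) (P : Finset ℕ) (g : ℕ → ℝ) : ℝ := ∑ p ∈ P, g p * (h p / p)

/-- `μ^P(1) = ∑_{p ∈ P} h(p)/p`. -/
def muP1 (h : ℕ → ℝ) (P : Finset ℕ) : ℝ := ∑ p ∈ P, h p / p

/-- `κ^P(g₁, g₂) = ∑_{p ∈ P} g₁(p) g₂(p) (h(p)/p)(1 − h(p)/p)`. -/
def kappaP (h : ℕ → ℝ) (P : Finset ℕ) (g₁ g₂ : ℕ → ℝ) : ℝ :=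
  ∑ p ∈ P, g₁ p * g₂ p * (h p / p) * (1 - h p / p)

/-- `g^P(a) = ∑_{p ∈ P, p ∣ a} g(p)`. -/
def gP (P : Finset ℕ) (g : ℕ → ℝ) (a : ℕ) : ℝ := ∑ p ∈ P.filter (· ∣ a), g p

/-- `f_r(a)`: the completely multiplicative function of `r` with
`f_p(a) = 1 − h(p)/p` if `p ∣ a` and `f_p(a) = −h(p)/p` if `p ∤ a`. -/
def ffun (h : ℕ → ℝ) (r a : ℕ) : ℝ :=
  r.factorization.prod fun p α => (if p ∣ a then 1 - h p / p else -(h p / p)) ^ α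

/-- `F_g^P(a) = ∑_{p ∈ P} g(p) f_p(a)`. -/
def FP (h : ℕ → ℝ) (P : Finset ℕ) (g : ℕ → ℝ) (a : ℕ) : ℝ := ∑ p ∈ P, g p * ffun h p a

/-- `D_k(P)`: the squarefree integers (including 1) that are products of at most `k`
distinct primes of `P`. -/
def Dk (P : Finset ℕ) (k : ℕ) : Finset ℕ :=
  (P.powerset.filter fun S => S.card ≤ k).image fun S => ∏ p ∈ S, p

/-- The multiplicative function `H` with
`H(p^α) = (h(p)/p)(1 − h(p)/p)^α + (−h(p)/p)^α (1 − h(p)/p)`. -/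
def Hfun (h : ℕ → ℝ) (n : ℕ) : ℝ :=
  n.factorization.prod fun p α =>
    h p / p * (1 - h p / p) ^ α + (-(h p / p)) ^ α * (1 - h p / p)

/-- The multiplicative function `J(·, s)` with `J(p^α, s) = (1 − h(p)/p)^α − (−h(p)/p)^α`
if `p ∣ s`, and `J(p^α, s) = (−h(p)/p)^α` if `p ∤ s`. -/
def Jfun (h : ℕ → ℝ) (r s : ℕ) : ℝ :=
  r.factorization.prod fun p α =>
    if p ∣ s then (1 - h p / p) ^ α - (-(h p / p)) ^ α else (-(h p / p)) ^ α

/-- A positive integer is squarefull if `p² ∣ n` for every prime `p ∣ n`. -/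
def Squarefull (n : ℕ) : Prop := ∀ p : ℕ, p.Prime → p ∣ n → p ^ 2 ∣ n

/-- `τ : {1,…,k} → {1,…,l}` is 2-to-1 if every fiber has exactly two elements. -/
def TwoToOne {k l : ℕ} (τ : Fin k → Fin l) : Prop :=
  ∀ j : Fin l, (Finset.univ.filter fun i => τ i = j).card = 2

/-- For a 2-to-1 map `τ` and symmetric `z`, this equals `∏_j z (Υ₁ j) (Υ₂ j)`, where
`Υ₁ j, Υ₂ j` are the two preimages of `j` under `τ`: each factor averages `z` over the
two ordered pairs of distinct elements of the fiber of `j`. -/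
def fiberProd {k l : ℕ} (z : Fin k → Fin k → ℝ) (τ : Fin k → Fin l) : ℝ :=
  ∏ j : Fin l, (∑ i ∈ Finset.univ.filter (fun i => τ i = j),
    ∑ i' ∈ Finset.univ.filter (fun i' => τ i' = j ∧ i' ≠ i), z i i') / 2

/-- `C_m = m! / (2^{m/2} (m/2)!)`, the `m`-th moment of the standard normal distribution
for even `m`. -/
def Cm (m : ℕ) : ℝ := (Nat.factorial m : ℝ) / (2 ^ (m / 2) * (Nat.factorial (m / 2) : ℝ))

/-- `A_Q(P) = Q(μ^P(g₁), …, μ^P(g_ℓ))`. -/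
def AQP {ℓ : ℕ} (h : ℕ → ℝ) (P : Finset ℕ) (Q : MvPolynomial (Fin ℓ) ℝ)
    (g : Fin ℓ → ℕ → ℝ) : ℝ :=
  MvPolynomial.eval (fun i => muP h P (g i)) Q

/-- `B_Q(P)² = ∑_{i,j} (∂Q/∂T_i)(μ^P(g)) (∂Q/∂T_j)(μ^P(g)) κ^P(g_i, g_j)`. -/
def BQP2 {ℓ : ℕ} (h : ℕ → ℝ) (P : Finset ℕ) (Q : MvPolynomial (Fin ℓ) ℝ)
    (g : Fin ℓ → ℕ → ℝ) : ℝ :=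
  ∑ i : Fin ℓ, ∑ j : Fin ℓ,
    MvPolynomial.eval (fun i' => muP h P (g i')) (MvPolynomial.pderiv i Q) *
    MvPolynomial.eval (fun i' => muP h P (g i')) (MvPolynomial.pderiv j Q) *
    kappaP h P (g i) (g j)

/-- `B_Q(P)`, the square root of `B_Q(P)²`. -/
def BQP {ℓ : ℕ} (h : ℕ → ℝ) (P : Finset ℕ) (Q : MvPolynomial (Fin ℓ) ℝ)
    (g : Fin ℓ → ℕ → ℝ) : ℝ :=
  Real.sqrt (BQP2 h P Q g)

/-- The `m`-th moment `M_m = ∑_{a ∈ A} (Q(g₁^P(a), …, g_ℓ^P(a)) − A_Q(P))^m`. -/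
def Mm {ℓ : ℕ} (S : SieveSetup) (P : Finset ℕ) (Q : MvPolynomial (Fin ℓ) ℝ)
    (g : Fin ℓ → ℕ → ℝ) (m : ℕ) : ℝ :=
  (S.A.map fun a =>
    (MvPolynomial.eval (fun i => gP P (g i) a) Q - AQP S.h P Q g) ^ m).sum
open Finset
open scoped Classical

noncomputable section

namespace MomHelp

lemma msum_fsum {γ : Type*} (A : Multiset ℕ) (s : Finset γ) (F : γ → ℕ → ℝ) :
    (A.map (fun a => ∑ j ∈ s, F j a)).sum = ∑ j ∈ s, (A.map (F j)).sum := by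
  induction A using Multiset.induction_on with
  | empty => simp
  | cons a A ih => simp [ih, Finset.sum_add_distrib]

lemma msum_const_mul (A : Multiset ℕ) (c : ℝ) (F : ℕ → ℝ) :
    (A.map (fun a => c * F a)).sum = c * (A.map F).sum := by
  induction A using Multiset.induction_on with
  | empty => simp
  | cons a A ih => simp [ih, mul_add]

lemma msum_abs_le (A : Multiset ℕ) (F : ℕ → ℝ) :
    |(A.map F).sum| ≤ (A.map (fun a => |F a|)).sum := by
  induction A using Multiset.induction_on with
  | empty => simp
  | cons a A ih =>
    simp only [Multiset.map_cons, Multiset.sum_cons]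
    exact (abs_add_le _ _).trans (by linarith [ih])

lemma msum_le_msum (A : Multiset ℕ) (F G : ℕ → ℝ) (h : ∀ a ∈ A, F a ≤ G a) :
    (A.map F).sum ≤ (A.map G).sum := by
  induction A using Multiset.induction_on with
  | empty => simp
  | cons a A ih =>
    simp only [Multiset.map_cons, Multiset.sum_cons]
    have := h a (Multiset.mem_cons_self a A)
    have := ih (fun b hb => h b (Multiset.mem_cons_of_mem hb))
    linarith

lemma msum_indicator (A : Multiset ℕ) (d : ℕ) :
    (A.map (fun a => if d ∣ a then (1:ℝ) else 0)).sum
      = ((A.filter (fun a => d ∣ a)).card : ℝ) := by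
  induction A using Multiset.induction_on with
  | empty => simp
  | cons a A ih =>
    by_cases hd : d ∣ a <;>
      simp [Multiset.filter_cons, hd, ih, add_comm]

end MomHelp
open Finset
open scoped Classical

noncomputable section

namespace MomHelp

lemma prod_primes_pos (T : Finset ℕ) (hT : ∀ p ∈ T, p.Prime) : 0 < ∏ p ∈ T, p :=
  Finset.prod_pos fun p hp => (hT p hp).pos

lemma prime_prod_dvd_iff (T : Finset ℕ) (hT : ∀ p ∈ T, p.Prime) (a : ℕ) :
    (∏ p ∈ T, p) ∣ a ↔ ∀ p ∈ T, p ∣ a := by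
  constructor
  · intro h p hp
    exact dvd_trans (Finset.dvd_prod_of_mem _ hp) h
  · intro h
    exact Finset.prod_primes_dvd a (fun p hp => (hT p hp).prime) h

lemma prod_primes_inj (s t : Finset ℕ) (hs : ∀ p ∈ s, p.Prime) (ht : ∀ p ∈ t, p.Prime)
    (h : ∏ p ∈ s, p = ∏ p ∈ t, p) : s = t := by
  have key : ∀ (u v : Finset ℕ), (∀ p ∈ u, p.Prime) → (∀ p ∈ v, p.Prime) →
      (∏ p ∈ u, p = ∏ p ∈ v, p) → u ⊆ v := by
    intro u v hu hv huv p hp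
    have h1 : p ∣ ∏ q ∈ v, q := huv ▸ Finset.dvd_prod_of_mem _ hp
    obtain ⟨q, hq, hpq⟩ := (Nat.Prime.prime (hu p hp)).exists_mem_finset_dvd h1
    rwa [(Nat.prime_dvd_prime_iff_eq (hu p hp) (hv q hq)).mp hpq]
  exact le_antisymm (key s t hs ht h) (key t s ht hs h.symm)

lemma hdiv_prod (h : ℕ → ℝ) (h_one : h 1 = 1)
    (h_mult : ∀ m n : ℕ, Nat.Coprime m n → h (m * n) = h m * h n)
    (T : Finset ℕ) : (∀ p ∈ T, p.Prime) →
    h (∏ p ∈ T, p) / (∏ p ∈ T, p : ℕ) = ∏ p ∈ T, h p / p := by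
  induction T using Finset.induction_on with
  | empty => intro _; simp [h_one]
  | @insert p T hpT ih =>
    intro hT
    have hp : p.Prime := hT p (Finset.mem_insert_self p T)
    have hT' : ∀ q ∈ T, q.Prime := fun q hq => hT q (Finset.mem_insert_of_mem hq)
    have hcop : Nat.Coprime p (∏ q ∈ T, q) := by
      apply Nat.Coprime.prod_right
      intro q hq
      exact (Nat.coprime_primes hp (hT' q hq)).mpr (by rintro rfl; exact hpT hq)
    have hTpos : (0:ℝ) < (∏ q ∈ T, q : ℕ) := by
      exact_mod_cast prod_primes_pos T hT'
    have hppos : (0:ℝ) < (p:ℕ) := by exact_mod_cast hp.pos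
    simp only [Finset.prod_insert hpT]
    rw [h_mult p _ hcop, ← ih hT']
    push_cast
    field_simp

/-- enumeration of a finset of naturals of card `s` as a tuple -/
def enumFn (s : ℕ) (V : Finset ℕ) : Fin s → ℕ :=
  fun i => if hV : V.card = s then V.orderEmbOfFin hV i else 0

lemma enumFn_eq (s : ℕ) (V : Finset ℕ) (hc : V.card = s) (i : Fin s) :
    enumFn s V i = V.orderEmbOfFin hc i := by
  simp [enumFn, dif_pos hc]

lemma sum_powersetCard_prod_le (t : Finset ℕ) (f : ℕ → ℝ) (hf : ∀ p ∈ t, 0 ≤ f p) (s : ℕ) :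
    ∑ V ∈ t.powersetCard s, ∏ p ∈ V, f p ≤ (∑ p ∈ t, f p) ^ s := by
  classical
  have hmem : ∀ V ∈ t.powersetCard s, ∀ i, enumFn s V i ∈ V := by
    intro V hV i
    have hc : V.card = s := (Finset.mem_powersetCard.mp hV).2
    rw [enumFn_eq s V hc]
    exact Finset.orderEmbOfFin_mem V hc i
  have hprod : ∀ V ∈ t.powersetCard s, ∏ p ∈ V, f p = ∏ i : Fin s, f (enumFn s V i) := by
    intro V hV
    have hc : V.card = s := (Finset.mem_powersetCard.mp hV).2
    have : ∀ i : Fin s, enumFn s V i = V.orderEmbOfFin hc i := fun i => enumFn_eq s V hc i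
    simp only [this]
    rw [← Finset.prod_image (f := f) (g := fun i : Fin s => V.orderEmbOfFin hc i)
      (by intro x _ y _ hxy; exact (V.orderEmbOfFin hc).injective hxy)]
    congr 1
    symm
    apply Finset.eq_of_subset_of_card_le
    · intro p hp
      simp only [Finset.mem_image] at hp
      obtain ⟨i, _, rfl⟩ := hp
      exact Finset.orderEmbOfFin_mem V hc i
    · rw [Finset.card_image_of_injective _ (V.orderEmbOfFin hc).injective]
      simp [hc]
  have hinj : ∀ V ∈ t.powersetCard s, ∀ W ∈ t.powersetCard s, enumFn s V = enumFn s W → V = W := by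
    intro V hV W hW hVW
    have hcV : V.card = s := (Finset.mem_powersetCard.mp hV).2
    have hcW : W.card = s := (Finset.mem_powersetCard.mp hW).2
    have hr : Set.range (V.orderEmbOfFin hcV) = Set.range (W.orderEmbOfFin hcW) := by
      ext x
      constructor <;> rintro ⟨i, rfl⟩
      · exact ⟨i, by rw [← enumFn_eq s V hcV, ← enumFn_eq s W hcW, hVW]⟩
      · exact ⟨i, by rw [← enumFn_eq s W hcW, ← enumFn_eq s V hcV, hVW]⟩
    have h1 := Finset.range_orderEmbOfFin V hcV
    have h2 := Finset.range_orderEmbOfFin W hcW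
    rw [h1, h2] at hr
    exact_mod_cast Finset.coe_inj.mp hr
  calc ∑ V ∈ t.powersetCard s, ∏ p ∈ V, f p
      = ∑ V ∈ t.powersetCard s, ∏ i : Fin s, f (enumFn s V i) :=
        Finset.sum_congr rfl hprod
    _ = ∑ θ ∈ (t.powersetCard s).image (enumFn s), ∏ i : Fin s, f (θ i) := by
        rw [Finset.sum_image hinj]
    _ ≤ ∑ θ ∈ Fintype.piFinset (fun _ : Fin s => t), ∏ i : Fin s, f (θ i) := by
        apply Finset.sum_le_sum_of_subset_of_nonneg
        · intro θ hθ
          simp only [Finset.mem_image] at hθ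
          obtain ⟨V, hV, rfl⟩ := hθ
          rw [Fintype.mem_piFinset]
          intro i
          exact (Finset.mem_powersetCard.mp hV).1 (hmem V hV i)
        · intro θ hθ _
          rw [Fintype.mem_piFinset] at hθ
          exact Finset.prod_nonneg fun i _ => hf _ (hθ i)
    _ = (∑ p ∈ t, f p) ^ s := by
        rw [← Finset.prod_univ_sum]
        simp

end MomHelp
-- PRELUDE+H1+H2 assumed; this file: step A
open Finset
open scoped Classical

namespace MomHelp

def lam (S : SieveSetup) (p : ℕ) : ℝ := S.h p / p

def dl (S : SieveSetup) (p a : ℕ) : ℝ := (if p ∣ a then (1:ℝ) else 0) - lam S p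

def Hterm (S : SieveSetup) (p : ℕ) (α : ℕ) : ℝ :=
  lam S p * (1 - lam S p) ^ α + (1 - lam S p) * (-(lam S p)) ^ α

def mult {ι : Type*} [Fintype ι] (φ : ι → ℕ) (p : ℕ) : ℕ :=
  (Finset.univ.filter fun x => φ x = p).card

lemma lam_nonneg (S : SieveSetup) (p : ℕ) (hp : p.Prime) : 0 ≤ lam S p :=
  div_nonneg (S.h_nonneg p hp.pos) (by positivity)

lemma lam_le_one (S : SieveSetup) (p : ℕ) (hp : p.Prime) : lam S p ≤ 1 := by
  have : (0:ℝ) < p := by exact_mod_cast hp.pos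
  rw [lam, div_le_one this]
  exact S.h_le p hp.pos

lemma Hterm_one (S : SieveSetup) (p : ℕ) : Hterm S p 1 = 0 := by
  simp [Hterm]; ring

lemma Hterm_abs_le (S : SieveSetup) (p : ℕ) (hp : p.Prime) (α : ℕ) (hα : 2 ≤ α) :
    |Hterm S p α| ≤ lam S p * (1 - lam S p) := by
  obtain ⟨β, rfl⟩ : ∃ β, α = β + 2 := ⟨α - 2, by omega⟩
  set l := lam S p with hl
  have h0 : 0 ≤ l := lam_nonneg S p hp
  have h1 : l ≤ 1 := lam_le_one S p hp
  have e1 : |Hterm S p (β+2)| ≤ l * (1-l)^(β+2) + (1-l) * l^(β+2) := by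
    rw [Hterm, ← hl]
    refine (abs_add_le _ _).trans ?_
    have a1 : |l * (1-l)^(β+2)| = l * (1-l)^(β+2) :=
      abs_of_nonneg (mul_nonneg h0 (pow_nonneg (by linarith) _))
    have a2 : |(1-l) * (-l)^(β+2)| = (1-l) * l^(β+2) := by
      rw [abs_mul, abs_pow, abs_neg, abs_of_nonneg h0, abs_of_nonneg (by linarith)]
    rw [a1, a2]
  refine e1.trans ?_
  have hx : (1-l)^(β+1) ≤ 1-l := by
    simpa using pow_le_pow_of_le_one (by linarith) (by linarith) (show 1 ≤ β+1 by omega)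
  have hy : l^(β+1) ≤ l := by
    simpa using pow_le_pow_of_le_one h0 h1 (show 1 ≤ β+1 by omega)
  have key : (1-l)^(β+1) + l^(β+1) ≤ 1 := by linarith
  calc l * (1-l)^(β+2) + (1-l) * l^(β+2)
      = l*(1-l) * ((1-l)^(β+1) + l^(β+1)) := by ring
    _ ≤ l*(1-l) * 1 :=
        mul_le_mul_of_nonneg_left key (mul_nonneg h0 (by linarith))
    _ = l * (1-l) := by ring

lemma u_abs_le (l : ℝ) (h0 : 0 ≤ l) (h1 : l ≤ 1) (α : ℕ) (hα : 1 ≤ α) :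
    |(1 - l) ^ α - (-l) ^ α| ≤ 1 := by
  have e2 : (1-l)^α ≤ 1-l := by
    simpa using pow_le_pow_of_le_one (by linarith) (by linarith) hα
  have e3 : l^α ≤ l := by simpa using pow_le_pow_of_le_one h0 h1 hα
  have : |(-l)^α| = l^α := by rw [abs_pow, abs_neg, abs_of_nonneg h0]
  refine (abs_sub _ _).trans ?_
  rw [this, abs_of_nonneg (pow_nonneg (by linarith) α)]
  linarith

lemma mult_pos {ι : Type*} [Fintype ι] [DecidableEq ι] (φ : ι → ℕ) (p : ℕ)
    (hp : p ∈ Finset.image φ Finset.univ) : 1 ≤ mult φ p := by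
  rw [Finset.mem_image] at hp
  obtain ⟨x, _, rfl⟩ := hp
  rw [mult, Nat.succ_le_iff, Finset.card_pos]
  exact ⟨x, by simp⟩

lemma sum_mult {ι : Type*} [Fintype ι] [DecidableEq ι] (φ : ι → ℕ) :
    ∑ p ∈ Finset.image φ Finset.univ, mult φ p = Fintype.card ι := by
  rw [← Finset.card_univ]
  exact (Finset.card_eq_sum_card_fiberwise (fun x _ => Finset.mem_image_of_mem φ (mem_univ x))).symm

lemma prod_fiber_eq {ι : Type*} [Fintype ι] [DecidableEq ι] (φ : ι → ℕ) (f : ℕ → ℝ) :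
    ∏ x : ι, f (φ x) = ∏ p ∈ Finset.image φ Finset.univ, f p ^ mult φ p := by
  rw [← Finset.prod_fiberwise_of_maps_to (fun x _ => Finset.mem_image_of_mem φ (mem_univ x))
    (fun x => f (φ x))]
  refine Finset.prod_congr rfl fun p _ => ?_
  rw [mult, ← Finset.prod_const]
  refine Finset.prod_congr rfl fun x hx => ?_
  rw [Finset.mem_filter] at hx
  rw [hx.2]

lemma prod_dl_eq (S : SieveSetup) (P : Finset ℕ) (hP : ∀ p ∈ P, p.Prime)
    {ι : Type*} [Fintype ι] [DecidableEq ι] (φ : ι → ℕ) (hφ : ∀ x, φ x ∈ P) (a : ℕ) :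
    ∏ x : ι, dl S (φ x) a
      = ∑ T ∈ (Finset.image φ Finset.univ).powerset,
          (if (∏ p ∈ T, p) ∣ a then (1:ℝ) else 0) *
          ((∏ p ∈ T, ((1 - lam S p) ^ mult φ p - (-(lam S p)) ^ mult φ p)) *
           (∏ p ∈ (Finset.image φ Finset.univ) \ T, (-(lam S p)) ^ mult φ p)) := by
  have hprim : ∀ p ∈ Finset.image φ Finset.univ, p.Prime := by
    intro p hp; rw [Finset.mem_image] at hp; obtain ⟨x, _, rfl⟩ := hp; exact hP _ (hφ x)
  rw [prod_fiber_eq φ (fun p => dl S p a)]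
  have key : ∀ p ∈ Finset.image φ Finset.univ,
      dl S p a ^ mult φ p
        = (if p ∣ a then (1:ℝ) else 0) * ((1 - lam S p) ^ mult φ p - (-(lam S p)) ^ mult φ p)
          + (-(lam S p)) ^ mult φ p := by
    intro p hp
    by_cases hpa : p ∣ a
    · simp only [dl, if_pos hpa]; ring
    · simp only [dl, if_neg hpa]; ring
  rw [Finset.prod_congr rfl key, Finset.prod_add]
  refine Finset.sum_congr rfl fun T hT => ?_
  rw [Finset.mem_powerset] at hT
  have hTprim : ∀ p ∈ T, p.Prime := fun p hp => hprim p (hT hp)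
  rw [Finset.prod_mul_distrib, Finset.prod_boole]
  simp only [← prime_prod_dvd_iff T hTprim a]
  ring

lemma sieve_tuple (S : SieveSetup) (P : Finset ℕ) (hP : ∀ p ∈ P, p.Prime)
    {ι : Type*} [Fintype ι] [DecidableEq ι] (φ : ι → ℕ) (hφ : ∀ x, φ x ∈ P) :
    ∃ R : ℝ,
      (S.A.map (fun a => ∏ x : ι, dl S (φ x) a)).sum
        = S.X * (∏ p ∈ Finset.image φ Finset.univ, Hterm S p (mult φ p)) + R ∧
      |R| ≤ ∑ T ∈ (Finset.image φ Finset.univ).powerset,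
            (∏ p ∈ (Finset.image φ Finset.univ) \ T, lam S p) * |S.E (∏ p ∈ T, p)| := by
  classical
  set im := Finset.image φ Finset.univ with him
  have hprim : ∀ p ∈ im, p.Prime := by
    intro p hp; rw [him, Finset.mem_image] at hp; obtain ⟨x, _, rfl⟩ := hp; exact hP _ (hφ x)
  set u : ℕ → ℝ := fun p => (1 - lam S p) ^ mult φ p - (-(lam S p)) ^ mult φ p with hu
  set w : ℕ → ℝ := fun p => (-(lam S p)) ^ mult φ p with hw
  have expand : (S.A.map (fun a => ∏ x : ι, dl S (φ x) a)).sum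
      = ∑ T ∈ im.powerset, ((∏ p ∈ T, u p) * (∏ p ∈ im \ T, w p)) *
          ((S.A.filter (fun a => (∏ p ∈ T, p) ∣ a)).card : ℝ) := by
    rw [show (fun a => ∏ x : ι, dl S (φ x) a) = (fun a =>
        ∑ T ∈ im.powerset, (if (∏ p ∈ T, p) ∣ a then (1:ℝ) else 0) *
          ((∏ p ∈ T, u p) * (∏ p ∈ im \ T, w p)))
      from funext fun a => prod_dl_eq S P hP φ hφ a]
    rw [msum_fsum]
    refine Finset.sum_congr rfl fun T hT => ?_
    rw [show (fun a => (if (∏ p ∈ T, p) ∣ a then (1:ℝ) else 0) *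
          ((∏ p ∈ T, u p) * (∏ p ∈ im \ T, w p)))
        = (fun a => ((∏ p ∈ T, u p) * (∏ p ∈ im \ T, w p)) *
          (if (∏ p ∈ T, p) ∣ a then (1:ℝ) else 0)) from funext fun a => by ring]
    rw [msum_const_mul, msum_indicator]
  have hcount : ∀ T ∈ im.powerset,
      ((S.A.filter (fun a => (∏ p ∈ T, p) ∣ a)).card : ℝ)
        = (∏ p ∈ T, lam S p) * S.X + S.E (∏ p ∈ T, p) := by
    intro T hT
    rw [Finset.mem_powerset] at hT
    have hTprim : ∀ p ∈ T, p.Prime := fun p hp => hprim p (hT hp)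
    have hpos : 0 < ∏ p ∈ T, p := prod_primes_pos T hTprim
    rw [S.count_eq _ hpos, hdiv_prod S.h S.h_one S.h_mult T hTprim]
    simp [lam]
  refine ⟨∑ T ∈ im.powerset, ((∏ p ∈ T, u p) * (∏ p ∈ im \ T, w p)) * S.E (∏ p ∈ T, p), ?_, ?_⟩
  · rw [expand, Finset.sum_congr rfl (fun T hT => by rw [hcount T hT])]
    have step1 : ∑ T ∈ im.powerset, ((∏ p ∈ T, u p) * (∏ p ∈ im \ T, w p)) *
        ((∏ p ∈ T, lam S p) * S.X + S.E (∏ p ∈ T, p))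
        = S.X * (∑ T ∈ im.powerset, (∏ p ∈ T, lam S p * u p) * (∏ p ∈ im \ T, w p))
          + ∑ T ∈ im.powerset, ((∏ p ∈ T, u p) * (∏ p ∈ im \ T, w p)) * S.E (∏ p ∈ T, p) := by
      rw [Finset.mul_sum, ← Finset.sum_add_distrib]
      refine Finset.sum_congr rfl fun T hT => ?_
      rw [Finset.prod_mul_distrib]
      ring
    rw [step1]
    congr 2
    rw [← Finset.prod_add]
    refine Finset.prod_congr rfl fun p hp => ?_
    rw [Hterm, hu, hw]
    ring
  · refine (Finset.abs_sum_le_sum_abs _ _).trans (Finset.sum_le_sum fun T hT => ?_)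
    rw [Finset.mem_powerset] at hT
    rw [abs_mul, abs_mul]
    have hu1 : |∏ p ∈ T, u p| ≤ 1 := by
      rw [Finset.abs_prod]
      apply Finset.prod_le_one (fun p _ => abs_nonneg _)
      intro p hp
      exact u_abs_le (lam S p) (lam_nonneg S p (hprim p (hT hp)))
        (lam_le_one S p (hprim p (hT hp))) (mult φ p) (mult_pos φ p (hT hp))
    have hw1 : |∏ p ∈ im \ T, w p| ≤ ∏ p ∈ im \ T, lam S p := by
      rw [Finset.abs_prod]
      apply Finset.prod_le_prod (fun p _ => abs_nonneg _)
      intro p hp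
      have hpim : p ∈ im := (Finset.mem_sdiff.mp hp).1
      have h0 := lam_nonneg S p (hprim p hpim)
      have h1 := lam_le_one S p (hprim p hpim)
      rw [hw]
      rw [abs_pow, abs_neg, abs_of_nonneg h0]
      simpa using pow_le_pow_of_le_one h0 h1 (mult_pos φ p hpim)
    calc |∏ p ∈ T, u p| * |∏ p ∈ im \ T, w p| * |S.E (∏ p ∈ T, p)|
        ≤ 1 * (∏ p ∈ im \ T, lam S p) * |S.E (∏ p ∈ T, p)| := by
          apply mul_le_mul_of_nonneg_right _ (abs_nonneg _)
          exact mul_le_mul hu1 hw1 (abs_nonneg _) (by norm_num)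
      _ = (∏ p ∈ im \ T, lam S p) * |S.E (∏ p ∈ T, p)| := by ring

end MomHelp
namespace MomHelp
open Finset

lemma sum_filter_prod_le (P : Finset ℕ) (c : ℕ) (f : ℕ → ℝ) (hf : ∀ p ∈ P, 0 ≤ f p) :
    ∑ V ∈ P.powerset.filter (fun V => V.card ≤ c), ∏ p ∈ V, f p
      ≤ (c+1) * (max 1 (∑ p ∈ P, f p)) ^ c := by
  classical
  set 𝒮 := P.powerset.filter (fun V => V.card ≤ c) with h𝒮
  have hmaps : ∀ V ∈ 𝒮, V.card ∈ Finset.range (c+1) := by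
    intro V hV
    rw [h𝒮, Finset.mem_filter] at hV
    rw [Finset.mem_range]
    omega
  rw [← Finset.sum_fiberwise_of_maps_to hmaps (fun V => ∏ p ∈ V, f p)]
  have hinner : ∀ s ∈ Finset.range (c+1),
      ∑ V ∈ 𝒮.filter (fun V => V.card = s), ∏ p ∈ V, f p
        ≤ (max 1 (∑ p ∈ P, f p)) ^ c := by
    intro s hs
    have h1 : ∑ V ∈ 𝒮.filter (fun V => V.card = s), ∏ p ∈ V, f p
        ≤ ∑ V ∈ P.powersetCard s, ∏ p ∈ V, f p := by
      apply Finset.sum_le_sum_of_subset_of_nonneg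
      · intro V hV
        rw [Finset.mem_filter, h𝒮, Finset.mem_filter, Finset.mem_powerset] at hV
        rw [Finset.mem_powersetCard]
        exact ⟨hV.1.1, hV.2⟩
      · intro V hV _
        rw [Finset.mem_powersetCard] at hV
        exact Finset.prod_nonneg fun p hp => hf p (hV.1 hp)
    refine h1.trans ((sum_powersetCard_prod_le P f hf s).trans ?_)
    have h2 : (∑ p ∈ P, f p) ^ s ≤ (max 1 (∑ p ∈ P, f p)) ^ s := by
      apply pow_le_pow_left₀ (Finset.sum_nonneg fun p hp => hf p hp) (le_max_right _ _)
    refine h2.trans ?_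
    apply pow_le_pow_right₀ (le_max_left _ _)
    rw [Finset.mem_range] at hs
    omega
  calc ∑ s ∈ Finset.range (c+1), ∑ V ∈ 𝒮.filter (fun V => V.card = s), ∏ p ∈ V, f p
      ≤ ∑ s ∈ Finset.range (c+1), (max 1 (∑ p ∈ P, f p)) ^ c :=
        Finset.sum_le_sum hinner
    _ = (c+1) * (max 1 (∑ p ∈ P, f p)) ^ c := by
        rw [Finset.sum_const, Finset.card_range]
        simp [nsmul_eq_mul]

lemma pair_sum_le (P : Finset ℕ) (k : ℕ) (f w : Finset ℕ → ℝ)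
    (hf : ∀ T ⊆ P, 0 ≤ f T) (hw : ∀ V ⊆ P, 0 ≤ w V) :
    ∑ S' ∈ P.powerset.filter (fun V => V.card ≤ k), ∑ T ∈ S'.powerset, f T * w (S' \ T)
      ≤ (∑ T ∈ P.powerset.filter (fun V => V.card ≤ k), f T) *
        (∑ V ∈ P.powerset.filter (fun V => V.card ≤ k), w V) := by
  classical
  set 𝒮 := P.powerset.filter (fun V => V.card ≤ k) with h𝒮
  have hmem𝒮 : ∀ {V : Finset ℕ}, V ∈ 𝒮 ↔ V ⊆ P ∧ V.card ≤ k := by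
    intro V
    rw [h𝒮, Finset.mem_filter, Finset.mem_powerset]
  rw [← Finset.sum_sigma 𝒮 (fun S' => S'.powerset)
    (fun x => f x.2 * w (x.1 \ x.2))]
  set e : (Σ _ : Finset ℕ, Finset ℕ) → Finset ℕ × Finset ℕ := fun x => (x.2, x.1 \ x.2) with he
  have hinj : ∀ x ∈ 𝒮.sigma (fun S' => S'.powerset), ∀ y ∈ 𝒮.sigma (fun S' => S'.powerset),
      e x = e y → x = y := by
    rintro ⟨S₁, T₁⟩ hx ⟨S₂, T₂⟩ hy hxy
    rw [Finset.mem_sigma, Finset.mem_powerset] at hx hy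
    simp only [he, Prod.mk.injEq] at hxy
    obtain ⟨rfl, h2⟩ := hxy
    have hS : S₁ = S₂ := by
      calc S₁ = T₁ ∪ (S₁ \ T₁) := (Finset.union_sdiff_of_subset hx.2).symm
        _ = T₁ ∪ (S₂ \ T₁) := by rw [h2]
        _ = S₂ := Finset.union_sdiff_of_subset hy.2
    subst hS
    rfl
  have hfac : ∀ x ∈ 𝒮.sigma (fun S' => S'.powerset),
      f x.2 * w (x.1 \ x.2) = (fun y : Finset ℕ × Finset ℕ => f y.1 * w y.2) (e x) := by
    intro x _
    rfl
  rw [Finset.sum_congr rfl hfac]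
  have hsub : (𝒮.sigma (fun S' => S'.powerset)).image e ⊆ 𝒮 ×ˢ 𝒮 := by
    intro y hy
    rw [Finset.mem_image] at hy
    obtain ⟨⟨S', T⟩, hx, rfl⟩ := hy
    rw [Finset.mem_sigma, Finset.mem_powerset] at hx
    obtain ⟨hS', hT⟩ := hx
    rw [hmem𝒮] at hS'
    rw [Finset.mem_product]
    constructor
    · rw [hmem𝒮]
      exact ⟨hT.trans hS'.1, (Finset.card_le_card hT).trans hS'.2⟩
    · rw [hmem𝒮]
      exact ⟨(Finset.sdiff_subset).trans hS'.1,
        (Finset.card_le_card (Finset.sdiff_subset)).trans hS'.2⟩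
  calc ∑ x ∈ 𝒮.sigma (fun S' => S'.powerset), (fun y : Finset ℕ × Finset ℕ => f y.1 * w y.2) (e x)
      = ∑ y ∈ (𝒮.sigma (fun S' => S'.powerset)).image e, f y.1 * w y.2 :=
        (Finset.sum_image (f := fun y : Finset ℕ × Finset ℕ => f y.1 * w y.2) hinj).symm
    _ ≤ ∑ y ∈ 𝒮 ×ˢ 𝒮, f y.1 * w y.2 := by
        apply Finset.sum_le_sum_of_subset_of_nonneg hsub
        intro y hy _
        rw [Finset.mem_product, hmem𝒮, hmem𝒮] at hy
        exact mul_nonneg (hf _ hy.1.1) (hw _ hy.2.1)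
    _ = (∑ T ∈ 𝒮, f T) * (∑ V ∈ 𝒮, w V) := by
        rw [Finset.sum_product]
        rw [Finset.sum_mul_sum]

end MomHelp
namespace MomHelp
open Finset

lemma piFinset_fiber_card {ι : Type*} [Fintype ι] [DecidableEq ι] (P S' : Finset ℕ) :
    (((Fintype.piFinset (fun _ : ι => P)).filter
        (fun φ => Finset.image φ Finset.univ = S')).card : ℕ)
      ≤ S'.card ^ (Fintype.card ι) := by
  classical
  have hsub : (Fintype.piFinset (fun _ : ι => P)).filter
      (fun φ => Finset.image φ Finset.univ = S') ⊆ Fintype.piFinset (fun _ : ι => S') := by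
    intro φ hφ
    rw [Finset.mem_filter] at hφ
    rw [Fintype.mem_piFinset]
    intro x
    rw [← hφ.2]
    exact Finset.mem_image_of_mem φ (Finset.mem_univ x)
  refine (Finset.card_le_card hsub).trans ?_
  rw [Fintype.card_piFinset]
  simp

lemma main_sum_bound {ι : Type*} [Fintype ι] [DecidableEq ι] (P : Finset ℕ)
    (kap : ℕ → ℝ) (hkap : ∀ p ∈ P, 0 ≤ kap p) (k : ℕ) (hk : 1 ≤ k)
    (hcard : Fintype.card ι = k) :
    ∑ φ ∈ Fintype.piFinset (fun _ : ι => P),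
      (if ∀ p ∈ Finset.image φ Finset.univ, 2 ≤ mult φ p
        then ∏ p ∈ Finset.image φ Finset.univ, kap p else 0)
      ≤ (k:ℝ)^k * ((((k/2 : ℕ) : ℝ) + 1) * (max 1 (∑ p ∈ P, kap p)) ^ (k/2)) := by
  classical
  have hmaps : ∀ φ ∈ Fintype.piFinset (fun _ : ι => P),
      Finset.image φ Finset.univ ∈ P.powerset := by
    intro φ hφ
    rw [Finset.mem_powerset]
    intro p hp
    rw [Finset.mem_image] at hp
    obtain ⟨x, _, rfl⟩ := hp
    exact Fintype.mem_piFinset.mp hφ x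
  rw [← Finset.sum_fiberwise_of_maps_to hmaps]
  have hinner : ∀ S' ∈ P.powerset,
      ∑ φ ∈ (Fintype.piFinset (fun _ : ι => P)).filter
          (fun φ => Finset.image φ Finset.univ = S'),
        (if ∀ p ∈ Finset.image φ Finset.univ, 2 ≤ mult φ p
          then ∏ p ∈ Finset.image φ Finset.univ, kap p else 0)
        ≤ (k:ℝ)^k * (if 2 * S'.card ≤ k then ∏ p ∈ S', kap p else 0) := by
    intro S' hS'
    rw [Finset.mem_powerset] at hS'
    have hprodnn : 0 ≤ ∏ p ∈ S', kap p := Finset.prod_nonneg fun p hp => hkap p (hS' hp)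
    have hB : ∀ φ ∈ (Fintype.piFinset (fun _ : ι => P)).filter
        (fun φ => Finset.image φ Finset.univ = S'),
        (if ∀ p ∈ Finset.image φ Finset.univ, 2 ≤ mult φ p
          then ∏ p ∈ Finset.image φ Finset.univ, kap p else 0)
          ≤ (if 2 * S'.card ≤ k then ∏ p ∈ S', kap p else 0) := by
      intro φ hφ
      rw [Finset.mem_filter] at hφ
      rw [hφ.2]
      by_cases hind : ∀ p ∈ S', 2 ≤ mult φ p
      · rw [if_pos hind]
        have h2 : 2 * S'.card ≤ k := by
          have h3 : ∑ p ∈ S', 2 ≤ ∑ p ∈ S', mult φ p := Finset.sum_le_sum hind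
          rw [Finset.sum_const, smul_eq_mul] at h3
          have h4 : ∑ p ∈ S', mult φ p = k := by
            rw [← hφ.2] at *
            rw [sum_mult φ, hcard]
          omega
        rw [if_pos h2]
      · rw [if_neg hind]
        split <;> [exact hprodnn; exact le_refl 0]
    refine (Finset.sum_le_sum hB).trans ?_
    rw [Finset.sum_const, nsmul_eq_mul]
    by_cases h2 : 2 * S'.card ≤ k
    · rw [if_pos h2]
      apply mul_le_mul_of_nonneg_right _ hprodnn
      have hc1 : (((Fintype.piFinset (fun _ : ι => P)).filter
          (fun φ => Finset.image φ Finset.univ = S')).card : ℕ) ≤ S'.card ^ k := by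
        have := piFinset_fiber_card (ι := ι) P S'
        rwa [hcard] at this
      have hc2 : S'.card ^ k ≤ k ^ k := Nat.pow_le_pow_left (by omega) k
      exact_mod_cast hc1.trans hc2
    · rw [if_neg h2]
      simp
  refine (Finset.sum_le_sum hinner).trans ?_
  rw [← Finset.mul_sum]
  apply mul_le_mul_of_nonneg_left _ (by positivity)
  rw [Finset.sum_ite, Finset.sum_const_zero, add_zero]
  have hfeq : P.powerset.filter (fun S' => 2 * S'.card ≤ k)
      = P.powerset.filter (fun S' => S'.card ≤ k / 2) := by
    apply Finset.filter_congr
    intro S' _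
    constructor <;> intro h <;> omega
  rw [hfeq]
  exact sum_filter_prod_le P (k/2) kap hkap

lemma err_sum_bound {ι : Type*} [Fintype ι] [DecidableEq ι] (S : SieveSetup)
    (P : Finset ℕ) (hP : ∀ p ∈ P, p.Prime) (k : ℕ) (hk : 1 ≤ k)
    (hcard : Fintype.card ι = k) :
    ∑ φ ∈ Fintype.piFinset (fun _ : ι => P),
      (∑ T ∈ (Finset.image φ Finset.univ).powerset,
        (∏ p ∈ (Finset.image φ Finset.univ) \ T, lam S p) * |S.E (∏ p ∈ T, p)|)
      ≤ (k:ℝ)^k * ((k+1) * (max 1 (muP1 S.h P))^k) * ∑ d ∈ Dk P k, |S.E d| := by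
  classical
  have hlam : ∀ p ∈ P, 0 ≤ lam S p := fun p hp => lam_nonneg S p (hP p hp)
  have hmaps : ∀ φ ∈ Fintype.piFinset (fun _ : ι => P),
      Finset.image φ Finset.univ ∈ P.powerset := by
    intro φ hφ
    rw [Finset.mem_powerset]
    intro p hp
    rw [Finset.mem_image] at hp
    obtain ⟨x, _, rfl⟩ := hp
    exact Fintype.mem_piFinset.mp hφ x
  rw [← Finset.sum_fiberwise_of_maps_to hmaps]
  set W : Finset ℕ → ℝ := fun S' =>
    ∑ T ∈ S'.powerset, (∏ p ∈ S' \ T, lam S p) * |S.E (∏ p ∈ T, p)| with hW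
  have hWnn : ∀ S' ⊆ P, 0 ≤ W S' := by
    intro S' hS'
    apply Finset.sum_nonneg
    intro T hT
    rw [Finset.mem_powerset] at hT
    apply mul_nonneg _ (abs_nonneg _)
    exact Finset.prod_nonneg fun p hp => hlam p (hS' (Finset.mem_sdiff.mp hp).1)
  have hinner : ∀ S' ∈ P.powerset,
      ∑ φ ∈ (Fintype.piFinset (fun _ : ι => P)).filter
          (fun φ => Finset.image φ Finset.univ = S'),
        (∑ T ∈ (Finset.image φ Finset.univ).powerset,
          (∏ p ∈ (Finset.image φ Finset.univ) \ T, lam S p) * |S.E (∏ p ∈ T, p)|)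
        ≤ (k:ℝ)^k * (if S'.card ≤ k then W S' else 0) := by
    intro S' hS'
    rw [Finset.mem_powerset] at hS'
    have heq : ∀ φ ∈ (Fintype.piFinset (fun _ : ι => P)).filter
        (fun φ => Finset.image φ Finset.univ = S'),
        (∑ T ∈ (Finset.image φ Finset.univ).powerset,
          (∏ p ∈ (Finset.image φ Finset.univ) \ T, lam S p) * |S.E (∏ p ∈ T, p)|) = W S' := by
      intro φ hφ
      rw [Finset.mem_filter] at hφ
      rw [hφ.2, hW]
    rw [Finset.sum_congr rfl heq, Finset.sum_const, nsmul_eq_mul]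
    by_cases hck : S'.card ≤ k
    · rw [if_pos hck]
      apply mul_le_mul_of_nonneg_right _ (hWnn S' hS')
      have hc1 : (((Fintype.piFinset (fun _ : ι => P)).filter
          (fun φ => Finset.image φ Finset.univ = S')).card : ℕ) ≤ S'.card ^ k := by
        have := piFinset_fiber_card (ι := ι) P S'
        rwa [hcard] at this
      have hc2 : S'.card ^ k ≤ k ^ k := Nat.pow_le_pow_left hck k
      exact_mod_cast hc1.trans hc2
    · rw [if_neg hck]
      have : (Fintype.piFinset (fun _ : ι => P)).filter
          (fun φ => Finset.image φ Finset.univ = S') = ∅ := by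
        rw [Finset.filter_eq_empty_iff]
        intro φ hφ
        intro him
        apply hck
        rw [← him]
        calc (Finset.image φ Finset.univ).card ≤ Finset.univ.card := Finset.card_image_le
          _ = k := by rw [Finset.card_univ, hcard]
      rw [this]
      simp
  refine (Finset.sum_le_sum hinner).trans ?_
  rw [← Finset.mul_sum]
  rw [Finset.sum_ite, Finset.sum_const_zero, add_zero]
  have key : ∑ S' ∈ P.powerset.filter (fun S' => S'.card ≤ k), W S'
      ≤ ((k+1) * (max 1 (muP1 S.h P))^k) * ∑ d ∈ Dk P k, |S.E d| := by
    have h1 : ∑ S' ∈ P.powerset.filter (fun S' => S'.card ≤ k), W S'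
        ≤ (∑ T ∈ P.powerset.filter (fun V => V.card ≤ k), |S.E (∏ p ∈ T, p)|) *
          (∑ V ∈ P.powerset.filter (fun V => V.card ≤ k), ∏ p ∈ V, lam S p) := by
      have := pair_sum_le P k (fun T => |S.E (∏ p ∈ T, p)|) (fun V => ∏ p ∈ V, lam S p)
        (fun T _ => abs_nonneg _)
        (fun V hV => Finset.prod_nonneg fun p hp => hlam p (hV hp))
      refine le_trans ?_ this
      apply le_of_eq
      refine Finset.sum_congr rfl fun S' hS' => ?_
      rw [hW]
      refine Finset.sum_congr rfl fun T hT => ?_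
      ring
    refine h1.trans ?_
    have h2 : ∑ T ∈ P.powerset.filter (fun V => V.card ≤ k), |S.E (∏ p ∈ T, p)|
        = ∑ d ∈ Dk P k, |S.E d| := by
      rw [Dk]
      rw [Finset.sum_image]
      intro T hT T' hT' hprod
      rw [Finset.mem_coe, Finset.mem_filter, Finset.mem_powerset] at hT hT'
      exact prod_primes_inj T T' (fun p hp => hP p (hT.1 hp)) (fun p hp => hP p (hT'.1 hp)) hprod
    have h3 : ∑ V ∈ P.powerset.filter (fun V => V.card ≤ k), ∏ p ∈ V, lam S p
        ≤ (k+1) * (max 1 (muP1 S.h P))^k := by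
      have := sum_filter_prod_le P k (lam S) hlam
      refine this.trans (le_of_eq ?_)
      rw [muP1]
      rfl
    rw [h2]
    calc (∑ d ∈ Dk P k, |S.E d|) *
          (∑ V ∈ P.powerset.filter (fun V => V.card ≤ k), ∏ p ∈ V, lam S p)
        ≤ (∑ d ∈ Dk P k, |S.E d|) * ((k+1) * (max 1 (muP1 S.h P))^k) := by
          apply mul_le_mul_of_nonneg_left h3
          exact Finset.sum_nonneg fun d _ => abs_nonneg _
      _ = ((k+1) * (max 1 (muP1 S.h P))^k) * ∑ d ∈ Dk P k, |S.E d| := by ring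
  calc (k:ℝ)^k * ∑ S' ∈ P.powerset.filter (fun S' => S'.card ≤ k), W S'
      ≤ (k:ℝ)^k * (((k+1) * (max 1 (muP1 S.h P))^k) * ∑ d ∈ Dk P k, |S.E d|) :=
        mul_le_mul_of_nonneg_left key (by positivity)
    _ = (k:ℝ)^k * ((k+1) * (max 1 (muP1 S.h P))^k) * ∑ d ∈ Dk P k, |S.E d| := by ring

end MomHelp
namespace MomHelp
open Finset

lemma delta_eq (S : SieveSetup) (P : Finset ℕ) (g : ℕ → ℝ) (a : ℕ) :
    gP P g a - muP S.h P g = ∑ p ∈ P, g p * dl S p a := by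
  rw [gP, muP, Finset.sum_filter, ← Finset.sum_sub_distrib]
  refine Finset.sum_congr rfl fun p hp => ?_
  simp only [dl, lam]
  by_cases h : p ∣ a <;> simp [h] <;> ring

def kapF {ℓ : ℕ} (g : Fin ℓ → ℕ → ℝ) (S : SieveSetup) (p : ℕ) : ℝ :=
  (∑ i, g i p)^2 * (lam S p * (1 - lam S p))

lemma kapF_nonneg {ℓ : ℕ} (g : Fin ℓ → ℕ → ℝ) (S : SieveSetup) (p : ℕ) (hp : p.Prime) :
    0 ≤ kapF g S p := by
  have h0 := lam_nonneg S p hp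
  have h1 := lam_le_one S p hp
  exact mul_nonneg (sq_nonneg _) (mul_nonneg h0 (by linarith))

lemma sum_kapF_le {ℓ : ℕ} (g : Fin ℓ → ℕ → ℝ) (S : SieveSetup) (P : Finset ℕ) (K : ℝ)
    (hκ : ∀ i j, |kappaP S.h P (g i) (g j)| ≤ K) :
    ∑ p ∈ P, kapF g S p ≤ (ℓ:ℝ)^2 * K := by
  have expand : ∑ p ∈ P, kapF g S p = ∑ i, ∑ j, kappaP S.h P (g i) (g j) := by
    have e1 : ∀ p ∈ P, kapF g S p
        = ∑ i, ∑ j, g i p * g j p * (S.h p / p) * (1 - S.h p / p) := by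
      intro p _
      rw [kapF, sq, Finset.sum_mul_sum]
      rw [Finset.sum_mul]
      refine Finset.sum_congr rfl fun i _ => ?_
      rw [Finset.sum_mul]
      refine Finset.sum_congr rfl fun j _ => ?_
      simp only [lam]
      ring
    rw [Finset.sum_congr rfl e1, Finset.sum_comm]
    refine Finset.sum_congr rfl fun i _ => ?_
    rw [Finset.sum_comm]
    rfl
  rw [expand]
  have step : ∀ i : Fin ℓ, ∑ j, kappaP S.h P (g i) (g j) ≤ (ℓ:ℝ) * K := by
    intro i
    calc ∑ j, kappaP S.h P (g i) (g j) ≤ ∑ _j : Fin ℓ, K :=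
          Finset.sum_le_sum fun j _ => le_of_abs_le (hκ i j)
      _ = (ℓ:ℝ) * K := by simp [mul_comm]
  calc ∑ i, ∑ j, kappaP S.h P (g i) (g j) ≤ ∑ _i : Fin ℓ, (ℓ:ℝ) * K :=
        Finset.sum_le_sum fun i _ => step i
    _ = (ℓ:ℝ)^2 * K := by simp; ring

lemma prod_fiber_g_le {ℓ : ℕ} (g : Fin ℓ → ℕ → ℝ) (hg0 : ∀ i n, 0 ≤ g i n)
    (G : ℝ) (hG0 : 0 ≤ G) (p : ℕ) (hgG : ∀ i, g i p ≤ G)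
    {ι : Type*} [DecidableEq ι] (t : Finset ι) (c : ι → Fin ℓ) (h2 : 2 ≤ t.card) :
    ∏ x ∈ t, g (c x) p ≤ G ^ (t.card - 2) * (∑ i, g i p)^2 := by
  have hne : t.Nonempty := Finset.card_pos.mp (by omega)
  obtain ⟨a, ha⟩ := hne
  have hne2 : (t.erase a).Nonempty := by
    rw [← Finset.card_pos, Finset.card_erase_of_mem ha]
    omega
  obtain ⟨b, hb⟩ := hne2
  rw [← Finset.mul_prod_erase t _ ha, ← Finset.mul_prod_erase _ _ hb]
  have hB : ∀ x : ι, g (c x) p ≤ ∑ i, g i p :=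
    fun x => Finset.single_le_sum (fun i _ => hg0 i p) (Finset.mem_univ (c x))
  have hBnn : (0:ℝ) ≤ ∑ i, g i p := Finset.sum_nonneg fun i _ => hg0 i p
  have hrest : ∏ x ∈ (t.erase a).erase b, g (c x) p ≤ G ^ (t.card - 2) := by
    have hcard : ((t.erase a).erase b).card = t.card - 2 := by
      rw [Finset.card_erase_of_mem hb, Finset.card_erase_of_mem ha]
      omega
    calc ∏ x ∈ (t.erase a).erase b, g (c x) p ≤ ∏ _x ∈ (t.erase a).erase b, G :=
          Finset.prod_le_prod (fun x _ => hg0 _ p) (fun x _ => hgG _)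
      _ = G ^ (t.card - 2) := by rw [Finset.prod_const, hcard]
  have hrestnn : 0 ≤ ∏ x ∈ (t.erase a).erase b, g (c x) p :=
    Finset.prod_nonneg fun x _ => hg0 _ p
  calc g (c a) p * (g (c b) p * ∏ x ∈ (t.erase a).erase b, g (c x) p)
      ≤ (∑ i, g i p) * ((∑ i, g i p) * G ^ (t.card - 2)) := by
        apply mul_le_mul (hB a) _ (mul_nonneg (hg0 _ p) hrestnn) hBnn
        exact mul_le_mul (hB b) hrest hrestnn hBnn
    _ = G ^ (t.card - 2) * (∑ i, g i p)^2 := by ring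

lemma T_bound {ℓ : ℕ} (hℓ : 1 ≤ ℓ) (S : SieveSetup) (P : Finset ℕ)
    (hP : ∀ p ∈ P, p.Prime)
    (g : Fin ℓ → ℕ → ℝ) (hg0 : ∀ i n, 0 ≤ g i n) (G : ℝ) (hG0 : 0 ≤ G)
    (hgG : ∀ i, ∀ p ∈ P, g i p ≤ G) (K : ℝ)
    (hκ : ∀ i j, |kappaP S.h P (g i) (g j)| ≤ K)
    (hK1 : 1 ≤ K) (e : Fin ℓ → ℕ) (hk1 : 1 ≤ ∑ i, e i) :
    |(S.A.map (fun a => ∏ i, (gP P (g i) a - muP S.h P (g i)) ^ e i)).sum|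
      ≤ S.X * ((1+G)^(∑ i, e i) * ((∑ i, e i : ℕ):ℝ)^(∑ i, e i) *
            (((((∑ i, e i)/2 : ℕ):ℝ) + 1) * ((ℓ:ℝ)^2 * K)^((∑ i, e i)/2)))
        + (1+G)^(∑ i, e i) * ((∑ i, e i : ℕ):ℝ)^(∑ i, e i) *
            ((((∑ i, e i : ℕ):ℝ)+1) * (max 1 (muP1 S.h P))^(∑ i, e i)) *
            ∑ d ∈ Dk P (∑ i, e i), |S.E d| := by
  classical
  set k := ∑ i, e i with hk
  set ι := (i : Fin ℓ) × Fin (e i) with hι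
  have hcard : Fintype.card ι = k := by
    show Fintype.card ((i : Fin ℓ) × Fin (e i)) = k
    rw [hk]
    simp
  -- pointwise expansion
  have hpoint : ∀ a : ℕ, ∏ i, (gP P (g i) a - muP S.h P (g i)) ^ e i
      = ∑ φ ∈ Fintype.piFinset (fun _ : ι => P),
          (∏ x : ι, g x.1 (φ x)) * ∏ x : ι, dl S (φ x) a := by
    intro a
    have hsig : ∏ i, (gP P (g i) a - muP S.h P (g i)) ^ e i
        = ∏ x : ι, (gP P (g x.1) a - muP S.h P (g x.1)) := by
      rw [← Finset.univ_sigma_univ, Finset.prod_sigma]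
      refine Finset.prod_congr rfl fun i _ => ?_
      simp [Finset.prod_const]
    rw [hsig]
    have hdel : ∀ x : ι, gP P (g x.1) a - muP S.h P (g x.1)
        = ∑ p ∈ P, g x.1 p * dl S p a := fun x => delta_eq S P (g x.1) a
    rw [Finset.prod_congr rfl (fun x _ => hdel x), Finset.prod_univ_sum]
    refine Finset.sum_congr rfl fun φ _ => ?_
    rw [Finset.prod_mul_distrib]
  -- sum over A
  have hsum : (S.A.map (fun a => ∏ i, (gP P (g i) a - muP S.h P (g i)) ^ e i)).sum
      = ∑ φ ∈ Fintype.piFinset (fun _ : ι => P),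
          (∏ x : ι, g x.1 (φ x)) * (S.A.map (fun a => ∏ x : ι, dl S (φ x) a)).sum := by
    rw [show (fun a => ∏ i, (gP P (g i) a - muP S.h P (g i)) ^ e i)
        = (fun a => ∑ φ ∈ Fintype.piFinset (fun _ : ι => P),
            (∏ x : ι, g x.1 (φ x)) * ∏ x : ι, dl S (φ x) a) from funext hpoint]
    rw [msum_fsum]
    refine Finset.sum_congr rfl fun φ _ => ?_
    rw [msum_const_mul]
  -- remainder
  set Rf : (ι → ℕ) → ℝ := fun φ =>
    (S.A.map (fun a => ∏ x : ι, dl S (φ x) a)).sum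
      - S.X * ∏ p ∈ Finset.image φ Finset.univ, Hterm S p (mult φ p) with hRf
  have hRbound : ∀ φ ∈ Fintype.piFinset (fun _ : ι => P),
      |Rf φ| ≤ ∑ T ∈ (Finset.image φ Finset.univ).powerset,
        (∏ p ∈ (Finset.image φ Finset.univ) \ T, lam S p) * |S.E (∏ p ∈ T, p)| := by
    intro φ hφ
    obtain ⟨R₀, h1, h2⟩ := sieve_tuple S P hP φ (fun x => Fintype.mem_piFinset.mp hφ x)
    have : Rf φ = R₀ := by rw [hRf]; simp only [h1]; ring
    rwa [this]
  have hgφnn : ∀ φ : ι → ℕ, 0 ≤ ∏ x : ι, g x.1 (φ x) :=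
    fun φ => Finset.prod_nonneg fun x _ => hg0 _ _
  have hgφle : ∀ φ ∈ Fintype.piFinset (fun _ : ι => P),
      (∏ x : ι, g x.1 (φ x)) ≤ (1+G)^k := by
    intro φ hφ
    calc ∏ x : ι, g x.1 (φ x) ≤ ∏ _x : ι, (1+G) :=
          Finset.prod_le_prod (fun x _ => hg0 _ _)
            (fun x _ => le_trans (hgG _ _ (Fintype.mem_piFinset.mp hφ x)) (by linarith))
      _ = (1+G)^k := by rw [Finset.prod_const, Finset.card_univ, hcard]
  -- split
  have hsplit : (S.A.map (fun a => ∏ i, (gP P (g i) a - muP S.h P (g i)) ^ e i)).sum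
      = S.X * (∑ φ ∈ Fintype.piFinset (fun _ : ι => P),
          (∏ x : ι, g x.1 (φ x)) * ∏ p ∈ Finset.image φ Finset.univ, Hterm S p (mult φ p))
        + ∑ φ ∈ Fintype.piFinset (fun _ : ι => P), (∏ x : ι, g x.1 (φ x)) * Rf φ := by
    rw [hsum, Finset.mul_sum, ← Finset.sum_add_distrib]
    refine Finset.sum_congr rfl fun φ _ => ?_
    rw [hRf]
    ring
  rw [hsplit]
  have habs : |S.X * (∑ φ ∈ Fintype.piFinset (fun _ : ι => P),
          (∏ x : ι, g x.1 (φ x)) * ∏ p ∈ Finset.image φ Finset.univ, Hterm S p (mult φ p))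
        + ∑ φ ∈ Fintype.piFinset (fun _ : ι => P), (∏ x : ι, g x.1 (φ x)) * Rf φ|
      ≤ S.X * (∑ φ ∈ Fintype.piFinset (fun _ : ι => P),
          (∏ x : ι, g x.1 (φ x)) * |∏ p ∈ Finset.image φ Finset.univ, Hterm S p (mult φ p)|)
        + ∑ φ ∈ Fintype.piFinset (fun _ : ι => P), (∏ x : ι, g x.1 (φ x)) * |Rf φ| := by
    refine (abs_add_le _ _).trans ?_
    apply add_le_add
    · rw [abs_mul, abs_of_pos S.X_pos]
      apply mul_le_mul_of_nonneg_left _ (le_of_lt S.X_pos)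
      refine (Finset.abs_sum_le_sum_abs _ _).trans ?_
      apply Finset.sum_le_sum
      intro φ _
      rw [abs_mul, abs_of_nonneg (hgφnn φ)]
    · refine (Finset.abs_sum_le_sum_abs _ _).trans ?_
      apply Finset.sum_le_sum
      intro φ _
      rw [abs_mul, abs_of_nonneg (hgφnn φ)]
  refine habs.trans ?_
  apply add_le_add
  -- MAIN TERM
  · apply mul_le_mul_of_nonneg_left _ (le_of_lt S.X_pos)
    have hper : ∀ φ ∈ Fintype.piFinset (fun _ : ι => P),
        (∏ x : ι, g x.1 (φ x)) * |∏ p ∈ Finset.image φ Finset.univ, Hterm S p (mult φ p)|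
        ≤ (1+G)^k * (if ∀ p ∈ Finset.image φ Finset.univ, 2 ≤ mult φ p
            then ∏ p ∈ Finset.image φ Finset.univ, kapF g S p else 0) := by
      intro φ hφ
      have hφP : ∀ x : ι, φ x ∈ P := fun x => Fintype.mem_piFinset.mp hφ x
      have hprimim : ∀ p ∈ Finset.image φ Finset.univ, p.Prime := by
        intro p hp
        rw [Finset.mem_image] at hp
        obtain ⟨x, _, rfl⟩ := hp
        exact hP _ (hφP x)
      by_cases hall : ∀ p ∈ Finset.image φ Finset.univ, 2 ≤ mult φ p
      · rw [if_pos hall]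
        have hgrp : (∏ x : ι, g x.1 (φ x))
            = ∏ p ∈ Finset.image φ Finset.univ,
                ∏ x ∈ Finset.univ.filter (fun x => φ x = p), g x.1 p := by
          rw [← Finset.prod_fiberwise_of_maps_to
            (fun x _ => Finset.mem_image_of_mem φ (Finset.mem_univ x))
            (fun x => g x.1 (φ x))]
          refine Finset.prod_congr rfl fun p _ => ?_
          refine Finset.prod_congr rfl fun x hx => ?_
          rw [Finset.mem_filter] at hx
          rw [hx.2]
        rw [hgrp, Finset.abs_prod, ← Finset.prod_mul_distrib]
        have hperp : ∀ p ∈ Finset.image φ Finset.univ,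
            (∏ x ∈ Finset.univ.filter (fun x => φ x = p), g x.1 p) *
              |Hterm S p (mult φ p)|
            ≤ (1+G)^(mult φ p) * kapF g S p := by
          intro p hp
          have hpprime := hprimim p hp
          have h2m := hall p hp
          have hfib : ∏ x ∈ Finset.univ.filter (fun x => φ x = p), g x.1 p
              ≤ G ^ (mult φ p - 2) * (∑ i, g i p)^2 :=
            prod_fiber_g_le g hg0 G hG0 p (fun i => hgG i p (by
              rw [Finset.mem_image] at hp
              obtain ⟨x, _, rfl⟩ := hp
              exact hφP x)) _ _ h2m
          have hfibnn : 0 ≤ ∏ x ∈ Finset.univ.filter (fun x => φ x = p), g x.1 p :=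
            Finset.prod_nonneg fun x _ => hg0 _ _
          have hH := Hterm_abs_le S p hpprime (mult φ p) h2m
          calc (∏ x ∈ Finset.univ.filter (fun x => φ x = p), g x.1 p) *
                |Hterm S p (mult φ p)|
              ≤ (G ^ (mult φ p - 2) * (∑ i, g i p)^2) * (lam S p * (1 - lam S p)) :=
                mul_le_mul hfib hH (abs_nonneg _)
                  (mul_nonneg (pow_nonneg hG0 _) (sq_nonneg _))
            _ = G ^ (mult φ p - 2) * kapF g S p := by rw [kapF]; ring
            _ ≤ (1+G)^(mult φ p) * kapF g S p := by
                apply mul_le_mul_of_nonneg_right _ (kapF_nonneg g S p hpprime)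
                calc G ^ (mult φ p - 2) ≤ (1+G) ^ (mult φ p - 2) :=
                      pow_le_pow_left₀ hG0 (by linarith) _
                  _ ≤ (1+G)^(mult φ p) := pow_le_pow_right₀ (by linarith) (by omega)
        calc ∏ p ∈ Finset.image φ Finset.univ,
              ((∏ x ∈ Finset.univ.filter (fun x => φ x = p), g x.1 p) *
                |Hterm S p (mult φ p)|)
            ≤ ∏ p ∈ Finset.image φ Finset.univ, ((1+G)^(mult φ p) * kapF g S p) :=
              Finset.prod_le_prod
                (fun p _ => mul_nonneg (Finset.prod_nonneg fun x _ => hg0 _ _) (abs_nonneg _))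
                hperp
          _ = (1+G)^k * ∏ p ∈ Finset.image φ Finset.univ, kapF g S p := by
              rw [Finset.prod_mul_distrib, Finset.prod_pow_eq_pow_sum, sum_mult φ, hcard]
      · rw [if_neg hall]
        push_neg at hall
        obtain ⟨p, hp, hlt⟩ := hall
        have h1 : mult φ p = 1 := by
          have := mult_pos φ p hp
          omega
        have hzero : ∏ p ∈ Finset.image φ Finset.univ, Hterm S p (mult φ p) = 0 :=
          Finset.prod_eq_zero hp (by rw [h1]; exact Hterm_one S p)
        rw [hzero]
        simp
    refine (Finset.sum_le_sum hper).trans ?_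
    rw [← Finset.mul_sum]
    have hmb := main_sum_bound (ι := ι) P (kapF g S)
      (fun p hp => kapF_nonneg g S p (hP p hp)) k hk1 hcard
    calc (1+G)^k * ∑ φ ∈ Fintype.piFinset (fun _ : ι => P),
          (if ∀ p ∈ Finset.image φ Finset.univ, 2 ≤ mult φ p
            then ∏ p ∈ Finset.image φ Finset.univ, kapF g S p else 0)
        ≤ (1+G)^k * ((k:ℝ)^k * ((((k/2 : ℕ):ℝ) + 1) * (max 1 (∑ p ∈ P, kapF g S p)) ^ (k/2))) := by
          apply mul_le_mul_of_nonneg_left hmb (by positivity)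
      _ ≤ (1+G)^k * ((k:ℝ)^k * ((((k/2 : ℕ):ℝ) + 1) * ((ℓ:ℝ)^2 * K) ^ (k/2))) := by
          apply mul_le_mul_of_nonneg_left _ (by positivity)
          apply mul_le_mul_of_nonneg_left _ (by positivity)
          apply mul_le_mul_of_nonneg_left _ (by positivity)
          apply pow_le_pow_left₀ (le_trans zero_le_one (le_max_left _ _))
          apply max_le
          · have h1 : (1:ℝ) ≤ (ℓ:ℝ)^2 := by
              have : (1:ℝ) ≤ (ℓ:ℝ) := by exact_mod_cast hℓ
              nlinarith
            nlinarith
          · exact sum_kapF_le g S P K hκ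
      _ = (1+G)^k * (k:ℝ)^k * ((((k/2 : ℕ):ℝ) + 1) * ((ℓ:ℝ)^2 * K)^(k/2)) := by ring
  -- ERROR TERM
  · have hper : ∀ φ ∈ Fintype.piFinset (fun _ : ι => P),
        (∏ x : ι, g x.1 (φ x)) * |Rf φ|
        ≤ (1+G)^k * (∑ T ∈ (Finset.image φ Finset.univ).powerset,
            (∏ p ∈ (Finset.image φ Finset.univ) \ T, lam S p) * |S.E (∏ p ∈ T, p)|) := by
      intro φ hφ
      refine mul_le_mul (hgφle φ hφ) (hRbound φ hφ) (abs_nonneg _) (by positivity)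
    refine (Finset.sum_le_sum hper).trans ?_
    rw [← Finset.mul_sum]
    have heb := err_sum_bound (ι := ι) S P hP k hk1 hcard
    calc (1+G)^k * ∑ φ ∈ Fintype.piFinset (fun _ : ι => P),
          (∑ T ∈ (Finset.image φ Finset.univ).powerset,
            (∏ p ∈ (Finset.image φ Finset.univ) \ T, lam S p) * |S.E (∏ p ∈ T, p)|)
        ≤ (1+G)^k * ((k:ℝ)^k * ((k:ℝ)+1) * (max 1 (muP1 S.h P))^k * ∑ d ∈ Dk P k, |S.E d|) := by
          apply mul_le_mul_of_nonneg_left _ (by positivity)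
          refine heb.trans (le_of_eq ?_)
          ring
      _ = (1+G)^k * (k:ℝ)^k * (((k:ℝ)+1) * (max 1 (muP1 S.h P))^k) * ∑ d ∈ Dk P k, |S.E d| := by
          ring

end MomHelp
namespace MomHelp
open Finset

lemma Dk_mono (P : Finset ℕ) {k k' : ℕ} (h : k ≤ k') (S : SieveSetup) :
    ∑ d ∈ Dk P k, |S.E d| ≤ ∑ d ∈ Dk P k', |S.E d| := by
  apply Finset.sum_le_sum_of_subset_of_nonneg
  · rw [Dk, Dk]
    apply Finset.image_subset_image
    apply Finset.monotone_filter_right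
    intro V hV
    omega
  · intro d _ _
    exact abs_nonneg _

lemma mul_le_mul₄ {a1 a2 a3 a4 b1 b2 b3 b4 : ℝ} (h1 : a1 ≤ b1) (h2 : a2 ≤ b2)
    (h3 : a3 ≤ b3) (h4 : a4 ≤ b4) (na2 : 0 ≤ a2) (na3 : 0 ≤ a3) (na4 : 0 ≤ a4)
    (nb1 : 0 ≤ b1) (nb2 : 0 ≤ b2) (nb3 : 0 ≤ b3) : a1*a2*a3*a4 ≤ b1*b2*b3*b4 := by
  have h12 : a1*a2 ≤ b1*b2 := mul_le_mul h1 h2 na2 nb1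
  have h123 : a1*a2*a3 ≤ b1*b2*b3 := mul_le_mul h12 h3 na3 (mul_nonneg nb1 nb2)
  exact mul_le_mul h123 h4 na4 (mul_nonneg (mul_nonneg nb1 nb2) nb3)

set_option maxHeartbeats 1000000 in
lemma Te_bound {ℓ : ℕ} (hℓ : 1 ≤ ℓ) (S : SieveSetup) (P : Finset ℕ)
    (hP : ∀ p ∈ P, p.Prime)
    (g : Fin ℓ → ℕ → ℝ) (hg0 : ∀ i n, 0 ≤ g i n) (G : ℝ) (hG0 : 0 < G)
    (hgG : ∀ i, ∀ p ∈ P, g i p ≤ G) (K M : ℝ)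
    (hκ : ∀ i j, |kappaP S.h P (g i) (g j)| ≤ K)
    (hK1 : 1 ≤ K) (hM1 : 1 ≤ M)
    (hKM : K ≤ (1+G)^2 * M) (hKmu : K ≤ (1+G)^2 * muP1 S.h P)
    (hmu1 : 1 ≤ muP1 S.h P)
    (c₀ : ℝ) (hc₀ : 0 < c₀) (δ m r : ℕ) (hδ : 1 ≤ δ) (hmr : m = 2*r+1)
    (hE : muP1 S.h P ^ (δ*m) * ∑ d ∈ Dk P (δ*m), |S.E d|
      ≤ c₀ * S.X * K ^ (((δ * m : ℕ) : ℝ) / 2 - 1))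
    (e : Fin ℓ → ℕ) (hkm : m ≤ ∑ i, e i) (hkd : ∑ i, e i ≤ δ*m) :
    M ^ (δ*m - ∑ i, e i) *
      |(S.A.map (fun a => ∏ i, (gP P (g i) a - muP S.h P (g i)) ^ e i)).sum|
      ≤ ((1+G)^(5*(δ*m)) * ((δ*m : ℕ):ℝ)^(δ*m) * (((δ*m : ℕ):ℝ)+1) * (ℓ:ℝ)^(2*(δ*m))
          * (1+c₀) * 2) * (S.X * M ^ (δ*m - (m+1)/2)) := by
  classical
  set k := ∑ i, e i with hk
  set k2 := k / 2 with hk2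
  set d := δ*m - k with hd
  set ν := δ*m - (m+1)/2 with hν
  have hk1 : 1 ≤ k := le_trans (by omega) hkm
  have hMnn : (0:ℝ) ≤ M := by linarith
  have hG1 : (1:ℝ) ≤ 1 + G := by linarith
  have hℓ1 : (1:ℝ) ≤ (ℓ:ℝ) := by exact_mod_cast hℓ
  have hKnn : (0:ℝ) ≤ K := by linarith
  have hXnn : (0:ℝ) ≤ S.X := le_of_lt S.X_pos
  have hTb := T_bound hℓ S P hP g hg0 G (le_of_lt hG0) hgG K hκ hK1 e hk1
  rw [← hk] at hTb
  have hEnn : (0:ℝ) ≤ ∑ dd ∈ Dk P k, |S.E dd| :=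
    Finset.sum_nonneg fun dd _ => abs_nonneg _
  have hEnn' : (0:ℝ) ≤ ∑ dd ∈ Dk P (δ*m), |S.E dd| :=
    Finset.sum_nonneg fun dd _ => abs_nonneg _
  have hmunn : (0:ℝ) ≤ muP1 S.h P := by linarith
  -- bound via T_bound, multiply by M^d
  have step0 : M ^ d *
      |(S.A.map (fun a => ∏ i, (gP P (g i) a - muP S.h P (g i)) ^ e i)).sum|
      ≤ M ^ d * (S.X * ((1+G)^k * ((k:ℕ):ℝ)^k * ((((k2 : ℕ):ℝ) + 1) * ((ℓ:ℝ)^2 * K)^k2)))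
        + M ^ d * ((1+G)^k * ((k:ℕ):ℝ)^k * ((((k : ℕ):ℝ)+1) * (max 1 (muP1 S.h P))^k)
            * ∑ dd ∈ Dk P k, |S.E dd|) := by
    rw [← mul_add]
    exact mul_le_mul_of_nonneg_left hTb (pow_nonneg hMnn d)
  refine (mul_le_mul_of_nonneg_left hTb (pow_nonneg hMnn d)).trans ?_
  rw [mul_add]
  have hCnn0 : (0:ℝ) ≤ (1+G)^(5*(δ*m)) * ((δ*m : ℕ):ℝ)^(δ*m) * (((δ*m : ℕ):ℝ)+1)
      * (ℓ:ℝ)^(2*(δ*m)) := by positivity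
  have hhalf : ((1+G)^(5*(δ*m)) * ((δ*m : ℕ):ℝ)^(δ*m) * (((δ*m : ℕ):ℝ)+1) * (ℓ:ℝ)^(2*(δ*m))
      * (1+c₀) * 2) * (S.X * M ^ ν)
      = ((1+G)^(5*(δ*m)) * ((δ*m : ℕ):ℝ)^(δ*m) * (((δ*m : ℕ):ℝ)+1) * (ℓ:ℝ)^(2*(δ*m))
      * (1+c₀)) * (S.X * M ^ ν)
      + ((1+G)^(5*(δ*m)) * ((δ*m : ℕ):ℝ)^(δ*m) * (((δ*m : ℕ):ℝ)+1) * (ℓ:ℝ)^(2*(δ*m))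
      * (1+c₀)) * (S.X * M ^ ν) := by ring
  rw [hhalf]
  have hkk : ((k:ℕ):ℝ)^k ≤ ((δ*m : ℕ):ℝ)^(δ*m) := by
    have : (k:ℕ)^k ≤ (δ*m)^(δ*m) :=
      le_trans (Nat.pow_le_pow_left hkd k) (Nat.pow_le_pow_right (by omega) hkd)
    exact_mod_cast this
  have hkknn : (0:ℝ) ≤ ((k:ℕ):ℝ)^k := by positivity
  apply add_le_add
  -- MAIN
  · have e1 : M ^ d * (S.X * ((1+G)^k * ((k:ℕ):ℝ)^k * ((((k2 : ℕ):ℝ) + 1) * ((ℓ:ℝ)^2 * K)^k2)))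
        = S.X * (((1+G)^k * ((k:ℕ):ℝ)^k * ((((k2 : ℕ):ℝ) + 1) * (ℓ:ℝ)^(2*k2)))
            * (K^k2 * M^d)) := by
      rw [mul_pow, pow_mul]
      ring
    rw [e1]
    have hKk2 : K^k2 * M^d ≤ (1+G)^(2*k2) * M^ν := by
      have h1 : K^k2 ≤ ((1+G)^2 * M)^k2 := pow_le_pow_left₀ hKnn hKM k2
      have h2 : ((1+G)^2 * M)^k2 = (1+G)^(2*k2) * M^k2 := by
        rw [mul_pow, ← pow_mul]
      have h3 : K^k2 * M^d ≤ (1+G)^(2*k2) * M^k2 * M^d := by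
        apply mul_le_mul_of_nonneg_right _ (pow_nonneg hMnn d)
        rw [← h2]
        exact h1
      refine h3.trans ?_
      rw [mul_assoc, ← pow_add]
      apply mul_le_mul_of_nonneg_left _ (by positivity)
      apply pow_le_pow_right₀ hM1
      omega
    calc S.X * (((1+G)^k * ((k:ℕ):ℝ)^k * ((((k2 : ℕ):ℝ) + 1) * (ℓ:ℝ)^(2*k2)))
            * (K^k2 * M^d))
        ≤ S.X * (((1+G)^k * ((k:ℕ):ℝ)^k * ((((k2 : ℕ):ℝ) + 1) * (ℓ:ℝ)^(2*k2)))
            * ((1+G)^(2*k2) * M^ν)) := by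
          apply mul_le_mul_of_nonneg_left _ hXnn
          apply mul_le_mul_of_nonneg_left hKk2 (by positivity)
      _ ≤ ((1+G)^(5*(δ*m)) * ((δ*m : ℕ):ℝ)^(δ*m) * (((δ*m : ℕ):ℝ)+1) * (ℓ:ℝ)^(2*(δ*m))
            * (1+c₀)) * (S.X * M ^ ν) := by
          have hc1 : (1+G)^(k+2*k2) ≤ (1+G)^(5*(δ*m)) :=
            pow_le_pow_right₀ hG1 (by omega)
          have hc2 : (((k2 : ℕ):ℝ) + 1) ≤ (((δ*m : ℕ):ℝ)+1) := by
            have h5 : (k2:ℕ) ≤ δ*m := by omega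
            have h6 := (Nat.cast_le (α := ℝ)).mpr h5
            linarith
          have hc3 : (ℓ:ℝ)^(2*k2) ≤ (ℓ:ℝ)^(2*(δ*m)) :=
            pow_le_pow_right₀ hℓ1 (by omega)
          have big : (1+G)^(k+2*k2) * ((k:ℕ):ℝ)^k * (((k2 : ℕ):ℝ) + 1) * (ℓ:ℝ)^(2*k2)
              ≤ (1+G)^(5*(δ*m)) * ((δ*m : ℕ):ℝ)^(δ*m) * (((δ*m : ℕ):ℝ)+1)
                * (ℓ:ℝ)^(2*(δ*m)) :=
            mul_le_mul₄ hc1 hkk hc2 hc3 hkknn (by positivity) (by positivity)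
              (by positivity) (by positivity) (by positivity)
          have big2 : (1+G)^(k+2*k2) * ((k:ℕ):ℝ)^k * (((k2 : ℕ):ℝ) + 1) * (ℓ:ℝ)^(2*k2)
              ≤ (1+G)^(5*(δ*m)) * ((δ*m : ℕ):ℝ)^(δ*m) * (((δ*m : ℕ):ℝ)+1)
                * (ℓ:ℝ)^(2*(δ*m)) * (1+c₀) :=
            big.trans (le_mul_of_one_le_right hCnn0 (by linarith))
          calc S.X * (((1+G)^k * ((k:ℕ):ℝ)^k * ((((k2 : ℕ):ℝ) + 1) * (ℓ:ℝ)^(2*k2)))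
                * ((1+G)^(2*k2) * M^ν))
              = ((1+G)^(k+2*k2) * ((k:ℕ):ℝ)^k * (((k2 : ℕ):ℝ) + 1) * (ℓ:ℝ)^(2*k2))
                  * (S.X * M^ν) := by rw [pow_add]; ring
            _ ≤ ((1+G)^(5*(δ*m)) * ((δ*m : ℕ):ℝ)^(δ*m) * (((δ*m : ℕ):ℝ)+1)
                  * (ℓ:ℝ)^(2*(δ*m)) * (1+c₀)) * (S.X * M ^ ν) :=
                mul_le_mul_of_nonneg_right big2 (mul_nonneg hXnn (pow_nonneg hMnn ν))
  -- ERROR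
  · set sumE := ∑ dd ∈ Dk P (δ*m), |S.E dd| with hsumE
    have hmax : max 1 (muP1 S.h P) = muP1 S.h P := max_eq_right hmu1
    have hKpos : (0:ℝ) < K := lt_of_lt_of_le one_pos hK1
    have hMpos : (0:ℝ) < M := lt_of_lt_of_le one_pos hM1
    set y : ℝ := K ^ ((((δ*m : ℕ):ℝ))/2 - 1 - ((d:ℕ):ℝ)) with hy
    have hynn : 0 ≤ y := Real.rpow_nonneg hKnn _
    have haveA : muP1 S.h P ^ k * K^d ≤ (1+G)^(2*d) * muP1 S.h P ^ (δ*m) := by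
      have h1 : K^d ≤ ((1+G)^2 * muP1 S.h P)^d := pow_le_pow_left₀ hKnn hKmu d
      calc muP1 S.h P ^ k * K^d ≤ muP1 S.h P ^ k * ((1+G)^2 * muP1 S.h P)^d :=
            mul_le_mul_of_nonneg_left h1 (pow_nonneg hmunn k)
        _ = (1+G)^(2*d) * (muP1 S.h P ^ k * muP1 S.h P ^ d) := by
            rw [mul_pow, ← pow_mul]
            ring
        _ = (1+G)^(2*d) * muP1 S.h P ^ (δ*m) := by
            rw [← pow_add]
            congr 2
            omega
    have hyid : K ^ ((((δ*m : ℕ):ℝ))/2 - 1) = y * K^d := by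
      rw [hy, ← Real.rpow_natCast K d, ← Real.rpow_add hKpos]
      congr 1
      ring
    have hdiv : muP1 S.h P ^ k * sumE ≤ (1+G)^(2*d) * (c₀ * S.X * y) := by
      have hKd : (0:ℝ) < K^d := pow_pos hKpos d
      rw [← mul_le_mul_iff_of_pos_right hKd]
      calc muP1 S.h P ^ k * sumE * K^d = (muP1 S.h P ^ k * K^d) * sumE := by ring
        _ ≤ ((1+G)^(2*d) * muP1 S.h P ^ (δ*m)) * sumE :=
            mul_le_mul_of_nonneg_right haveA hEnn'
        _ = (1+G)^(2*d) * (muP1 S.h P ^ (δ*m) * sumE) := by ring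
        _ ≤ (1+G)^(2*d) * (c₀ * S.X * K ^ ((((δ*m : ℕ):ℝ))/2 - 1)) :=
            mul_le_mul_of_nonneg_left hE (by positivity)
        _ = (1+G)^(2*d) * (c₀ * S.X * y) * K^d := by rw [hyid]; ring
    have hyK : M^d * y ≤ (1+G)^(2*(δ*m)) * M^ν := by
      have hGnn2 : (1:ℝ) ≤ (1+G)^(2*(δ*m)) := one_le_pow₀ hG1
      by_cases hxn : (((δ*m : ℕ):ℝ))/2 - 1 - ((d:ℕ):ℝ) ≤ 0
      · have hy1 : y ≤ 1 := Real.rpow_le_one_of_one_le_of_nonpos hK1 hxn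
        have hdν : M^d ≤ M^ν := pow_le_pow_right₀ hM1 (by omega)
        calc M^d * y ≤ M^d * 1 := mul_le_mul_of_nonneg_left hy1 (pow_nonneg hMnn d)
          _ = M^d := mul_one _
          _ ≤ M^ν := hdν
          _ ≤ (1+G)^(2*(δ*m)) * M^ν :=
              le_mul_of_one_le_left (pow_nonneg hMnn ν) hGnn2
      · push_neg at hxn
        set x : ℝ := (((δ*m : ℕ):ℝ))/2 - 1 - ((d:ℕ):ℝ) with hx
        have hdm : ((d:ℕ):ℝ) ≤ ((δ*m : ℕ):ℝ) := by
          have : (d:ℕ) ≤ δ*m := by omega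
          exact_mod_cast this
        have hdmnn : (0:ℝ) ≤ ((δ*m : ℕ):ℝ) := Nat.cast_nonneg _
        have hxd : x ≤ ((δ*m : ℕ):ℝ) := by
          rw [hx]
          have hd0 : (0:ℝ) ≤ ((d:ℕ):ℝ) := Nat.cast_nonneg _
          linarith
        have hy2 : y ≤ ((1+G)^2*M)^x := Real.rpow_le_rpow hKnn hKM (le_of_lt hxn)
        have hy3 : ((1+G)^2*M)^x = ((1+G)^2)^x * M^x := Real.mul_rpow (by positivity) hMnn
        have hy4 : ((1+G)^2)^x ≤ ((1+G)^2)^(((δ*m : ℕ):ℝ)) := by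
          exact Real.rpow_le_rpow_of_exponent_le (one_le_pow₀ hG1) hxd
        have hy5 : ((1+G)^2)^(((δ*m : ℕ):ℝ)) = (1+G)^(2*(δ*m)) := by
          rw [Real.rpow_natCast, ← pow_mul]
        have hMdx : M^d * M^x = M ^ (((d:ℕ):ℝ) + x) := by
          rw [← Real.rpow_natCast M d, ← Real.rpow_add hMpos]
        have hm2r : ((2*r+1 : ℕ):ℝ) ≤ ((δ*m : ℕ):ℝ) := by
          have : 2*r+1 ≤ δ*m := by omega
          exact_mod_cast this
        have hνcast : ((ν:ℕ):ℝ) = ((δ*m : ℕ):ℝ) - ((r:ℕ):ℝ) - 1 := by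
          have hν2 : ν = δ*m - (r+1) := by omega
          have hle : r+1 ≤ δ*m := by omega
          rw [hν2, Nat.cast_sub hle]
          push_cast
          ring
        have hexp : ((d:ℕ):ℝ) + x ≤ ((ν:ℕ):ℝ) := by
          rw [hx, hνcast]
          push_cast at hm2r ⊢
          linarith
        have hMx : M ^ (((d:ℕ):ℝ) + x) ≤ M ^ (((ν:ℕ):ℝ)) :=
          Real.rpow_le_rpow_of_exponent_le hM1 hexp
        have hMν : M ^ (((ν:ℕ):ℝ)) = M^ν := Real.rpow_natCast M ν
        calc M^d * y ≤ M^d * (((1+G)^2)^x * M^x) := by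
              apply mul_le_mul_of_nonneg_left _ (pow_nonneg hMnn d)
              rw [← hy3]
              exact hy2
          _ = ((1+G)^2)^x * (M^d * M^x) := by ring
          _ ≤ (1+G)^(2*(δ*m)) * M^ν := by
              apply mul_le_mul
              · rw [← hy5]
                exact hy4
              · rw [hMdx, ← hMν]
                exact hMx
              · rw [hMdx]
                exact Real.rpow_nonneg (le_of_lt hMpos) _
              · positivity
    -- assemble error chain
    have hpre_nn : (0:ℝ) ≤ (1+G)^k * ((k:ℕ):ℝ)^k * (((k : ℕ):ℝ)+1) := by positivity
    calc M ^ d * ((1+G)^k * ((k:ℕ):ℝ)^k * ((((k : ℕ):ℝ)+1) * (max 1 (muP1 S.h P))^k)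
            * ∑ dd ∈ Dk P k, |S.E dd|)
        ≤ M ^ d * ((1+G)^k * ((k:ℕ):ℝ)^k * ((((k : ℕ):ℝ)+1) * (muP1 S.h P)^k) * sumE) := by
          rw [hmax]
          apply mul_le_mul_of_nonneg_left _ (pow_nonneg hMnn d)
          apply mul_le_mul_of_nonneg_left (Dk_mono P hkd S) (by positivity)
      _ = ((1+G)^k * ((k:ℕ):ℝ)^k * (((k : ℕ):ℝ)+1)) * (M^d * (muP1 S.h P ^ k * sumE)) := by
          ring
      _ ≤ ((1+G)^k * ((k:ℕ):ℝ)^k * (((k : ℕ):ℝ)+1)) * (M^d * ((1+G)^(2*d) * (c₀ * S.X * y))) := by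
          apply mul_le_mul_of_nonneg_left _ hpre_nn
          exact mul_le_mul_of_nonneg_left hdiv (pow_nonneg hMnn d)
      _ = ((1+G)^k * (1+G)^(2*d) * ((k:ℕ):ℝ)^k * (((k : ℕ):ℝ)+1) * (c₀ * S.X)) * (M^d * y) := by
          ring
      _ ≤ ((1+G)^k * (1+G)^(2*d) * ((k:ℕ):ℝ)^k * (((k : ℕ):ℝ)+1) * (c₀ * S.X))
            * ((1+G)^(2*(δ*m)) * M^ν) := by
          apply mul_le_mul_of_nonneg_left hyK (by positivity)
      _ = ((1+G)^(k+2*d+2*(δ*m)) * ((k:ℕ):ℝ)^k * (((k : ℕ):ℝ)+1) * c₀) * (S.X * M^ν) := by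
          rw [pow_add, pow_add]
          ring
      _ ≤ ((1+G)^(5*(δ*m)) * ((δ*m : ℕ):ℝ)^(δ*m) * (((δ*m : ℕ):ℝ)+1)
            * ((ℓ:ℝ)^(2*(δ*m)) * (1+c₀))) * (S.X * M^ν) := by
          apply mul_le_mul_of_nonneg_right _ (mul_nonneg hXnn (pow_nonneg hMnn ν))
          apply mul_le_mul₄
          · exact pow_le_pow_right₀ hG1 (by omega)
          · exact hkk
          · have h5 : (k:ℕ) ≤ δ*m := hkd
            have h6 := (Nat.cast_le (α := ℝ)).mpr h5
            linarith
          · have hl1 : (1:ℝ) ≤ (ℓ:ℝ)^(2*(δ*m)) := one_le_pow₀ hℓ1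
            nlinarith
          · exact hkknn
          · positivity
          · linarith
          · positivity
          · positivity
          · positivity
      _ = ((1+G)^(5*(δ*m)) * ((δ*m : ℕ):ℝ)^(δ*m) * (((δ*m : ℕ):ℝ)+1) * (ℓ:ℝ)^(2*(δ*m))
            * (1+c₀)) * (S.X * M ^ ν) := by ring

end MomHelp
namespace MomHelp
open Finset

def BB {ℓ : ℕ} (v : Fin ℓ →₀ ℕ) : Finset (Fin ℓ → ℕ) :=
  Fintype.piFinset (fun i => Finset.range (v i + 1))

def Jset {ℓ : ℕ} (Q : MvPolynomial (Fin ℓ) ℝ) : Finset ((_ : Fin ℓ →₀ ℕ) × (Fin ℓ → ℕ)) :=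
  Q.support.sigma (fun v => (BB v).erase 0)

def coefJ {ℓ : ℕ} (Q : MvPolynomial (Fin ℓ) ℝ) (μ : Fin ℓ → ℝ)
    (j : (_ : Fin ℓ →₀ ℕ) × (Fin ℓ → ℕ)) : ℝ :=
  MvPolynomial.coeff j.1 Q *
    ((∏ i, ((j.1 i).choose (j.2 i) : ℝ)) * ∏ i, μ i ^ (j.1 i - j.2 i))

lemma mem_Jset {ℓ : ℕ} (Q : MvPolynomial (Fin ℓ) ℝ) (j : (_ : Fin ℓ →₀ ℕ) × (Fin ℓ → ℕ))
    (hj : j ∈ Jset Q) :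
    j.1 ∈ Q.support ∧ j.2 ≠ 0 ∧ ∀ i, j.2 i ≤ j.1 i := by
  rw [Jset, Finset.mem_sigma] at hj
  obtain ⟨h1, h2⟩ := hj
  rw [Finset.mem_erase] at h2
  refine ⟨h1, h2.1, fun i => ?_⟩
  have := Fintype.mem_piFinset.mp h2.2 i
  rw [Finset.mem_range] at this
  omega

lemma wt_bounds {ℓ : ℕ} (Q : MvPolynomial (Fin ℓ) ℝ) (δ : ℕ) (hQdeg : Q.totalDegree = δ)
    (j : (_ : Fin ℓ →₀ ℕ) × (Fin ℓ → ℕ)) (hj : j ∈ Jset Q) :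
    1 ≤ ∑ i, j.2 i ∧ ∑ i, j.2 i ≤ δ ∧ ∑ i, j.1 i ≤ δ := by
  obtain ⟨h1, h2, h3⟩ := mem_Jset Q j hj
  have hvδ : ∑ i, j.1 i ≤ δ := by
    have h0 := MvPolynomial.le_totalDegree h1
    rw [hQdeg] at h0
    have hsf : (j.1.sum fun _ e => e) = ∑ i, j.1 i := Finsupp.sum_fintype _ _ (fun _ => rfl)
    rw [← hsf]
    exact h0
  refine ⟨?_, ?_, hvδ⟩
  · obtain ⟨i, hi⟩ : ∃ i, j.2 i ≠ 0 := Function.ne_iff.mp h2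
    calc 1 ≤ j.2 i := by omega
      _ ≤ ∑ i, j.2 i := Finset.single_le_sum (fun i _ => Nat.zero_le _) (Finset.mem_univ i)
  · exact le_trans (Finset.sum_le_sum fun i _ => h3 i) hvδ

lemma evalC {ℓ : ℕ} (Q : MvPolynomial (Fin ℓ) ℝ) (x μ : Fin ℓ → ℝ) :
    MvPolynomial.eval x Q = MvPolynomial.eval μ Q
      + ∑ j ∈ Jset Q, coefJ Q μ j * ∏ i, (x i - μ i) ^ j.2 i := by
  classical
  have huniv : ∀ (z : Fin ℓ → ℝ) (v : Fin ℓ →₀ ℕ),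
      (∏ i ∈ v.support, z i ^ v i) = ∏ i, z i ^ v i := by
    intro z v
    apply Finset.prod_subset (Finset.subset_univ _)
    intro i _ hi
    rw [Finsupp.notMem_support_iff.mp hi, pow_zero]
  rw [MvPolynomial.eval_eq, MvPolynomial.eval_eq]
  have key : ∀ v ∈ Q.support,
      MvPolynomial.coeff v Q * ∏ i ∈ v.support, x i ^ v i
        = MvPolynomial.coeff v Q * ∏ i ∈ v.support, μ i ^ v i
          + ∑ β ∈ (BB v).erase 0, coefJ Q μ ⟨v, β⟩ * ∏ i, (x i - μ i) ^ β i := by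
    intro v hv
    rw [huniv x v, huniv μ v]
    have hxi : ∀ i : Fin ℓ, x i ^ v i = ∑ b ∈ Finset.range (v i + 1),
        (x i - μ i)^b * μ i^(v i - b) * ((v i).choose b : ℝ) := by
      intro i
      conv_lhs => rw [show x i = (x i - μ i) + μ i by ring]
      exact add_pow _ _ _
    rw [Finset.prod_congr rfl (fun i _ => hxi i), Finset.prod_univ_sum]
    have h0mem : (0 : Fin ℓ → ℕ) ∈ Fintype.piFinset (fun i => Finset.range (v i + 1)) := by
      rw [Fintype.mem_piFinset]
      intro i
      simp
    rw [← Finset.add_sum_erase _ _ h0mem]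
    have hzero : ∏ i : Fin ℓ, ((x i - μ i)^((0 : Fin ℓ → ℕ) i) *
        μ i^(v i - (0 : Fin ℓ → ℕ) i) * ((v i).choose ((0 : Fin ℓ → ℕ) i) : ℝ))
        = ∏ i : Fin ℓ, μ i ^ v i := by
      refine Finset.prod_congr rfl fun i _ => ?_
      simp
    rw [hzero, mul_add]
    congr 1
    rw [Finset.mul_sum]
    refine Finset.sum_congr rfl fun β hβ => ?_
    rw [coefJ]
    rw [Finset.prod_congr rfl (fun i (_ : i ∈ Finset.univ) => rfl : ∀ i ∈ Finset.univ,
      ((x i - μ i)^(β i) * μ i^(v i - β i) * ((v i).choose (β i) : ℝ))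
        = ((x i - μ i)^(β i) * μ i^(v i - β i) * ((v i).choose (β i) : ℝ)))]
    rw [show (∏ i : Fin ℓ, ((x i - μ i)^(β i) * μ i^(v i - β i) * ((v i).choose (β i) : ℝ)))
        = (∏ i : Fin ℓ, (x i - μ i)^(β i)) * (∏ i : Fin ℓ, μ i^(v i - β i))
          * (∏ i : Fin ℓ, ((v i).choose (β i) : ℝ)) by
      rw [← Finset.prod_mul_distrib, ← Finset.prod_mul_distrib]]
    ring
  rw [Finset.sum_congr rfl key, Finset.sum_add_distrib]
  congr 1
  rw [Jset, Finset.sum_sigma]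

lemma sum_pow_expand {α : Type*} [DecidableEq α] (s : Finset α) (y : α → ℝ) (m : ℕ) :
    (∑ j ∈ s, y j)^m = ∑ ψ ∈ Fintype.piFinset (fun _ : Fin m => s), ∏ t, y (ψ t) := by
  rw [← Finset.prod_univ_sum (fun _ : Fin m => s) (fun _ j => y j)]
  rw [Finset.prod_const, Finset.card_univ, Fintype.card_fin]

lemma coefJ_bounds {ℓ : ℕ} (Q : MvPolynomial (Fin ℓ) ℝ) (hQcoeff : ∀ v, 0 ≤ Q.coeff v)
    (δ : ℕ) (hQdeg : Q.totalDegree = δ)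
    (μ : Fin ℓ → ℝ) (M : ℝ) (hM1 : 1 ≤ M) (hμ0 : ∀ i, 0 ≤ μ i) (hμM : ∀ i, μ i ≤ M)
    (j : (_ : Fin ℓ →₀ ℕ) × (Fin ℓ → ℕ)) (hj : j ∈ Jset Q) :
    0 ≤ coefJ Q μ j ∧ coefJ Q μ j
      ≤ ((∑ j' ∈ Jset Q, MvPolynomial.coeff j'.1 Q
            * ∏ i, ((j'.1 i).choose (j'.2 i) : ℝ)) + 1) * M ^ (δ - ∑ i, j.2 i) := by
  obtain ⟨hsup, hne, hle⟩ := mem_Jset Q j hj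
  have hMnn : (0:ℝ) ≤ M := by linarith
  have hCnn : ∀ (j' : (_ : Fin ℓ →₀ ℕ) × (Fin ℓ → ℕ)),
      0 ≤ MvPolynomial.coeff j'.1 Q * ∏ i, ((j'.1 i).choose (j'.2 i) : ℝ) := by
    intro j'
    exact mul_nonneg (hQcoeff _) (Finset.prod_nonneg fun i _ => Nat.cast_nonneg _)
  constructor
  · apply mul_nonneg (hQcoeff _)
    apply mul_nonneg (Finset.prod_nonneg fun i _ => Nat.cast_nonneg _)
    exact Finset.prod_nonneg fun i _ => pow_nonneg (hμ0 i) _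
  · rw [coefJ, ← mul_assoc]
    have h1 : MvPolynomial.coeff j.1 Q * ∏ i, ((j.1 i).choose (j.2 i) : ℝ)
        ≤ (∑ j' ∈ Jset Q, MvPolynomial.coeff j'.1 Q
            * ∏ i, ((j'.1 i).choose (j'.2 i) : ℝ)) + 1 := by
      have h2 : MvPolynomial.coeff j.1 Q * ∏ i, ((j.1 i).choose (j.2 i) : ℝ)
          ≤ ∑ j' ∈ Jset Q, MvPolynomial.coeff j'.1 Q
              * ∏ i, ((j'.1 i).choose (j'.2 i) : ℝ) :=
        Finset.single_le_sum (fun j' _ => hCnn j') hj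
      linarith
    have h3 : ∏ i, μ i ^ (j.1 i - j.2 i) ≤ M ^ (δ - ∑ i, j.2 i) := by
      have h4 : ∏ i, μ i ^ (j.1 i - j.2 i) ≤ ∏ i, M ^ (j.1 i - j.2 i) :=
        Finset.prod_le_prod (fun i _ => pow_nonneg (hμ0 i) _)
          (fun i _ => pow_le_pow_left₀ (hμ0 i) (hμM i) _)
      refine h4.trans ?_
      rw [Finset.prod_pow_eq_pow_sum]
      apply pow_le_pow_right₀ hM1
      obtain ⟨_, hwtδ, hvδ⟩ := wt_bounds Q δ hQdeg j hj
      have hsum : ∑ i, (j.1 i - j.2 i) + ∑ i, j.2 i = ∑ i, j.1 i := by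
        rw [← Finset.sum_add_distrib]
        refine Finset.sum_congr rfl fun i _ => ?_
        have := hle i
        omega
      omega
    have hsumnn : (0:ℝ) ≤ ∑ j' ∈ Jset Q, MvPolynomial.coeff j'.1 Q
        * ∏ i, ((j'.1 i).choose (j'.2 i) : ℝ) := Finset.sum_nonneg fun j' _ => hCnn j'
    apply mul_le_mul h1 h3 _ (by linarith)
    exact Finset.prod_nonneg fun i _ => pow_nonneg (hμ0 i) _

end MomHelp

open Finset MomHelp

/-- **Theorem 2.8 (odd case)**: for odd `m`, `M_m ≪ X B_Q(P)^{m−1} + X 𝔐^{δm − (m+1)/2}`,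
with an implied constant depending only on `Q, ℓ, m, G, c₀`. -/

theorem moment_theorem_odd (ℓ : ℕ) (hℓ : 1 ≤ ℓ) (δ : ℕ) (hδ : 1 ≤ δ)
    (Q : MvPolynomial (Fin ℓ) ℝ) (hQcoeff : ∀ v, 0 ≤ Q.coeff v)
    (hQdeg : Q.totalDegree = δ)
    (m : ℕ) (hm : 0 < m) (hmo : Odd m)
    (G c₀ : ℝ) (hG : 0 < G) (hc₀ : 0 < c₀) :
    ∃ C : ℝ, ∀ (S : SieveSetup) (P : Finset ℕ), (∀ p ∈ P, p.Prime) →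
      ∀ g : Fin ℓ → ℕ → ℝ, (∀ j, StronglyAdditive (g j)) → (∀ j n, 0 ≤ g j n) →
      (∀ j, ∀ p ∈ P, g j p ≤ G) →
      ∀ K M : ℝ,
      (∀ i j : Fin ℓ, |kappaP S.h P (g i) (g j)| ≤ K) →
      (∃ i j : Fin ℓ, K = |kappaP S.h P (g i) (g j)|) →
      (∀ i : Fin ℓ, muP S.h P (g i) ≤ M) →
      (∃ i : Fin ℓ, M = muP S.h P (g i)) →
      1 ≤ K → 1 ≤ M → 1 ≤ muP1 S.h P →
      muP1 S.h P ^ (δ * m) * ∑ d ∈ Dk P (δ * m), |S.E d| ≤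
        c₀ * S.X * K ^ (((δ * m : ℕ) : ℝ) / 2 - 1) →
      |Mm S P Q g m| ≤
        C * (S.X * BQP S.h P Q g ^ (m - 1) +
          S.X * M ^ (((δ * m : ℕ) : ℝ) - ((m : ℝ) + 1) / 2)) := by
  classical
  set CQv : ℝ := (∑ j' ∈ Jset Q, MvPolynomial.coeff j'.1 Q
      * ∏ i, ((j'.1 i).choose (j'.2 i) : ℝ)) + 1 with hCQv
  set CONST2 : ℝ := (1+G)^(5*(δ*m)) * ((δ*m : ℕ):ℝ)^(δ*m) * (((δ*m : ℕ):ℝ)+1)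
      * (ℓ:ℝ)^(2*(δ*m)) * (1+c₀) * 2 with hCONST2
  refine ⟨((Jset Q).card : ℝ)^m * CQv^m * CONST2, ?_⟩
  intro S P hP g hgadd hg0 hgG K M hκ hKex hμM hMex hK1 hM1 hmu1 hE
  obtain ⟨r, hmr⟩ := hmo
  have hCQv1 : (1:ℝ) ≤ CQv := by
    rw [hCQv]
    have : (0:ℝ) ≤ ∑ j' ∈ Jset Q, MvPolynomial.coeff j'.1 Q
        * ∏ i, ((j'.1 i).choose (j'.2 i) : ℝ) :=
      Finset.sum_nonneg fun j' _ =>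
        mul_nonneg (hQcoeff _) (Finset.prod_nonneg fun i _ => Nat.cast_nonneg _)
    linarith
  have hCQvnn : (0:ℝ) ≤ CQv := by linarith
  have hCONST2nn : (0:ℝ) ≤ CONST2 := by
    rw [hCONST2]; positivity
  have hMnn : (0:ℝ) ≤ M := by linarith
  have hXnn : (0:ℝ) ≤ S.X := le_of_lt S.X_pos
  -- basic facts about lam, mu, kappa
  have hlam0 : ∀ p ∈ P, 0 ≤ lam S p := fun p hp => lam_nonneg S p (hP p hp)
  have hlam1 : ∀ p ∈ P, lam S p ≤ 1 := fun p hp => lam_le_one S p (hP p hp)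
  have hμ0 : ∀ i, 0 ≤ muP S.h P (g i) := by
    intro i
    rw [muP]
    exact Finset.sum_nonneg fun p hp => mul_nonneg (hg0 i p) (hlam0 p hp)
  have hκnn : ∀ i j, 0 ≤ kappaP S.h P (g i) (g j) := by
    intro i j
    rw [kappaP]
    apply Finset.sum_nonneg
    intro p hp
    have l0 := hlam0 p hp
    have l1 := hlam1 p hp
    simp only [lam] at l0 l1
    have h1m : (0:ℝ) ≤ 1 - S.h p / p := by linarith
    exact mul_nonneg (mul_nonneg (mul_nonneg (hg0 i p) (hg0 j p)) l0) h1m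
  have hκGM : ∀ i j, kappaP S.h P (g i) (g j) ≤ G * M := by
    intro i j
    have h1 : kappaP S.h P (g i) (g j) ≤ G * muP S.h P (g j) := by
      rw [kappaP, muP, Finset.mul_sum]
      apply Finset.sum_le_sum
      intro p hp
      have l0 := hlam0 p hp
      have l1 := hlam1 p hp
      simp only [lam] at l0 l1
      have gi0 := hg0 i p
      have gj0 := hg0 j p
      have giG := hgG i p hp
      have t0 : 0 ≤ g j p * (S.h p / p) := mul_nonneg gj0 l0
      have t1 : 0 ≤ g i p * g j p * (S.h p / p) := mul_nonneg (mul_nonneg gi0 gj0) l0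
      calc g i p * g j p * (S.h p / p) * (1 - S.h p / p)
          ≤ g i p * g j p * (S.h p / p) * 1 :=
            mul_le_mul_of_nonneg_left (by linarith) t1
        _ = g i p * (g j p * (S.h p / p)) := by ring
        _ ≤ G * (g j p * (S.h p / p)) := mul_le_mul_of_nonneg_right giG t0
    refine h1.trans ?_
    exact mul_le_mul_of_nonneg_left (hμM j) (le_of_lt hG)
  have hκG2mu : ∀ i j, kappaP S.h P (g i) (g j) ≤ G^2 * muP1 S.h P := by
    intro i j
    rw [kappaP, muP1, Finset.mul_sum]
    apply Finset.sum_le_sum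
    intro p hp
    have l0 := hlam0 p hp
    have l1 := hlam1 p hp
    simp only [lam] at l0 l1
    have gi0 := hg0 i p
    have gj0 := hg0 j p
    have giG := hgG i p hp
    have gjG := hgG j p hp
    have t1 : 0 ≤ g i p * g j p * (S.h p / p) := mul_nonneg (mul_nonneg gi0 gj0) l0
    calc g i p * g j p * (S.h p / p) * (1 - S.h p / p)
        ≤ g i p * g j p * (S.h p / p) * 1 :=
          mul_le_mul_of_nonneg_left (by linarith) t1
      _ = (g i p * g j p) * (S.h p / p) := by ring
      _ ≤ (G * G) * (S.h p / p) :=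
          mul_le_mul_of_nonneg_right (mul_le_mul giG gjG gj0 (le_of_lt hG)) l0
      _ = G^2 * (S.h p / p) := by ring
  have hKM : K ≤ (1+G)^2 * M := by
    obtain ⟨i0, j0, hKeq⟩ := hKex
    rw [hKeq, abs_of_nonneg (hκnn i0 j0)]
    refine (hκGM i0 j0).trans ?_
    apply mul_le_mul_of_nonneg_right _ hMnn
    nlinarith
  have hKmu : K ≤ (1+G)^2 * muP1 S.h P := by
    obtain ⟨i0, j0, hKeq⟩ := hKex
    rw [hKeq, abs_of_nonneg (hκnn i0 j0)]
    refine (hκG2mu i0 j0).trans ?_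
    apply mul_le_mul_of_nonneg_right _ (by linarith)
    nlinarith
  -- polynomial expansion
  set μf : Fin ℓ → ℝ := fun i => muP S.h P (g i) with hμf
  have hμ0f : ∀ i, 0 ≤ μf i := hμ0
  have hμMf : ∀ i, μf i ≤ M := hμM
  have hAQP : AQP S.h P Q g = MvPolynomial.eval μf Q := rfl
  have hMm : Mm S P Q g m = ∑ ψ ∈ Fintype.piFinset (fun _ : Fin m => Jset Q),
      (∏ t, coefJ Q μf (ψ t)) *
        (S.A.map (fun a =>
          ∏ i, (gP P (g i) a - muP S.h P (g i)) ^ (∑ t, (ψ t).2 i))).sum := by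
    rw [Mm]
    have hpoint : ∀ a : ℕ,
        (MvPolynomial.eval (fun i => gP P (g i) a) Q - AQP S.h P Q g) ^ m
        = ∑ ψ ∈ Fintype.piFinset (fun _ : Fin m => Jset Q),
            (∏ t, coefJ Q μf (ψ t)) *
              ∏ i, (gP P (g i) a - muP S.h P (g i)) ^ (∑ t, (ψ t).2 i) := by
      intro a
      have h1 : MvPolynomial.eval (fun i => gP P (g i) a) Q - AQP S.h P Q g
          = ∑ j ∈ Jset Q, coefJ Q μf j * ∏ i, (gP P (g i) a - μf i) ^ j.2 i := by
        rw [hAQP, evalC Q (fun i => gP P (g i) a) μf]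
        ring
      rw [h1, sum_pow_expand]
      refine Finset.sum_congr rfl fun ψ hψ => ?_
      rw [Finset.prod_mul_distrib]
      congr 1
      rw [Finset.prod_comm]
      refine Finset.prod_congr rfl fun i _ => ?_
      rw [Finset.prod_pow_eq_pow_sum]
    rw [show (fun a => (MvPolynomial.eval (fun i => gP P (g i) a) Q - AQP S.h P Q g) ^ m)
        = (fun a => ∑ ψ ∈ Fintype.piFinset (fun _ : Fin m => Jset Q),
            (∏ t, coefJ Q μf (ψ t)) *
              ∏ i, (gP P (g i) a - muP S.h P (g i)) ^ (∑ t, (ψ t).2 i))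
      from funext hpoint]
    rw [msum_fsum]
    exact Finset.sum_congr rfl fun ψ _ => msum_const_mul _ _ _
  -- per-psi bound
  have hper : ∀ ψ ∈ Fintype.piFinset (fun _ : Fin m => Jset Q),
      |(∏ t, coefJ Q μf (ψ t)) *
        (S.A.map (fun a =>
          ∏ i, (gP P (g i) a - muP S.h P (g i)) ^ (∑ t, (ψ t).2 i))).sum|
      ≤ CQv^m * CONST2 * (S.X * M ^ (δ*m - (m+1)/2)) := by
    intro ψ hψ
    have hψt : ∀ t, ψ t ∈ Jset Q := fun t => Fintype.mem_piFinset.mp hψ t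
    have hwt : ∀ t : Fin m, 1 ≤ ∑ i, (ψ t).2 i ∧ ∑ i, (ψ t).2 i ≤ δ :=
      fun t => ⟨(wt_bounds Q δ hQdeg _ (hψt t)).1, (wt_bounds Q δ hQdeg _ (hψt t)).2.1⟩
    set e : Fin ℓ → ℕ := fun i => ∑ t, (ψ t).2 i with he
    have hkswap : ∑ i, e i = ∑ t, ∑ i, (ψ t).2 i := by
      rw [he]
      exact Finset.sum_comm
    have hkm : m ≤ ∑ i, e i := by
      rw [hkswap]
      calc m = ∑ _t : Fin m, 1 := by simp
        _ ≤ ∑ t, ∑ i, (ψ t).2 i := Finset.sum_le_sum fun t _ => (hwt t).1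
    have hkd : ∑ i, e i ≤ δ * m := by
      rw [hkswap]
      calc ∑ t, ∑ i, (ψ t).2 i ≤ ∑ _t : Fin m, δ := Finset.sum_le_sum fun t _ => (hwt t).2
        _ = δ * m := by simp [mul_comm]
    -- coefficient bound
    have hcb : ∀ t : Fin m, 0 ≤ coefJ Q μf (ψ t) ∧ coefJ Q μf (ψ t)
        ≤ CQv * M ^ (δ - ∑ i, (ψ t).2 i) :=
      fun t => coefJ_bounds Q hQcoeff δ hQdeg μf M hM1 hμ0f hμMf _ (hψt t)
    have hCψnn : 0 ≤ ∏ t, coefJ Q μf (ψ t) :=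
      Finset.prod_nonneg fun t _ => (hcb t).1
    have hCψle : ∏ t, coefJ Q μf (ψ t) ≤ CQv^m * M ^ (δ*m - ∑ i, e i) := by
      calc ∏ t, coefJ Q μf (ψ t) ≤ ∏ t, (CQv * M ^ (δ - ∑ i, (ψ t).2 i)) :=
            Finset.prod_le_prod (fun t _ => (hcb t).1) (fun t _ => (hcb t).2)
        _ = CQv^m * M ^ (∑ t, (δ - ∑ i, (ψ t).2 i)) := by
            rw [Finset.prod_mul_distrib, Finset.prod_const, Finset.card_univ,
              Fintype.card_fin, Finset.prod_pow_eq_pow_sum]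
        _ ≤ CQv^m * M ^ (δ*m - ∑ i, e i) := by
            apply mul_le_mul_of_nonneg_left _ (pow_nonneg hCQvnn m)
            apply pow_le_pow_right₀ hM1
            rw [hkswap]
            have hsum : ∑ t, (δ - ∑ i, (ψ t).2 i) + ∑ t, ∑ i, (ψ t).2 i
                = ∑ _t : Fin m, δ := by
              rw [← Finset.sum_add_distrib]
              refine Finset.sum_congr rfl fun t _ => ?_
              have := (hwt t).2
              omega
            have hδm : ∑ _t : Fin m, δ = δ * m := by simp [mul_comm]
            omega
    -- apply Te_bound
    have hTe := Te_bound hℓ S P hP g hg0 G hG hgG K M hκ hK1 hM1 hKM hKmu hmu1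
      c₀ hc₀ δ m r hδ hmr hE e hkm hkd
    rw [abs_mul, abs_of_nonneg hCψnn]
    calc (∏ t, coefJ Q μf (ψ t)) *
          |(S.A.map (fun a =>
            ∏ i, (gP P (g i) a - muP S.h P (g i)) ^ (e i))).sum|
        ≤ (CQv^m * M ^ (δ*m - ∑ i, e i)) *
          |(S.A.map (fun a =>
            ∏ i, (gP P (g i) a - muP S.h P (g i)) ^ (e i))).sum| :=
          mul_le_mul_of_nonneg_right hCψle (abs_nonneg _)
      _ = CQv^m * (M ^ (δ*m - ∑ i, e i) *
          |(S.A.map (fun a =>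
            ∏ i, (gP P (g i) a - muP S.h P (g i)) ^ (e i))).sum|) := by ring
      _ ≤ CQv^m * (CONST2 * (S.X * M ^ (δ*m - (m+1)/2))) := by
          apply mul_le_mul_of_nonneg_left _ (pow_nonneg hCQvnn m)
          rw [hCONST2]
          exact hTe
      _ = CQv^m * CONST2 * (S.X * M ^ (δ*m - (m+1)/2)) := by ring
  -- sum up
  have htot : |Mm S P Q g m|
      ≤ ((Jset Q).card : ℝ)^m * CQv^m * CONST2 * (S.X * M ^ (δ*m - (m+1)/2)) := by
    rw [hMm]
    refine (Finset.abs_sum_le_sum_abs _ _).trans ?_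
    have hcard : ((Fintype.piFinset (fun _ : Fin m => Jset Q)).card : ℝ)
        = ((Jset Q).card : ℝ)^m := by
      rw [Fintype.card_piFinset]
      push_cast
      simp
    calc ∑ ψ ∈ Fintype.piFinset (fun _ : Fin m => Jset Q),
          |(∏ t, coefJ Q μf (ψ t)) *
            (S.A.map (fun a =>
              ∏ i, (gP P (g i) a - muP S.h P (g i)) ^ (∑ t, (ψ t).2 i))).sum|
        ≤ (Fintype.piFinset (fun _ : Fin m => Jset Q)).card •
            (CQv^m * CONST2 * (S.X * M ^ (δ*m - (m+1)/2))) :=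
          Finset.sum_le_card_nsmul _ _ _ hper
      _ = ((Jset Q).card : ℝ)^m * CQv^m * CONST2 * (S.X * M ^ (δ*m - (m+1)/2)) := by
          rw [nsmul_eq_mul, hcard]
          ring
  -- convert to the required form
  have hrexp : M ^ (((δ * m : ℕ) : ℝ) - ((m : ℝ) + 1) / 2) = M ^ (δ*m - (m+1)/2) := by
    have hmd : m ≤ δ*m := Nat.le_mul_of_pos_left m (by omega)
    have hle : (m+1)/2 ≤ δ*m := by omega
    have hcast : (((δ * m : ℕ) : ℝ) - ((m : ℝ) + 1) / 2) = ((δ*m - (m+1)/2 : ℕ) : ℝ) := by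
      rw [Nat.cast_sub hle]
      have h2 : ((m+1)/2 : ℕ) = r + 1 := by omega
      rw [h2]
      push_cast
      rw [hmr]
      push_cast
      ring
    rw [hcast, Real.rpow_natCast]
  rw [hrexp]
  have hBnn : 0 ≤ S.X * BQP S.h P Q g ^ (m - 1) :=
    mul_nonneg hXnn (pow_nonneg (Real.sqrt_nonneg _) _)
  have hCnn : (0:ℝ) ≤ ((Jset Q).card : ℝ)^m * CQv^m * CONST2 := by positivity
  refine htot.trans ?_
  exact mul_le_mul_of_nonneg_left (le_add_of_nonneg_left hBnn) hCnn
end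
end
end
end

section
/- Let ℓ ≥ 1, let m be a positive even integer, let c₁,…,c_ℓ be real numbers, and let (z_{ij})_{1≤i,j≤ℓ} be real numbers with z_{ij} = z_{ji} for all i, j. Then (1/(m/2)!) · Σ_{v : {1,…,m} → {1,…,ℓ}} (Π_{i=1}^{m} c_{v(i)}) · Σ_{τ ∈ T_m} Π_{j=1}^{m/2} z_{v(Υ₁(j)) v(Υ₂(j))} = C_m · (Σ_{i=1}^{ℓ} Σ_{j=1}^{ℓ} c_i c_j z_{ij})^{m/2}, where the outer sum is over all functions v from {1,…,m} to {1,…,ℓ}, and for each τ the integers Υ₁(j), Υ₂(j) denote the two preimages of j under τ. -/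
/-!
A 2-to-1 map `τ : Fin k → Fin l` is the first coordinate of a bijection
`e : Fin k ≃ Fin l × Fin 2`. Reindexing `v` along `e` turns the sum over `v` into a sum over
`l`-tuples of ordered pairs, which factorises as the `l`-th power of
`∑_{a,b} c_a c_b (z_{ab} + z_{ba}) / 2 = ∑_{a,b} c_a c_b z_{ab}`, whatever `τ` is.
The 2-to-1 maps `Fin (2n) → Fin n` form a single orbit under precomposition by permutations,
with stabilisers of order `∏_j 2! = 2^n`, so there are `(2n)! / 2^n` of them.
-/

open Finset
open scoped Classical

noncomputable section

section TwoToOne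

variable {k l : ℕ} {τ : Fin k → Fin l}

theorem sum_fiber_eq_sum_fin_two {M : Type*} [AddCommMonoid M] (e : Fin k ≃ Fin l × Fin 2)
    (he : ∀ i, (e i).1 = τ i) (j : Fin l) (g : Fin k → M) :
    ∑ i ∈ univ.filter (fun i => τ i = j), g i = ∑ t : Fin 2, g (e.symm (j, t)) := by
  rw [Finset.sum_filter, ← e.symm.sum_comp, Fintype.sum_prod_type, Finset.sum_comm]
  simp [← he]

theorem twoToOne_iff_exists_equiv :
    TwoToOne τ ↔ ∃ e : Fin k ≃ Fin l × Fin 2, ∀ i, (e i).1 = τ i := by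
  constructor
  · intro hτ
    have hfib : ∀ j, Fintype.card {i // τ i = j} = 2 := fun j => by
      rw [Fintype.card_subtype]; exact hτ j
    exact ⟨(Equiv.sigmaFiberEquiv τ).symm.trans
      ((Equiv.sigmaCongrRight fun j => Fintype.equivFinOfCardEq (hfib j)).trans
        (Equiv.sigmaEquivProd _ _)), fun i => rfl⟩
  · rintro ⟨e, he⟩ j
    rw [Finset.card_eq_sum_ones, sum_fiber_eq_sum_fin_two e he, Fin.sum_univ_two]

theorem fiberProd_eq_prod (e : Fin k ≃ Fin l × Fin 2) (he : ∀ i, (e i).1 = τ i)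
    (z : Fin k → Fin k → ℝ) :
    fiberProd z τ =
      ∏ j, (z (e.symm (j, 0)) (e.symm (j, 1)) + z (e.symm (j, 1)) (e.symm (j, 0))) / 2 := by
  refine Finset.prod_congr rfl fun j _ => ?_
  have hfilter : ∀ i, univ.filter (fun i' => τ i' = j ∧ i' ≠ i) =
      (univ.filter fun i' => τ i' = j).filter (· ≠ i) := fun i => by rw [Finset.filter_filter]
  simp_rw [hfilter, Finset.sum_filter (· ≠ _), sum_fiber_eq_sum_fin_two e he, Fin.sum_univ_two]
  simp

theorem sum_prod_mul_fiberProd {ι : Type*} [Fintype ι] (hτ : TwoToOne τ) (c : ι → ℝ)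
    (z : ι → ι → ℝ) :
    ∑ v : Fin k → ι, (∏ i, c (v i)) * fiberProd (fun i i' => z (v i) (v i')) τ =
      (∑ a, ∑ b, c a * c b * z a b) ^ l := by
  obtain ⟨e, he⟩ := twoToOne_iff_exists_equiv.mp hτ
  set f : (Fin 2 → ι) → ℝ := fun u =>
    c (u 0) * c (u 1) * ((z (u 0) (u 1) + z (u 1) (u 0)) / 2)
  have hpair : ∑ u, f u = ∑ a, ∑ b, c a * c b * z a b := by
    rw [← (finTwoArrowEquiv ι).symm.sum_comp, Fintype.sum_prod_type]
    simp only [f, finTwoArrowEquiv_symm_apply, Matrix.cons_val_zero, Matrix.cons_val_one]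
    have hswap : ∑ a, ∑ b, c a * c b * z b a = ∑ a, ∑ b, c a * c b * z a b := by
      rw [Finset.sum_comm]; simp only [mul_comm (c _) (c _)]
    simp only [mul_add, add_div, Finset.sum_add_distrib, mul_div_assoc', ← Finset.sum_div, hswap]
    ring
  rw [← hpair, Fintype.sum_pow]
  refine Fintype.sum_equiv ((e.arrowCongr (Equiv.refl ι)).trans (Equiv.curry _ _ _)) _ _
    fun v => ?_
  rw [fiberProd_eq_prod e he, ← e.symm.prod_comp, Fintype.prod_prod_type,
    ← Finset.prod_mul_distrib]
  simp [f, Fin.prod_univ_two]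

theorem TwoToOne.comp_perm (hτ : TwoToOne τ) (σ : Equiv.Perm (Fin k)) :
    TwoToOne (τ ∘ σ) := by
  obtain ⟨e, he⟩ := twoToOne_iff_exists_equiv.mp hτ
  exact twoToOne_iff_exists_equiv.mpr ⟨σ.trans e, fun i => he (σ i)⟩

theorem TwoToOne.exists_perm_comp_eq {τ₀ : Fin k → Fin l} (hτ₀ : TwoToOne τ₀)
    (hτ : TwoToOne τ) :
    ∃ σ : Equiv.Perm (Fin k), τ₀ ∘ σ = τ := by
  obtain ⟨e₀, he₀⟩ := twoToOne_iff_exists_equiv.mp hτ₀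
  obtain ⟨e, he⟩ := twoToOne_iff_exists_equiv.mp hτ
  exact ⟨e.trans e₀.symm, funext fun i => by simp [← he₀, ← he]⟩

theorem TwoToOne.card_perm_comp_eq_self (hτ : TwoToOne τ) :
    Fintype.card {σ : Equiv.Perm (Fin k) // τ ∘ σ = τ} = 2 ^ l := by
  rw [DomMulAct.stabilizer_card]
  simp [Fintype.card_subtype, hτ _]

end TwoToOne

theorem card_filter_comp_perm_eq {α β : Type*} [Fintype α] [DecidableEq α] [DecidableEq β]
    (τ₀ τ : α → β) (σ₁ : Equiv.Perm α) (hσ₁ : τ₀ ∘ σ₁ = τ) :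
    #(univ.filter fun σ : Equiv.Perm α => τ₀ ∘ σ = τ) =
      Fintype.card {σ : Equiv.Perm α // τ₀ ∘ σ = τ₀} := by
  rw [Fintype.card_subtype]
  refine Finset.card_equiv (Equiv.mulRight σ₁⁻¹) fun σ => ?_
  simp only [Finset.mem_filter, Finset.mem_univ, true_and, Equiv.coe_mulRight,
    Equiv.Perm.coe_mul, Equiv.Perm.inv_def, ← hσ₁, ← Function.comp_assoc, Equiv.comp_symm_eq]

theorem card_twoToOne_mul_two_pow (n : ℕ) :
    #(univ.filter fun τ : Fin (n + n) → Fin n => TwoToOne τ) * 2 ^ n = (n + n).factorial := by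
  obtain ⟨e₀⟩ : Nonempty (Fin (n + n) ≃ Fin n × Fin 2) :=
    ⟨Fintype.equivOfCardEq (by simp; omega)⟩
  set τ₀ : Fin (n + n) → Fin n := fun i => (e₀ i).1
  have hτ₀ : TwoToOne τ₀ := twoToOne_iff_exists_equiv.mpr ⟨e₀, fun _ => rfl⟩
  calc #(univ.filter fun τ : Fin (n + n) → Fin n => TwoToOne τ) * 2 ^ n
      = ∑ τ ∈ univ.filter (fun τ : Fin (n + n) → Fin n => TwoToOne τ),
          #(univ.filter fun σ : Equiv.Perm (Fin (n + n)) => τ₀ ∘ σ = τ) := by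
        refine (Finset.sum_const_nat fun τ hτ => ?_).symm
        obtain ⟨σ₁, hσ₁⟩ := hτ₀.exists_perm_comp_eq (Finset.mem_filter.mp hτ).2
        rw [card_filter_comp_perm_eq τ₀ τ σ₁ hσ₁, hτ₀.card_perm_comp_eq_self]
    _ = #(univ : Finset (Equiv.Perm (Fin (n + n)))) :=
        (Finset.card_eq_sum_card_fiberwise fun σ _ => by simpa using hτ₀.comp_perm σ).symm
    _ = (n + n).factorial := by rw [Finset.card_univ, Fintype.card_perm, Fintype.card_fin]

theorem magic_identity_general (ℓ : ℕ) (m : ℕ) (hme : Even m)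
    (c : Fin ℓ → ℝ) (z : Fin ℓ → Fin ℓ → ℝ) :
    (1 : ℝ) / (Nat.factorial (m / 2) : ℝ) *
      ∑ v : Fin m → Fin ℓ, (∏ i : Fin m, c (v i)) *
        ∑ τ ∈ Finset.univ.filter (fun τ : Fin m → Fin (m / 2) => TwoToOne τ),
          fiberProd (fun i i' => z (v i) (v i')) τ
    = Cm m * (∑ i : Fin ℓ, ∑ j : Fin ℓ, c i * c j * z i j) ^ (m / 2) := by
  have hm : m = m / 2 + m / 2 := by obtain ⟨n, rfl⟩ := hme; omega
  unfold Cm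
  generalize m / 2 = n at hm ⊢
  subst hm
  have hcard : (#(univ.filter fun τ : Fin (n + n) → Fin n => TwoToOne τ) : ℝ) =
      (n + n).factorial / 2 ^ n := by
    rw [eq_div_iff (by positivity)]
    exact_mod_cast card_twoToOne_mul_two_pow n
  simp_rw [Finset.mul_sum]
  rw [Finset.sum_comm]
  simp_rw [← Finset.mul_sum]
  rw [Finset.sum_congr rfl fun τ hτ => sum_prod_mul_fiberProd (Finset.mem_filter.mp hτ).2 c z,
    Finset.sum_const, nsmul_eq_mul, hcard]
  field_simp

/-- **Proposition 3.3** (combinatorial form): for even `m` and symmetric `(z_{ij})`,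
`(1/(m/2)!) ∑_v (∏_i c_{v(i)}) ∑_{τ ∈ T_m} ∏_j z_{v(Υ₁(j)) v(Υ₂(j))}
  = C_m (∑_{i,j} c_i c_j z_{ij})^{m/2}`. -/
theorem magic_identity (ℓ : ℕ) (hℓ : 1 ≤ ℓ) (m : ℕ) (hm : 0 < m) (hme : Even m)
    (c : Fin ℓ → ℝ) (z : Fin ℓ → Fin ℓ → ℝ) (hz : ∀ i j, z i j = z j i) :
    (1 : ℝ) / (Nat.factorial (m / 2) : ℝ) *
      ∑ v : Fin m → Fin ℓ, (∏ i : Fin m, c (v i)) *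
        ∑ τ ∈ Finset.univ.filter (fun τ : Fin m → Fin (m / 2) => TwoToOne τ),
          fiberProd (fun i i' => z (v i) (v i')) τ
    = Cm m * (∑ i : Fin ℓ, ∑ j : Fin ℓ, c i * c j * z i j) ^ (m / 2) :=
  magic_identity_general ℓ m hme c z
end
end

section
/- Let h be a multiplicative function with 0 ≤ h(d) ≤ d for all positive integers d, and let H and J be as defined. Then: (a) H(p) = 0 for every prime p, and H(n) = 0 for every positive integer n that is not squarefull; (b) |H(p^α)| ≤ H(p²) for every prime p and every integer α ≥ 1; (c) |J(p^α, s)| ≤ 1 for every prime p, integer α ≥ 1, and positive integer s, and moreover |J(p^α, s)| ≤ h(p)/p whenever p ∤ s. -/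
/-!
Write `x = h(p)/p ∈ [0, 1]`. Factoring out `x(1 - x)` gives
`H(p^(k+1)) = x(1 - x)·((1 - x)^k - (-x)^k)`, and the second factor is exactly the quantity
`J(p^k, s)` for `p ∣ s`, whose modulus is at most `(1 - x)^k + x^k ≤ 1` when `k ≥ 1` and is `0`
when `k = 0`. Hence `H(p) = 0`, so `H` vanishes at every `n` with a prime to the first power,
and `|H(p^α)| ≤ x(1 - x) = H(p²)`. For `p ∤ s`, `|J(p^α, s)| = x^α ≤ x`.
-/

open Finset
open scoped Classical

noncomputable section

/-- The largest squarefree divisor (radical) of `n`. -/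
def rad (n : ℕ) : ℕ := ∏ p ∈ n.primeFactors, p

theorem Nat.Prime.factorization_prod_pow {M : Type*} [CommMonoid M] {p α : ℕ} (hp : p.Prime)
    (hα : α ≠ 0) (g : ℕ → ℕ → M) : (p ^ α).factorization.prod g = g p α := by
  rw [hp.factorization_pow, Finsupp.prod, Finsupp.support_single _ hα,
    Finset.prod_singleton, Finsupp.single_eq_same]

theorem Nat.exists_factorization_eq_one_of_not_squarefull {n : ℕ} (hn : n ≠ 0)
    (hsq : ¬ Squarefull n) : ∃ p, n.factorization p = 1 := by
  simp only [Squarefull, not_forall] at hsq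
  obtain ⟨p, hp, hpn, hp2⟩ := hsq
  rw [← pow_one p, hp.pow_dvd_iff_le_factorization hn] at hpn
  rw [hp.pow_dvd_iff_le_factorization hn] at hp2
  exact ⟨p, by omega⟩

theorem abs_one_sub_pow_sub_neg_pow_le_one {x : ℝ} (hx₀ : 0 ≤ x) (hx₁ : x ≤ 1) (k : ℕ) :
    |(1 - x) ^ k - (-x) ^ k| ≤ 1 := by
  rcases Nat.eq_zero_or_pos k with rfl | hk
  · simp
  calc |(1 - x) ^ k - (-x) ^ k|
      ≤ |(1 - x) ^ k| + |(-x) ^ k| := abs_sub _ _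
    _ = (1 - x) ^ k + x ^ k := by
      rw [abs_pow, abs_pow, abs_neg, abs_of_nonneg hx₀, abs_of_nonneg (sub_nonneg.2 hx₁)]
    _ ≤ (1 - x) + x := add_le_add (pow_le_of_le_one (by linarith) (by linarith) hk.ne')
        (pow_le_of_le_one hx₀ hx₁ hk.ne')
    _ = 1 := by ring

section

variable (h : ℕ → ℝ)

theorem Hfun_prime_pow_succ {p : ℕ} (hp : p.Prime) (k : ℕ) :
    Hfun h (p ^ (k + 1)) =
      h p / p * (1 - h p / p) * ((1 - h p / p) ^ k - (-(h p / p)) ^ k) := by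
  rw [Hfun, hp.factorization_prod_pow k.add_one_ne_zero]
  ring

theorem Hfun_eq_zero_of_factorization_eq_one {n p : ℕ} (hnp : n.factorization p = 1) :
    Hfun h n = 0 :=
  Finsupp.prod_eq_zero_iff.2 ⟨p, Finsupp.mem_support_iff.2 (by simp [hnp]), by rw [hnp]; ring⟩

theorem Jfun_prime_pow {p α : ℕ} (hp : p.Prime) (hα : α ≠ 0) (s : ℕ) :
    Jfun h (p ^ α) s =
      if p ∣ s then (1 - h p / p) ^ α - (-(h p / p)) ^ α else (-(h p / p)) ^ α := by
  rw [Jfun, hp.factorization_prod_pow hα]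

end

theorem H_J_properties_general (h : ℕ → ℝ)
    (h_nonneg : ∀ d : ℕ, 0 < d → 0 ≤ h d) (h_le : ∀ d : ℕ, 0 < d → h d ≤ (d : ℝ)) :
    -- (a) `H(p) = 0` and `H(n) = 0` unless `n` is squarefull
    (∀ p : ℕ, p.Prime → Hfun h p = 0) ∧
    (∀ n : ℕ, 0 < n → ¬ Squarefull n → Hfun h n = 0) ∧
    -- (b) `|H(p^α)| ≤ H(p²)`
    (∀ p α : ℕ, p.Prime → 1 ≤ α → |Hfun h (p ^ α)| ≤ Hfun h (p ^ 2)) ∧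
    -- (c) `|J(p^α, s)| ≤ 1`, and `|J(p^α, s)| ≤ h(p)/p` when `p ∤ s`
    (∀ p α s : ℕ, p.Prime → 1 ≤ α → 0 < s → |Jfun h (p ^ α) s| ≤ 1) ∧
    (∀ p α s : ℕ, p.Prime → 1 ≤ α → 0 < s → ¬ p ∣ s → |Jfun h (p ^ α) s| ≤ h p / p) := by
  have hx₀ {p : ℕ} (hp : p.Prime) : 0 ≤ h p / p := div_nonneg (h_nonneg p hp.pos) p.cast_nonneg
  have hx₁ {p : ℕ} (hp : p.Prime) : h p / p ≤ 1 :=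
    div_le_one_of_le₀ (h_le p hp.pos) p.cast_nonneg
  have abs_neg_pow {p α : ℕ} (hp : p.Prime) : |(-(h p / p)) ^ α| = (h p / p) ^ α := by
    rw [abs_pow, abs_neg, abs_of_nonneg (hx₀ hp)]
  refine ⟨fun p hp => ?_, fun n hn hsq => ?_, fun p α hp hα => ?_, fun p α s hp hα _ => ?_,
    fun p α s hp hα _ hps => ?_⟩
  · simpa using Hfun_prime_pow_succ h hp 0
  · obtain ⟨p, hnp⟩ := Nat.exists_factorization_eq_one_of_not_squarefull hn.ne' hsq
    exact Hfun_eq_zero_of_factorization_eq_one h hnp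
  · obtain ⟨k, rfl⟩ := Nat.exists_eq_add_of_le' hα
    have hx₀₁ : 0 ≤ h p / p * (1 - h p / p) := mul_nonneg (hx₀ hp) (sub_nonneg.2 (hx₁ hp))
    rw [Hfun_prime_pow_succ h hp, Hfun_prime_pow_succ h hp, abs_mul, abs_of_nonneg hx₀₁]
    calc _ ≤ h p / p * (1 - h p / p) * 1 := mul_le_mul_of_nonneg_left
          (abs_one_sub_pow_sub_neg_pow_le_one (hx₀ hp) (hx₁ hp) k) hx₀₁
      _ = _ := by ring
  · rw [Jfun_prime_pow h hp (by omega)]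
    split_ifs
    · exact abs_one_sub_pow_sub_neg_pow_le_one (hx₀ hp) (hx₁ hp) α
    · rw [abs_neg_pow hp]
      exact pow_le_one₀ (hx₀ hp) (hx₁ hp)
  · rw [Jfun_prime_pow h hp (by omega), if_neg hps, abs_neg_pow hp]
    exact pow_le_of_le_one (hx₀ hp) (hx₁ hp) (by omega)

/-- **Lemma 4.3**: basic properties of `H` and `J`. -/
theorem H_J_properties (h : ℕ → ℝ) (h_one : h 1 = 1)
    (h_mult : ∀ m n : ℕ, Nat.Coprime m n → h (m * n) = h m * h n)
    (h_nonneg : ∀ d : ℕ, 0 < d → 0 ≤ h d) (h_le : ∀ d : ℕ, 0 < d → h d ≤ (d : ℝ)) :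
    -- (a) `H(p) = 0` and `H(n) = 0` unless `n` is squarefull
    (∀ p : ℕ, p.Prime → Hfun h p = 0) ∧
    (∀ n : ℕ, 0 < n → ¬ Squarefull n → Hfun h n = 0) ∧
    -- (b) `|H(p^α)| ≤ H(p²)`
    (∀ p α : ℕ, p.Prime → 1 ≤ α → |Hfun h (p ^ α)| ≤ Hfun h (p ^ 2)) ∧
    -- (c) `|J(p^α, s)| ≤ 1`, and `|J(p^α, s)| ≤ h(p)/p` when `p ∤ s`
    (∀ p α s : ℕ, p.Prime → 1 ≤ α → 0 < s → |Jfun h (p ^ α) s| ≤ 1) ∧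
    (∀ p α s : ℕ, p.Prime → 1 ≤ α → 0 < s → ¬ p ∣ s → |Jfun h (p ^ α) s| ≤ h p / p) :=
  H_J_properties_general h h_nonneg h_le
end
end

section
/- Let h be a multiplicative function with 0 ≤ h(d) ≤ d for all positive integers d. Let r be a positive integer and let R be its largest squarefree divisor. Then Σ_{d | R} f_r(d) · (h(d)/d) · Π_{p | R/d} (1 − h(p)/p) = H(r), where the sum is over the positive divisors d of R and the product is over the primes p dividing R/d. -/
open Finset
open scoped Classical

noncomputable section

/-!
Write `x_p = h(p)/p` and `α_p` for the exponent of `p` in `r`. Expanding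
`H(r) = ∏_{p ∣ r} (x_p (1 - x_p)^α_p + (-x_p)^α_p (1 - x_p))` gives a sum over the sets `S` of
primes of `r` of `∏_{p ∈ S} x_p (1 - x_p)^α_p · ∏_{p ∉ S} (-x_p)^α_p (1 - x_p)`. The divisors `d`
of the squarefree `R` are exactly the products of such sets, and for `d = ∏ S` each of
`f_r(d)`, `h(d)/d` and `∏_{p ∣ R/d} (1 - x_p)` factors prime by prime, their product being the
term of `S`.
-/

namespace Nat

theorem squarefree_prod_primes {s : Finset ℕ} (hs : ∀ p ∈ s, p.Prime) :
    Squarefree (∏ p ∈ s, p) := by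
  refine Finset.squarefree_prod_of_pairwise_isCoprime (fun p hp q hq hpq ↦ ?_)
    fun p hp ↦ (hs p hp).squarefree
  rw [Function.onFun, ← coprime_iff_isRelPrime]
  exact (coprime_primes (hs p hp) (hs q hq)).mpr hpq

theorem apply_eq_prod_primeFactors_of_squarefree {β : Type*} [CommMonoid β] (f : ℕ → β)
    (h_mult : ∀ x y : ℕ, Coprime x y → f (x * y) = f x * f y) (hf : f 1 = 1) {n : ℕ}
    (hn : Squarefree n) : f n = ∏ p ∈ n.primeFactors, f p := by
  rw [multiplicative_factorization f h_mult hf hn.ne_zero, Finsupp.prod, support_factorization]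
  refine prod_congr rfl fun p hp ↦ ?_
  rw [factorization_eq_one_of_squarefree hn (prime_of_mem_primeFactors hp)
    (dvd_of_mem_primeFactors hp), pow_one]

theorem sum_divisors_eq_sum_powerset_primeFactors {M : Type*} [AddCommMonoid M] {n : ℕ}
    (hn : Squarefree n) (F : Finset ℕ → M) :
    ∑ d ∈ n.divisors, F d.primeFactors = ∑ s ∈ n.primeFactors.powerset, F s := by
  refine sum_nbij' primeFactors (fun s ↦ ∏ p ∈ s, p) (fun d hd ↦ ?_) (fun s hs ↦ ?_)
    (fun d hd ↦ ?_) (fun s hs ↦ ?_) fun _ _ ↦ rfl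
  · exact mem_powerset.2 (primeFactors_mono (dvd_of_mem_divisors hd) hn.ne_zero)
  · rw [← prod_primeFactors_of_squarefree hn, mem_divisors]
    exact ⟨prod_dvd_prod_of_subset _ _ _ (mem_powerset.1 hs),
      (squarefree_prod_primes fun p hp ↦ prime_of_mem_primeFactors hp).ne_zero⟩
  · exact prod_primeFactors_of_squarefree (hn.squarefree_of_dvd (dvd_of_mem_divisors hd))
  · exact primeFactors_prod fun p hp ↦ prime_of_mem_primeFactors (mem_powerset.1 hs hp)

end Nat

section

open Nat

theorem squarefree_rad (n : ℕ) : Squarefree (rad n) :=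
  squarefree_prod_primes fun _ ↦ prime_of_mem_primeFactors

theorem primeFactors_rad (n : ℕ) : (rad n).primeFactors = n.primeFactors :=
  primeFactors_prod_primeFactors n

theorem ffun_eq_prod_mul_prod {h : ℕ → ℝ} {r d : ℕ} (hd : d ≠ 0)
    (hdr : d.primeFactors ⊆ r.primeFactors) :
    ffun h r d = (∏ p ∈ d.primeFactors, (1 - h p / p) ^ r.factorization p) *
      ∏ p ∈ r.primeFactors \ d.primeFactors, (-(h p / p)) ^ r.factorization p := by
  rw [ffun, Finsupp.prod, support_factorization, ← inter_eq_right.2 hdr, sdiff_inter_self_left,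
    ← prod_piecewise]
  refine prod_congr rfl fun p hp ↦ ?_
  simp only [piecewise, mem_primeFactors_of_ne_zero hd, prime_of_mem_primeFactors hp, true_and,
    apply_ite (· ^ r.factorization p)]

theorem ffun_mul_div_mul_prod_eq {h : ℕ → ℝ} (h_one : h 1 = 1)
    (h_mult : ∀ m n : ℕ, Coprime m n → h (m * n) = h m * h n) {r d : ℕ} (hd : d ∣ rad r) :
    ffun h r d * (h d / d) * ∏ p ∈ (rad r / d).primeFactors, (1 - h p / p) =
      (∏ p ∈ d.primeFactors, h p / p * (1 - h p / p) ^ r.factorization p) *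
        ∏ p ∈ r.primeFactors \ d.primeFactors,
          (-(h p / p)) ^ r.factorization p * (1 - h p / p) := by
  have hd_sq : Squarefree d := (squarefree_rad r).squarefree_of_dvd hd
  have hdr : d.primeFactors ⊆ r.primeFactors :=
    primeFactors_rad r ▸ primeFactors_mono hd (squarefree_rad r).ne_zero
  have h_div : h d / d = ∏ p ∈ d.primeFactors, h p / p := by
    rw [apply_eq_prod_primeFactors_of_squarefree h h_mult h_one hd_sq, prod_div_distrib,
      ← Nat.cast_prod, prod_primeFactors_of_squarefree hd_sq]
  have h_quot : (rad r / d).primeFactors = r.primeFactors \ d.primeFactors := by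
    have := primeFactors_div_gcd (squarefree_rad r) hd_sq.ne_zero
    rwa [gcd_eq_right hd, primeFactors_rad] at this
  rw [ffun_eq_prod_mul_prod hd_sq.ne_zero hdr, h_div, h_quot, prod_mul_distrib,
    prod_mul_distrib]
  ring

end

theorem H_divisor_identity_general (h : ℕ → ℝ) (h_one : h 1 = 1)
    (h_mult : ∀ m n : ℕ, Nat.Coprime m n → h (m * n) = h m * h n)
    (r : ℕ) :
    ∑ d ∈ (rad r).divisors,
      ffun h r d * (h d / d) * ∏ p ∈ (rad r / d).primeFactors, (1 - h p / p)
    = Hfun h r := by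
  rw [Hfun, Finsupp.prod, Nat.support_factorization, prod_add, ← primeFactors_rad,
    ← Nat.sum_divisors_eq_sum_powerset_primeFactors (squarefree_rad r), primeFactors_rad]
  exact sum_congr rfl fun d hd ↦
    ffun_mul_div_mul_prod_eq h_one h_mult (Nat.dvd_of_mem_divisors hd)

/-- **Lemma 4.4, first identity**: with `R` the largest squarefree divisor of `r`,
`∑_{d ∣ R} f_r(d) (h(d)/d) ∏_{p ∣ R/d} (1 − h(p)/p) = H(r)`. -/
theorem H_divisor_identity (h : ℕ → ℝ) (h_one : h 1 = 1)
    (h_mult : ∀ m n : ℕ, Nat.Coprime m n → h (m * n) = h m * h n)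
    (h_nonneg : ∀ d : ℕ, 0 < d → 0 ≤ h d) (h_le : ∀ d : ℕ, 0 < d → h d ≤ (d : ℝ))
    (r : ℕ) (hr : 0 < r) :
    ∑ d ∈ (rad r).divisors,
      ffun h r d * (h d / d) * ∏ p ∈ (rad r / d).primeFactors, (1 - h p / p)
    = Hfun h r :=
  H_divisor_identity_general h h_one h_mult r
end
end

section
/- Let k be a positive even integer and G > 0. There is a constant C, depending only on k and G, such that the following holds. Let h be a multiplicative function with 0 ≤ h(d) ≤ d, let P be a finite set of primes, and let g₁,…,g_k be strongly additive functions with 0 ≤ g_j(p) ≤ G for all primes p and all 1 ≤ j ≤ k. Set 𝔎 = max_{1≤i,j≤k} |κ^P(g_i,g_j)| and assume 𝔎 ≥ 1. Then |Σ H(p₁···p_k)·g₁(p₁)···g_k(p_k) − (1/(k/2)!)·Σ_{τ ∈ T_k} Π_{j=1}^{k/2} κ^P(g_{Υ₁(j)}, g_{Υ₂(j)})| ≤ C·𝔎^{k/2 − 1}, where the first sum is over all k-tuples (p₁,…,p_k) of primes in P such that p₁···p_k is squarefull and #{p₁,…,p_k} = k/2. -/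
open Finset
open scoped Classical

noncomputable section

def tfun {k l : ℕ} (h : ℕ → ℝ) (g : Fin k → ℕ → ℝ) (τ : Fin k → Fin l) (j : Fin l)
    (x : ℕ) : ℝ :=
  (h x / x * (1 - h x / x)) * ∏ i ∈ Finset.univ.filter (fun i => τ i = j), g i x

def Ffun {k l : ℕ} (h : ℕ → ℝ) (g : Fin k → ℕ → ℝ) (τ : Fin k → Fin l)
    (q : Fin l → ℕ) : ℝ :=
  ∏ j, tfun h g τ j (q j)

section facts
variable {k l : ℕ} (h : ℕ → ℝ) (P : Finset ℕ) (g : Fin k → ℕ → ℝ) (G : ℝ)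

lemma w_bounds (hnn : ∀ d : ℕ, 0 < d → 0 ≤ h d) (hle : ∀ d : ℕ, 0 < d → h d ≤ (d : ℝ))
    {x : ℕ} (hx : x.Prime) : 0 ≤ h x / x * (1 - h x / x) ∧ h x / x * (1 - h x / x) ≤ 1 := by
  have hx0 : (0 : ℝ) < x := by exact_mod_cast hx.pos
  have h1 : 0 ≤ h x / x := div_nonneg (hnn x hx.pos) hx0.le
  have h2 : h x / x ≤ 1 := (div_le_one hx0).mpr (hle x hx.pos)
  constructor <;> nlinarith

lemma tfun_nonneg (hP : ∀ p ∈ P, p.Prime) (hnn : ∀ d : ℕ, 0 < d → 0 ≤ h d)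
    (hle : ∀ d : ℕ, 0 < d → h d ≤ (d : ℝ))
    (hgb : ∀ j, ∀ p : ℕ, p.Prime → 0 ≤ g j p ∧ g j p ≤ G)
    (τ : Fin k → Fin l) (j : Fin l) {x : ℕ} (hx : x ∈ P) : 0 ≤ tfun h g τ j x :=
  mul_nonneg (w_bounds h hnn hle (hP x hx)).1
    (Finset.prod_nonneg fun i _ => (hgb i x (hP x hx)).1)

lemma tfun_le (hP : ∀ p ∈ P, p.Prime) (hnn : ∀ d : ℕ, 0 < d → 0 ≤ h d)
    (hle : ∀ d : ℕ, 0 < d → h d ≤ (d : ℝ)) (hG : 0 < G)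
    (hgb : ∀ j, ∀ p : ℕ, p.Prime → 0 ≤ g j p ∧ g j p ≤ G)
    {τ : Fin k → Fin l} (hτ : TwoToOne τ) (j : Fin l) {x : ℕ} (hx : x ∈ P) :
    tfun h g τ j x ≤ G ^ 2 := by
  have hxp := hP x hx
  have hprod : ∏ i ∈ Finset.univ.filter (fun i => τ i = j), g i x ≤ G ^ 2 := by
    calc ∏ i ∈ Finset.univ.filter (fun i => τ i = j), g i x
        ≤ ∏ _i ∈ Finset.univ.filter (fun i => τ i = j), G :=
          Finset.prod_le_prod (fun i _ => (hgb i x hxp).1) (fun i _ => (hgb i x hxp).2)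
      _ = G ^ 2 := by rw [Finset.prod_const, hτ j]
  have hpn : 0 ≤ ∏ i ∈ Finset.univ.filter (fun i => τ i = j), g i x :=
    Finset.prod_nonneg fun i _ => (hgb i x hxp).1
  have hw := w_bounds h hnn hle hxp
  unfold tfun
  nlinarith

lemma tfun_sum_eq {τ : Fin k → Fin l} (j : Fin l) {a b : Fin k} (hab : a ≠ b)
    (hfil : Finset.univ.filter (fun i => τ i = j) = {a, b}) :
    ∑ x ∈ P, tfun h g τ j x = kappaP h P (g a) (g b) := by
  unfold kappaP
  apply Finset.sum_congr rfl
  intro x _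
  unfold tfun
  rw [hfil, Finset.prod_pair hab]
  ring

lemma tfun_sum_le (K : ℝ) (hKb : ∀ i j : Fin k, |kappaP h P (g i) (g j)| ≤ K)
    {τ : Fin k → Fin l} (hτ : TwoToOne τ) (j : Fin l) :
    ∑ x ∈ P, tfun h g τ j x ≤ K := by
  obtain ⟨a, b, hab, hfil⟩ := Finset.card_eq_two.mp (hτ j)
  rw [tfun_sum_eq h P g j hab hfil]
  exact le_trans (le_abs_self _) (hKb a b)

lemma fiberProd_eq {τ : Fin k → Fin l} (hτ : TwoToOne τ) :
    fiberProd (fun i j => kappaP h P (g i) (g j)) τ =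
      ∑ q ∈ Fintype.piFinset (fun _ : Fin l => P), Ffun h g τ q := by
  unfold fiberProd Ffun
  rw [← Finset.prod_univ_sum]
  apply Finset.prod_congr rfl
  intro j _
  obtain ⟨a, b, hab, hfil⟩ := Finset.card_eq_two.mp (hτ j)
  rw [tfun_sum_eq h P g j hab hfil]
  have hin : ∀ i : Fin k, Finset.univ.filter (fun i' => τ i' = j ∧ i' ≠ i) =
      ({a, b} : Finset (Fin k)).filter (fun i' => i' ≠ i) := by
    intro i
    rw [← Finset.filter_filter, hfil]
  rw [hfil, Finset.sum_pair hab, hin a, hin b]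
  have h1 : ({a, b} : Finset (Fin k)).filter (fun i' => i' ≠ a) = {b} := by
    ext i'; simp only [Finset.mem_filter, Finset.mem_insert, Finset.mem_singleton]
    constructor
    · rintro ⟨h | h, hne⟩
      · exact absurd h hne
      · exact h
    · rintro rfl; exact ⟨Or.inr rfl, hab.symm⟩
  have h2 : ({a, b} : Finset (Fin k)).filter (fun i' => i' ≠ b) = {a} := by
    ext i'; simp only [Finset.mem_filter, Finset.mem_insert, Finset.mem_singleton]
    constructor
    · rintro ⟨h | h, hne⟩
      · exact h
      · exact absurd h hne
    · rintro rfl; exact ⟨Or.inl rfl, hab⟩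
  rw [h1, h2, Finset.sum_singleton, Finset.sum_singleton]
  have hsymm : kappaP h P (g b) (g a) = kappaP h P (g a) (g b) := by
    unfold kappaP; apply Finset.sum_congr rfl; intro x _; ring
  show (kappaP h P (g a) (g b) + kappaP h P (g b) (g a)) / 2 = kappaP h P (g a) (g b)
  rw [hsymm]
  ring

lemma prod_comp_sq {τ : Fin k → Fin l} (hτ : TwoToOne τ) (q : Fin l → ℕ) :
    ∏ i : Fin k, q (τ i) = ∏ j : Fin l, (q j) ^ 2 := by
  rw [← Finset.prod_fiberwise_of_maps_to (fun i _ => Finset.mem_univ (τ i))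
    (fun i => q (τ i))]
  apply Finset.prod_congr rfl
  intro j _
  rw [Finset.prod_congr rfl (fun i hi => by rw [(Finset.mem_filter.mp hi).2]),
    Finset.prod_const, hτ j]

end facts

lemma Hfun_mul (h : ℕ → ℝ) {m n : ℕ} (hm : m ≠ 0) (hn : n ≠ 0) (hmn : m.Coprime n) :
    Hfun h (m * n) = Hfun h m * Hfun h n := by
  unfold Hfun
  rw [Nat.factorization_mul hm hn]
  exact Finsupp.prod_add_index_of_disjoint (by
    rw [Nat.support_factorization, Nat.support_factorization]
    exact Nat.Coprime.disjoint_primeFactors hmn) _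

lemma Hfun_prime_sq (h : ℕ → ℝ) {p : ℕ} (hp : p.Prime) :
    Hfun h (p ^ 2) = h p / p * (1 - h p / p) := by
  unfold Hfun
  rw [hp.factorization_pow, Finsupp.prod_single_index (by ring)]
  ring

lemma Hfun_prod_sq (h : ℕ → ℝ) (Q : Finset ℕ) (hQ : ∀ q ∈ Q, q.Prime) :
    Hfun h (∏ q ∈ Q, q ^ 2) = ∏ q ∈ Q, (h q / q * (1 - h q / q)) := by
  induction Q using Finset.induction_on with
  | empty => simp [Hfun]
  | insert a Q ha ih =>
    have hap : a.Prime := hQ a (mem_insert_self a Q)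
    have hQp : ∀ q ∈ Q, q.Prime := fun q hq => hQ q (mem_insert_of_mem hq)
    have hcop : (a ^ 2).Coprime (∏ q ∈ Q, q ^ 2) := by
      apply Nat.Coprime.pow_left
      apply Nat.Coprime.prod_right
      intro q hq
      exact Nat.Coprime.pow_right _ ((Nat.coprime_primes hap (hQp q hq)).mpr
        (fun he => ha (he ▸ hq)))
    have h1 : (a ^ 2 : ℕ) ≠ 0 := pow_ne_zero _ hap.pos.ne'
    have h2 : (∏ q ∈ Q, q ^ 2 : ℕ) ≠ 0 := by
      apply Finset.prod_ne_zero_iff.mpr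
      intro q hq; exact pow_ne_zero _ (hQp q hq).pos.ne'
    rw [Finset.prod_insert ha, Hfun_mul h h1 h2 hcop, Hfun_prime_sq h hap, ih hQp,
      Finset.prod_insert ha]

lemma sum_le_sum_filter_cover {α ι : Type*} {s : Finset α} {I : Finset ι}
    (f : α → ℝ) (hf : ∀ x ∈ s, 0 ≤ f x) (Q : ι → α → Prop) [∀ i, DecidablePred (Q i)]
    (hcov : ∀ x ∈ s, ∃ i ∈ I, Q i x) :
    ∑ x ∈ s, f x ≤ ∑ i ∈ I, ∑ x ∈ s.filter (fun x => Q i x), f x := by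
  calc ∑ x ∈ s, f x ≤ ∑ x ∈ s, ∑ i ∈ I, if Q i x then f x else 0 := by
        apply Finset.sum_le_sum
        intro x hx
        obtain ⟨i, hi, hQi⟩ := hcov x hx
        refine le_trans ?_ (Finset.single_le_sum
          (f := fun j => if Q j x then f x else 0) (fun j _ => ?_) hi)
        · simp [hQi]
        · by_cases hj : Q j x <;> simp [hj, hf x hx]
    _ = ∑ i ∈ I, ∑ x ∈ s.filter (fun x => Q i x), f x := by
        rw [Finset.sum_comm]
        exact Finset.sum_congr rfl fun i _ => (Finset.sum_filter _ _).symm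

lemma fibers_two (k l : ℕ) (hkl : k = 2 * l) (P : Finset ℕ) (hP : ∀ p ∈ P, p.Prime)
    (p : Fin k → ℕ) (hpP : ∀ i, p i ∈ P) (hsq : Squarefull (∏ i, p i))
    (himg : (Finset.univ.image p).card = l) :
    ∀ q' ∈ Finset.univ.image p, (Finset.univ.filter (fun i => p i = q')).card = 2 := by
  have hge : ∀ q' ∈ Finset.univ.image p,
      2 ≤ (Finset.univ.filter (fun i => p i = q')).card := by
    intro q' hq'
    obtain ⟨i0, -, hi0⟩ := Finset.mem_image.mp hq'
    by_contra hlt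
    push_neg at hlt
    have hmem : i0 ∈ Finset.univ.filter (fun i => p i = q') :=
      Finset.mem_filter.mpr ⟨Finset.mem_univ _, hi0⟩
    have hcard1 : (Finset.univ.filter (fun i => p i = q')).card = 1 := by
      have := Finset.card_pos.mpr ⟨i0, hmem⟩
      omega
    obtain ⟨j0, hj0⟩ := Finset.card_eq_one.mp hcard1
    have hi0j0 : i0 = j0 := by
      rw [hj0] at hmem; exact Finset.mem_singleton.mp hmem
    have hq'p : q'.Prime := hP q' (hi0 ▸ hpP i0)
    have hdvd : q' ∣ ∏ i, p i := hi0 ▸ Finset.dvd_prod_of_mem p (Finset.mem_univ i0)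
    have hsq' := hsq q' hq'p hdvd
    have hsplit : ∏ i, p i = q' * ∏ i ∈ Finset.univ.filter (fun i => ¬ p i = q'), p i := by
      rw [← Finset.prod_filter_mul_prod_filter_not Finset.univ (fun i => p i = q') p]
      congr 1
      rw [hj0, ← hi0j0]
      simp [hi0]
    have hdvd2 : q' ∣ ∏ i ∈ Finset.univ.filter (fun i => ¬ p i = q'), p i := by
      rw [hsplit, pow_two] at hsq'
      exact (mul_dvd_mul_iff_left hq'p.pos.ne').mp hsq'
    obtain ⟨i1, hi1mem, hi1dvd⟩ := hq'p.prime.exists_mem_finset_dvd hdvd2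
    exact (Finset.mem_filter.mp hi1mem).2
      (((Nat.prime_dvd_prime_iff_eq hq'p (hP _ (hpP i1))).mp hi1dvd).symm)
  intro q' hq'
  by_contra hne
  have hsum : ∑ q'' ∈ Finset.univ.image p,
      (Finset.univ.filter (fun i => p i = q'')).card = k := by
    rw [← Finset.card_eq_sum_card_fiberwise
      (fun i _ => Finset.mem_image_of_mem p (Finset.mem_univ i))]
    simp
  have hlt : ∑ _q'' ∈ Finset.univ.image p, 2 < ∑ q'' ∈ Finset.univ.image p,
      (Finset.univ.filter (fun i => p i = q'')).card :=
    Finset.sum_lt_sum (fun q hq => hge q hq)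
      ⟨q', hq', lt_of_le_of_ne (hge q' hq') (Ne.symm hne)⟩
  rw [hsum, Finset.sum_const, smul_eq_mul, himg] at hlt
  omega

lemma fiber_card (k l : ℕ) (hkl : k = 2 * l) (P : Finset ℕ) (hP : ∀ p ∈ P, p.Prime)
    (p : Fin k → ℕ) (hpP : ∀ i, p i ∈ P)
    (himg : (Finset.univ.image p).card = l)
    (hfib2 : ∀ q' ∈ Finset.univ.image p, (Finset.univ.filter (fun i => p i = q')).card = 2) :
    (((Finset.univ.filter (fun τ : Fin k → Fin l => TwoToOne τ)) ×ˢ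
      ((Fintype.piFinset fun _ : Fin l => P).filter Function.Injective)).filter
      (fun x => x.2 ∘ x.1 = p)).card = Nat.factorial l := by
  set Q := Finset.univ.image p with hQdef
  set Fb := (((Finset.univ.filter (fun τ : Fin k → Fin l => TwoToOne τ)) ×ˢ
      ((Fintype.piFinset fun _ : Fin l => P).filter Function.Injective)).filter
      (fun x => x.2 ∘ x.1 = p)) with hFbdef
  have hcardQ : Fintype.card ↥Q = l := by rw [Fintype.card_coe, himg]
  have hQP : ∀ q' ∈ Q, q' ∈ P := by
    intro q' hq'
    obtain ⟨i, -, hi⟩ := Finset.mem_image.mp hq'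
    exact hi ▸ hpP i
  have hFb : ∀ x ∈ Fb, TwoToOne x.1 ∧ (∀ j, x.2 j ∈ P) ∧ Function.Injective x.2 ∧
      x.2 ∘ x.1 = p := by
    intro x hx
    rw [hFbdef] at hx
    simp only [Finset.mem_filter, Finset.mem_product, Finset.mem_univ, true_and,
      Fintype.mem_piFinset] at hx
    exact ⟨hx.1.1, hx.1.2.1, hx.1.2.2, hx.2⟩
  have hmemQ : ∀ x ∈ Fb, ∀ j, x.2 j ∈ Q := by
    intro x hx j
    obtain ⟨h1, h2, h3, h4⟩ := hFb x hx
    have hpos : 0 < (Finset.univ.filter (fun i => x.1 i = j)).card := by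
      rw [h1 j]; norm_num
    obtain ⟨i, hi⟩ := Finset.card_pos.mp hpos
    have : p i = x.2 j := by
      rw [← h4]
      simp [(Finset.mem_filter.mp hi).2]
    exact this ▸ Finset.mem_image_of_mem p (Finset.mem_univ i)
  have main : ∀ x ∈ Fb, ∃ E : Fin l ≃ ↥Q, ∀ j, (E j : ℕ) = x.2 j := by
    intro x hx
    obtain ⟨h1, h2, h3, h4⟩ := hFb x hx
    have hbij : Function.Bijective (fun j => (⟨x.2 j, hmemQ x hx j⟩ : ↥Q)) := by
      rw [Fintype.bijective_iff_injective_and_card]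
      constructor
      · intro a b hab
        exact h3 (congrArg Subtype.val hab)
      · simp [hcardQ]
    exact ⟨Equiv.ofBijective _ hbij, fun j => rfl⟩
  choose toE htoE using main
  set jmap : (Fin l ≃ ↥Q) → (Fin k → Fin l) × (Fin l → ℕ) := fun E =>
    (fun i => E.symm ⟨p i, Finset.mem_image_of_mem p (Finset.mem_univ i)⟩,
     fun j => (E j : ℕ)) with hjmapdef
  have hjmem : ∀ E : Fin l ≃ ↥Q, jmap E ∈ Fb := by
    intro E
    rw [hFbdef]
    simp only [Finset.mem_filter, Finset.mem_product, Finset.mem_univ, true_and,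
      Fintype.mem_piFinset]
    refine ⟨⟨?_, ?_, ?_⟩, ?_⟩
    · intro j
      have he : (Finset.univ.filter (fun i => (jmap E).1 i = j)) =
          (Finset.univ.filter (fun i => p i = (E j : ℕ))) := by
        ext i
        simp only [hjmapdef, Finset.mem_filter, Finset.mem_univ, true_and,
          Equiv.symm_apply_eq, Subtype.ext_iff]
      rw [he]
      exact hfib2 _ (E j).2
    · intro j
      exact hQP _ (E j).2
    · intro a b hab
      exact E.injective (Subtype.ext hab)
    · funext i
      simp [hjmapdef]
  have hleft : ∀ x (hx : x ∈ Fb), jmap (toE x hx) = x := by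
    intro x hx
    obtain ⟨h1, h2, h3, h4⟩ := hFb x hx
    have hq : (jmap (toE x hx)).2 = x.2 := funext fun j => htoE x hx j
    have ht : (jmap (toE x hx)).1 = x.1 := by
      funext i
      simp only [hjmapdef]
      rw [Equiv.symm_apply_eq]
      apply Subtype.ext
      rw [htoE x hx (x.1 i)]
      exact (congrFun h4 i).symm
    exact Prod.ext ht hq
  have hright : ∀ E : Fin l ≃ ↥Q, ∀ (hE : jmap E ∈ Fb), toE (jmap E) hE = E := by
    intro E hE
    apply Equiv.ext
    intro j
    apply Subtype.ext
    rw [htoE (jmap E) hE j]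
  have : Fb.card = (Finset.univ : Finset (Fin l ≃ ↥Q)).card :=
    Finset.card_bij' (fun x hx => toE x hx) (fun E _ => jmap E)
      (fun x hx => Finset.mem_univ _) (fun E _ => hjmem E)
      (fun x hx => hleft x hx) (fun E hE => hright E (hjmem E))
  rw [this, Finset.card_univ, Fintype.card_equiv (Fintype.equivFinOfCardEq hcardQ).symm,
    Fintype.card_fin]

lemma Ffun_eq {k l : ℕ} (h : ℕ → ℝ) (P : Finset ℕ) (hP : ∀ p ∈ P, p.Prime)
    (g : Fin k → ℕ → ℝ) {τ : Fin k → Fin l} (hτ : TwoToOne τ) {q : Fin l → ℕ}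
    (hqP : ∀ j, q j ∈ P) (hinj : Function.Injective q) :
    Ffun h g τ q = Hfun h (∏ i, q (τ i)) * ∏ i, g i (q (τ i)) := by
  have hgprod : ∏ i : Fin k, g i (q (τ i)) =
      ∏ j, ∏ i ∈ Finset.univ.filter (fun i => τ i = j), g i (q j) := by
    rw [← Finset.prod_fiberwise_of_maps_to (fun i _ => Finset.mem_univ (τ i))
      (fun i => g i (q (τ i)))]
    exact Finset.prod_congr rfl fun j _ => Finset.prod_congr rfl fun i hi => by
      rw [(Finset.mem_filter.mp hi).2]
  have hHf : Hfun h (∏ j, (q j) ^ 2) =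
      ∏ j, (h (q j) / (q j) * (1 - h (q j) / (q j))) := by
    have hinj' : ∀ x ∈ Finset.univ, ∀ y ∈ Finset.univ, q x = q y → x = y :=
      fun a _ b _ hab => hinj hab
    have e1 : ∏ y ∈ Finset.univ.image q, y ^ 2 = ∏ j : Fin l, (q j) ^ 2 :=
      Finset.prod_image hinj'
    have e2 : ∏ y ∈ Finset.univ.image q, (h y / y * (1 - h y / y)) =
        ∏ j : Fin l, (h (q j) / (q j) * (1 - h (q j) / (q j))) :=
      Finset.prod_image hinj'
    rw [← e1, Hfun_prod_sq h _ (fun y hy => by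
      obtain ⟨j, -, hj⟩ := Finset.mem_image.mp hy; exact hP _ (hj ▸ hqP j)), e2]
  rw [prod_comp_sq hτ q, hHf, hgprod, ← Finset.prod_mul_distrib]
  rfl

lemma ab_bound {k l : ℕ} (h : ℕ → ℝ) (P : Finset ℕ) (hP : ∀ p ∈ P, p.Prime)
    (hnn : ∀ d : ℕ, 0 < d → 0 ≤ h d) (hle : ∀ d : ℕ, 0 < d → h d ≤ (d : ℝ))
    (g : Fin k → ℕ → ℝ) (G : ℝ) (hG : 0 < G)
    (hgb : ∀ j, ∀ p : ℕ, p.Prime → 0 ≤ g j p ∧ g j p ≤ G)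
    (K : ℝ) (hK1 : 1 ≤ K) (hKb : ∀ i j : Fin k, |kappaP h P (g i) (g j)| ≤ K)
    {τ : Fin k → Fin l} (hτ : TwoToOne τ) {a b : Fin l} (hab : a ≠ b) :
    ∑ q ∈ (Fintype.piFinset fun _ : Fin l => P).filter (fun q => q a = q b),
      Ffun h g τ q ≤ G ^ 2 * K ^ (l - 1) := by
  have hK0 : (0 : ℝ) ≤ K := by linarith
  have hl2 : 2 ≤ l := by
    have := Fintype.one_lt_card_iff.mpr ⟨a, b, hab⟩
    simp at this; omega
  have hbnea : b ≠ a := Ne.symm hab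
  set t' : Fin l → Finset ℕ := fun j => if j = b then {1} else P with ht'def
  set s : Fin l → ℕ → ℝ := fun j x => if j = b then 1 else
    if j = a then tfun h g τ a x * tfun h g τ b x else tfun h g τ j x with hsdef
  have hbmem : b ∈ Finset.univ.erase a := Finset.mem_erase.mpr ⟨hbnea, Finset.mem_univ b⟩
  have hstep : ∑ q ∈ (Fintype.piFinset fun _ : Fin l => P).filter (fun q => q a = q b),
      Ffun h g τ q = ∑ q ∈ Fintype.piFinset t', ∏ j, s j (q j) := by
    apply Finset.sum_nbij' (i := fun q => Function.update q b 1)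
      (j := fun q => Function.update q b (q a))
    · intro q hq
      rw [Finset.mem_filter, Fintype.mem_piFinset] at hq
      rw [Fintype.mem_piFinset]
      intro j
      by_cases hj : j = b
      · subst hj; simp [ht'def]
      · simp [ht'def, hj, Function.update_of_ne hj, hq.1 j]
    · intro q hq
      rw [Fintype.mem_piFinset] at hq
      rw [Finset.mem_filter, Fintype.mem_piFinset]
      have hqa : q a ∈ P := by have := hq a; simpa [ht'def, hab] using this
      refine ⟨fun j => ?_, ?_⟩
      · by_cases hj : j = b
        · subst hj; simp [Function.update_self, hqa]
        · have hj2 := hq j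
          simp only [ht'def, if_neg hj] at hj2
          simp [Function.update_of_ne hj, hj2]
      · rw [Function.update_of_ne hab, Function.update_self]
    · intro q hq
      rw [Finset.mem_filter] at hq
      funext j
      by_cases hj : j = b
      · subst hj
        simp [Function.update_self, Function.update_of_ne hab, hq.2.symm]
      · simp [Function.update_of_ne hj]
    · intro q hq
      rw [Fintype.mem_piFinset] at hq
      have hqb : q b = 1 := by have := hq b; simpa [ht'def] using this
      funext j
      by_cases hj : j = b
      · subst hj; simp [Function.update_self, hqb]
      · simp [Function.update_of_ne hj]
    · intro q hq
      rw [Finset.mem_filter] at hq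
      unfold Ffun
      rw [← Finset.mul_prod_erase Finset.univ _ (Finset.mem_univ a),
          ← Finset.mul_prod_erase _ _ hbmem]
      conv_rhs => rw [← Finset.mul_prod_erase Finset.univ _ (Finset.mem_univ a),
          ← Finset.mul_prod_erase _ _ hbmem]
      have hrest : ∏ j ∈ (Finset.univ.erase a).erase b, tfun h g τ j (q j) =
          ∏ j ∈ (Finset.univ.erase a).erase b, s j ((Function.update q b 1) j) := by
        apply Finset.prod_congr rfl
        intro j hj
        rw [Finset.mem_erase, Finset.mem_erase] at hj
        simp [hsdef, hj.1, hj.2.1, Function.update_of_ne hj.1]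
      rw [hrest]
      have h1 : s a ((Function.update q b 1) a) =
          tfun h g τ a (q a) * tfun h g τ b (q a) := by
        simp [hsdef, hab, Function.update_of_ne hab]
      have h2 : s b ((Function.update q b 1) b) = (1 : ℝ) := by simp [hsdef]
      rw [h1, h2, ← hq.2]
      ring
  rw [hstep, ← Finset.prod_univ_sum,
    ← Finset.mul_prod_erase Finset.univ _ (Finset.mem_univ a),
    ← Finset.mul_prod_erase _ _ hbmem]
  have hfa : ∑ x ∈ t' a, s a x ≤ G ^ 2 * K := by
    have hCa : t' a = P := by simp [ht'def, hab]
    rw [hCa]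
    calc ∑ x ∈ P, s a x = ∑ x ∈ P, tfun h g τ a x * tfun h g τ b x := by
          apply Finset.sum_congr rfl; intro x _; simp [hsdef, hab]
      _ ≤ ∑ x ∈ P, G ^ 2 * tfun h g τ b x := Finset.sum_le_sum fun x hx =>
          mul_le_mul_of_nonneg_right (tfun_le h P g G hP hnn hle hG hgb hτ a hx)
            (tfun_nonneg h P g G hP hnn hle hgb τ b hx)
      _ = G ^ 2 * ∑ x ∈ P, tfun h g τ b x := (Finset.mul_sum _ _ _).symm
      _ ≤ G ^ 2 * K := mul_le_mul_of_nonneg_left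
          (tfun_sum_le h P g K hKb hτ b) (by positivity)
  have hfb : ∑ x ∈ t' b, s b x = 1 := by simp [ht'def, hsdef]
  have hsum_nonneg : ∀ j ∈ (Finset.univ.erase a).erase b, 0 ≤ ∑ x ∈ t' j, s j x := by
    intro j hj
    rw [Finset.mem_erase, Finset.mem_erase] at hj
    have hCj : t' j = P := by simp [ht'def, hj.1]
    rw [hCj]
    apply Finset.sum_nonneg
    intro x hx
    simp only [hsdef, if_neg hj.1, if_neg hj.2.1]
    exact tfun_nonneg h P g G hP hnn hle hgb τ j hx
  have hrest : ∏ j ∈ (Finset.univ.erase a).erase b, ∑ x ∈ t' j, s j x ≤ K ^ (l - 2) := by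
    have hcard : ((Finset.univ.erase a).erase b).card = l - 2 := by
      rw [Finset.card_erase_of_mem hbmem, Finset.card_erase_of_mem (Finset.mem_univ a),
        Finset.card_univ, Fintype.card_fin]
      omega
    calc ∏ j ∈ (Finset.univ.erase a).erase b, ∑ x ∈ t' j, s j x
        ≤ ∏ _j ∈ (Finset.univ.erase a).erase b, K := by
          apply Finset.prod_le_prod hsum_nonneg
          intro j hj
          rw [Finset.mem_erase, Finset.mem_erase] at hj
          have hCj : t' j = P := by simp [ht'def, hj.1]
          rw [hCj]
          calc ∑ x ∈ P, s j x = ∑ x ∈ P, tfun h g τ j x := by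
                apply Finset.sum_congr rfl; intro x _
                simp [hsdef, hj.1, hj.2.1]
            _ ≤ K := tfun_sum_le h P g K hKb hτ j
      _ = K ^ (l - 2) := by rw [Finset.prod_const, hcard]
  have hrest0 : 0 ≤ ∏ j ∈ (Finset.univ.erase a).erase b, ∑ x ∈ t' j, s j x :=
    Finset.prod_nonneg hsum_nonneg
  calc (∑ x ∈ t' a, s a x) * ((∑ x ∈ t' b, s b x) *
        ∏ j ∈ (Finset.univ.erase a).erase b, ∑ x ∈ t' j, s j x)
      = (∑ x ∈ t' a, s a x) * ∏ j ∈ (Finset.univ.erase a).erase b, ∑ x ∈ t' j, s j x := by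
        rw [hfb, one_mul]
    _ ≤ (G ^ 2 * K) * K ^ (l - 2) := by
        apply mul_le_mul hfa hrest hrest0 (by positivity)
    _ = G ^ 2 * K ^ (l - 1) := by
        have : l - 2 + 1 = l - 1 := by omega
        rw [mul_assoc, ← pow_succ', this]

set_option maxHeartbeats 2000000 in
/-- **Lemma 5.2**: the paired-off sum over `k`-tuples of primes of `P` whose product is
squarefull with exactly `k/2` distinct primes equals
`(1/(k/2)!) ∑_{τ ∈ T_k} ∏_j κ^P(g_{Υ₁(j)}, g_{Υ₂(j)}) + O(𝔎^{k/2 − 1})`. -/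
theorem paired_off_lemma (k : ℕ) (hk : 0 < k) (hke : Even k) (G : ℝ) (hG : 0 < G) :
    ∃ C : ℝ, ∀ (h : ℕ → ℝ), h 1 = 1 →
      (∀ m n : ℕ, Nat.Coprime m n → h (m * n) = h m * h n) →
      (∀ d : ℕ, 0 < d → 0 ≤ h d) → (∀ d : ℕ, 0 < d → h d ≤ (d : ℝ)) →
      ∀ (P : Finset ℕ), (∀ p ∈ P, p.Prime) →
      ∀ g : Fin k → ℕ → ℝ, (∀ j, StronglyAdditive (g j)) →
      (∀ j, ∀ p : ℕ, p.Prime → 0 ≤ g j p ∧ g j p ≤ G) →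
      ∀ K : ℝ,
      (∀ i j : Fin k, |kappaP h P (g i) (g j)| ≤ K) →
      (∃ i j : Fin k, K = |kappaP h P (g i) (g j)|) →
      1 ≤ K →
      |(∑ p ∈ (Fintype.piFinset fun _ : Fin k => P).filter
          (fun p : Fin k → ℕ =>
            Squarefull (∏ i : Fin k, p i) ∧ 2 * (Finset.univ.image p).card = k),
          Hfun h (∏ i : Fin k, p i) * ∏ i : Fin k, g i (p i))
        - (1 : ℝ) / (Nat.factorial (k / 2) : ℝ) *
            ∑ τ ∈ Finset.univ.filter (fun τ : Fin k → Fin (k / 2) => TwoToOne τ),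
              fiberProd (fun i j => kappaP h P (g i) (g j)) τ|
      ≤ C * K ^ ((k : ℝ) / 2 - 1) := by
  obtain ⟨m, hm⟩ := hke
  set l := k / 2 with hldef
  have hkl : k = 2 * l := by omega
  have hl1 : 1 ≤ l := by omega
  refine ⟨((Finset.univ : Finset (Fin k → Fin l)).card : ℝ) * (k : ℝ) ^ 2 * G ^ 2, ?_⟩
  intro h _h1 _hmult hnn hle P hP g _hgsa hgb K hKb _hKex hK1
  have hK0 : (0 : ℝ) ≤ K := by linarith
  set T' := Finset.univ.filter (fun τ : Fin k → Fin l => TwoToOne τ) with hT'def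
  set Pi := Fintype.piFinset (fun _ : Fin l => P) with hPidef
  set Inj := Pi.filter Function.Injective with hInjdef
  set S := (Fintype.piFinset fun _ : Fin k => P).filter
      (fun p : Fin k → ℕ =>
        Squarefull (∏ i : Fin k, p i) ∧ 2 * (Finset.univ.image p).card = k) with hSdef
  -- basic facts
  have hF0 : ∀ τ : Fin k → Fin l, ∀ q ∈ Pi, 0 ≤ Ffun h g τ q := by
    intro τ q hq
    exact Finset.prod_nonneg fun j _ =>
      tfun_nonneg h P g G hP hnn hle hgb τ j (Fintype.mem_piFinset.mp hq j)
  have hmaps : ∀ x ∈ T' ×ˢ Inj, x.2 ∘ x.1 ∈ S := by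
    intro x hx
    obtain ⟨hx1, hx2⟩ := Finset.mem_product.mp hx
    have hτ : TwoToOne x.1 := (Finset.mem_filter.mp hx1).2
    have hx2' := Finset.mem_filter.mp hx2
    have hqP : ∀ j, x.2 j ∈ P := Fintype.mem_piFinset.mp hx2'.1
    have hinj : Function.Injective x.2 := hx2'.2
    rw [hSdef, Finset.mem_filter, Fintype.mem_piFinset]
    refine ⟨fun i => hqP (x.1 i), ?_, ?_⟩
    · have hpp : (∏ i, (x.2 ∘ x.1) i) = ∏ j, (x.2 j) ^ 2 := prod_comp_sq hτ x.2
      rw [hpp]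
      intro r hr hrd
      obtain ⟨j, -, hj⟩ := hr.prime.exists_mem_finset_dvd hrd
      have hrq : r = x.2 j := (Nat.prime_dvd_prime_iff_eq hr (hP _ (hqP j))).mp
        (hr.prime.dvd_of_dvd_pow hj)
      rw [hrq]
      exact Finset.dvd_prod_of_mem (fun j => (x.2 j) ^ 2) (Finset.mem_univ j)
    · have himg : Finset.univ.image (x.2 ∘ x.1) = Finset.univ.image x.2 := by
        ext y
        simp only [Finset.mem_image, Finset.mem_univ, true_and, Function.comp_apply]
        constructor
        · rintro ⟨i, hi⟩; exact ⟨x.1 i, hi⟩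
        · rintro ⟨j, hj⟩
          have hpos : 0 < (Finset.univ.filter (fun i => x.1 i = j)).card := by
            rw [hτ j]; norm_num
          obtain ⟨i, hi⟩ := Finset.card_pos.mp hpos
          exact ⟨i, by rw [(Finset.mem_filter.mp hi).2, hj]⟩
      rw [himg, Finset.card_image_of_injective _ hinj, Finset.card_univ, Fintype.card_fin]
      omega
  have hcount : ∀ p' ∈ S, ((T' ×ˢ Inj).filter (fun x => x.2 ∘ x.1 = p')).card
      = Nat.factorial l := by
    intro p' hp'
    have hp'' := Finset.mem_filter.mp hp'
    have hp'P : ∀ i, p' i ∈ P := Fintype.mem_piFinset.mp hp''.1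
    have himg : (Finset.univ.image p').card = l := by
      have := hp''.2.2; omega
    exact fiber_card k l hkl P hP p' hp'P himg
      (fibers_two k l hkl P hP p' hp'P hp''.2.1 himg)
  have hkey : ∑ τ ∈ T', ∑ q ∈ Inj, Ffun h g τ q =
      (Nat.factorial l : ℝ) * ∑ p' ∈ S, (Hfun h (∏ i, p' i) * ∏ i, g i (p' i)) := by
    calc ∑ τ ∈ T', ∑ q ∈ Inj, Ffun h g τ q
        = ∑ x ∈ T' ×ˢ Inj, Ffun h g x.1 x.2 :=
          (Finset.sum_product T' Inj (fun z => Ffun h g z.1 z.2)).symm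
      _ = ∑ p' ∈ S, ∑ x ∈ (T' ×ˢ Inj).filter (fun x => x.2 ∘ x.1 = p'),
            Ffun h g x.1 x.2 :=
          (Finset.sum_fiberwise_of_maps_to hmaps _).symm
      _ = ∑ p' ∈ S, (Nat.factorial l : ℝ) * (Hfun h (∏ i, p' i) * ∏ i, g i (p' i)) := by
          apply Finset.sum_congr rfl
          intro p' hp'
          have hval : ∀ x ∈ (T' ×ˢ Inj).filter (fun x => x.2 ∘ x.1 = p'),
              Ffun h g x.1 x.2 = Hfun h (∏ i, p' i) * ∏ i, g i (p' i) := by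
            intro x hx
            obtain ⟨hxm, hxe⟩ := Finset.mem_filter.mp hx
            obtain ⟨hx1, hx2⟩ := Finset.mem_product.mp hxm
            have hτ : TwoToOne x.1 := (Finset.mem_filter.mp hx1).2
            have hqP : ∀ j, x.2 j ∈ P :=
              Fintype.mem_piFinset.mp (Finset.mem_filter.mp hx2).1
            have hinj : Function.Injective x.2 := (Finset.mem_filter.mp hx2).2
            rw [Ffun_eq h P hP g hτ hqP hinj, ← hxe]
            rfl
          rw [Finset.sum_congr rfl hval, Finset.sum_const, hcount p' hp',
            nsmul_eq_mul]
      _ = (Nat.factorial l : ℝ) * ∑ p' ∈ S, (Hfun h (∏ i, p' i) * ∏ i, g i (p' i)) :=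
          (Finset.mul_sum _ _ _).symm
  have hB : ∑ τ ∈ T', fiberProd (fun i j => kappaP h P (g i) (g j)) τ =
      ∑ τ ∈ T', ∑ q ∈ Pi, Ffun h g τ q :=
    Finset.sum_congr rfl fun τ hτ' => fiberProd_eq h P g (Finset.mem_filter.mp hτ').2
  have hNI : ∀ τ ∈ T', ∑ q ∈ Pi.filter (fun q => ¬ Function.Injective q), Ffun h g τ q
      ≤ (k : ℝ) ^ 2 * (G ^ 2 * K ^ (l - 1)) := by
    intro τ hτ'
    have hτ : TwoToOne τ := (Finset.mem_filter.mp hτ').2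
    have hGK0 : (0 : ℝ) ≤ G ^ 2 * K ^ (l - 1) :=
      mul_nonneg (by positivity) (pow_nonneg hK0 _)
    calc ∑ q ∈ Pi.filter (fun q => ¬ Function.Injective q), Ffun h g τ q
        ≤ ∑ ab ∈ (Finset.univ : Finset (Fin l)).offDiag,
            ∑ q ∈ (Pi.filter (fun q => ¬ Function.Injective q)).filter
              (fun q => q ab.1 = q ab.2), Ffun h g τ q := by
          apply sum_le_sum_filter_cover
          · intro q hq
            exact hF0 τ q (Finset.mem_filter.mp hq).1
          · intro q hq
            have hni := (Finset.mem_filter.mp hq).2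
            rw [Function.Injective] at hni
            push_neg at hni
            obtain ⟨a, b, hab, hne⟩ := hni
            exact ⟨(a, b), Finset.mem_offDiag.mpr
              ⟨Finset.mem_univ _, Finset.mem_univ _, hne⟩, hab⟩
      _ ≤ ∑ ab ∈ (Finset.univ : Finset (Fin l)).offDiag,
            ∑ q ∈ Pi.filter (fun q => q ab.1 = q ab.2), Ffun h g τ q := by
          apply Finset.sum_le_sum
          intro ab _
          apply Finset.sum_le_sum_of_subset_of_nonneg
          · intro q hq
            rw [Finset.mem_filter] at hq ⊢
            exact ⟨(Finset.mem_filter.mp hq.1).1, hq.2⟩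
          · intro q hq _
            exact hF0 τ q (Finset.mem_filter.mp hq).1
      _ ≤ ∑ ab ∈ (Finset.univ : Finset (Fin l)).offDiag, G ^ 2 * K ^ (l - 1) :=
          Finset.sum_le_sum fun ab hab =>
            ab_bound h P hP hnn hle g G hG hgb K hK1 hKb hτ
              (Finset.mem_offDiag.mp hab).2.2
      _ = ((Finset.univ : Finset (Fin l)).offDiag.card : ℝ) * (G ^ 2 * K ^ (l - 1)) := by
          rw [Finset.sum_const, nsmul_eq_mul]
      _ ≤ (k : ℝ) ^ 2 * (G ^ 2 * K ^ (l - 1)) := by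
          apply mul_le_mul_of_nonneg_right _ hGK0
          have hnat : (Finset.univ : Finset (Fin l)).offDiag.card ≤ k ^ 2 := by
            rw [Finset.offDiag_card, Finset.card_univ, Fintype.card_fin]
            have hlk : l ≤ k := by omega
            calc l * l - l ≤ l * l := Nat.sub_le _ _
              _ ≤ k * k := Nat.mul_le_mul hlk hlk
              _ = k ^ 2 := (sq k).symm
          exact_mod_cast hnat
  -- assembly
  set A := ∑ p' ∈ S, (Hfun h (∏ i, p' i) * ∏ i, g i (p' i)) with hAdef
  set D := ∑ τ ∈ T', ∑ q ∈ Pi.filter (fun q => ¬ Function.Injective q), Ffun h g τ q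
    with hDdef
  have hD0 : 0 ≤ D :=
    Finset.sum_nonneg fun τ _ => Finset.sum_nonneg fun q hq =>
      hF0 τ q (Finset.mem_filter.mp hq).1
  have hfac0 : (0 : ℝ) < (Nat.factorial l : ℝ) := by
    exact_mod_cast Nat.factorial_pos l
  have hfac1 : (1 : ℝ) ≤ (Nat.factorial l : ℝ) := by
    exact_mod_cast Nat.one_le_iff_ne_zero.mpr (Nat.factorial_pos l).ne'
  have hsplit : ∑ τ ∈ T', ∑ q ∈ Pi, Ffun h g τ q =
      ∑ τ ∈ T', ∑ q ∈ Inj, Ffun h g τ q + D := by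
    rw [hDdef, ← Finset.sum_add_distrib]
    apply Finset.sum_congr rfl
    intro τ _
    rw [hInjdef]
    exact (Finset.sum_filter_add_sum_filter_not Pi Function.Injective _).symm
  have hdiff : A - 1 / (Nat.factorial l : ℝ) *
      (∑ τ ∈ T', fiberProd (fun i j => kappaP h P (g i) (g j)) τ) =
      -(1 / (Nat.factorial l : ℝ)) * D := by
    rw [hB, hsplit, hkey]
    field_simp
    ring
  have hexp : K ^ ((k : ℝ) / 2 - 1) = K ^ (l - 1) := by
    rw [← Real.rpow_natCast K (l - 1)]
    congr 1
    have hc : ((l - 1 : ℕ) : ℝ) = (l : ℝ) - 1 := by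
      push_cast [Nat.cast_sub hl1]
      ring
    rw [hc, hkl]
    push_cast
    ring
  have hrhs0 : (0:ℝ) ≤ (k : ℝ) ^ 2 * (G ^ 2 * K ^ (l - 1)) :=
    mul_nonneg (by positivity) (mul_nonneg (by positivity) (pow_nonneg hK0 _))
  calc |A - 1 / (Nat.factorial l : ℝ) *
        (∑ τ ∈ T', fiberProd (fun i j => kappaP h P (g i) (g j)) τ)|
      = 1 / (Nat.factorial l : ℝ) * D := by
        rw [hdiff, neg_mul, abs_neg, abs_mul, abs_of_pos (by positivity : (0:ℝ) < 1 / (Nat.factorial l : ℝ)), abs_of_nonneg hD0]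
    _ ≤ 1 * D := mul_le_mul_of_nonneg_right ((div_le_one hfac0).mpr hfac1) hD0
    _ = D := one_mul D
    _ ≤ ∑ _τ ∈ T', (k : ℝ) ^ 2 * (G ^ 2 * K ^ (l - 1)) := Finset.sum_le_sum hNI
    _ = (T'.card : ℝ) * ((k : ℝ) ^ 2 * (G ^ 2 * K ^ (l - 1))) := by
        rw [Finset.sum_const, nsmul_eq_mul]
    _ ≤ ((Finset.univ : Finset (Fin k → Fin l)).card : ℝ) *
          ((k : ℝ) ^ 2 * (G ^ 2 * K ^ (l - 1))) := by
        apply mul_le_mul_of_nonneg_right _ hrhs0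
        exact_mod_cast Finset.card_filter_le _ _
    _ = ((Finset.univ : Finset (Fin k → Fin l)).card : ℝ) * (k : ℝ) ^ 2 * G ^ 2 *
          K ^ (l - 1) := by ring
    _ = ((Finset.univ : Finset (Fin k → Fin l)).card : ℝ) * (k : ℝ) ^ 2 * G ^ 2 *
          K ^ ((k : ℝ) / 2 - 1) := by rw [hexp]
end
end

section
/- Let k ≥ 2 be an integer and G > 0. There is a constant C, depending only on k and G, such that the following holds. Let h be a multiplicative function with 0 ≤ h(d) ≤ d, let P be a finite set of primes, and let g₁,…,g_k be strongly additive functions with 0 ≤ g_j(p) ≤ G for all primes p and all 1 ≤ j ≤ k. Set 𝔎 = max_{1≤i,j≤k} |κ^P(g_i,g_j)| and assume 𝔎 ≥ 1. Then |Σ H(p₁···p_k)·g₁(p₁)···g_k(p_k)| ≤ C·𝔎^{k/2 − 1} if k is even, and |Σ H(p₁···p_k)·g₁(p₁)···g_k(p_k)| ≤ C·𝔎^{(k−1)/2} if k is odd, where in both cases the sum is over all k-tuples (p₁,…,p_k) of primes in P such that p₁···p_k is squarefull and #{p₁,…,p_k} < k/2. -/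
open Finset
open scoped Classical

noncomputable section

/-!
Sort the tuples by their pattern of coincidences, recorded as the map `firstIndex p` sending
each index to the first index carrying the same prime; there are at most `k ^ k` patterns.
In a squarefull product every prime occurs at least twice, so each local factor of `H` has
absolute value at most `x (1 - x)` with `x = h(q)/q`, and each of the `m < k/2` distinct primes
can be charged to two different indices `j ≠ b j` carrying it, the other `g`-factors being at
most `max 1 G`. For a fixed pattern the sum over tuples is then at most
`∏ⱼ κ^P(g_j, g_{b j}) ≤ 𝔎 ^ m`.
-/

theorem abs_mul_one_sub_pow_add_neg_pow_mul_le {x : ℝ} (hx₀ : 0 ≤ x) (hx₁ : x ≤ 1) {α : ℕ}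
    (hα : 2 ≤ α) : |x * (1 - x) ^ α + (-x) ^ α * (1 - x)| ≤ x * (1 - x) := by
  obtain ⟨β, rfl⟩ : ∃ β, α = β + 2 := ⟨α - 2, by omega⟩
  have hy₀ : 0 ≤ 1 - x := by linarith
  have hsum : (1 - x) ^ (β + 1) + x ^ (β + 1) ≤ 1 := by
    have hy : (1 - x) ^ (β + 1) ≤ 1 - x := pow_le_of_le_one hy₀ (by linarith) β.succ_ne_zero
    have hx : x ^ (β + 1) ≤ x := pow_le_of_le_one hx₀ hx₁ β.succ_ne_zero
    linarith
  calc |x * (1 - x) ^ (β + 2) + (-x) ^ (β + 2) * (1 - x)|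
      ≤ x * (1 - x) ^ (β + 2) + x ^ (β + 2) * (1 - x) := by
        refine (abs_add_le _ _).trans_eq ?_
        rw [abs_mul, abs_mul, abs_pow, abs_pow, abs_neg, abs_of_nonneg hx₀, abs_of_nonneg hy₀]
    _ = x * (1 - x) * ((1 - x) ^ (β + 1) + x ^ (β + 1)) := by ring
    _ ≤ x * (1 - x) := mul_le_of_le_one_right (mul_nonneg hx₀ hy₀) hsum

section PrimeTuples

variable {ι : Type*} [Fintype ι] {p : ι → ℕ}

theorem factorization_prod_primes (hp : ∀ i, (p i).Prime) (q : ℕ) :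
    (∏ i, p i).factorization q = #(univ.filter fun i => p i = q) := by
  rw [Nat.factorization_prod fun i _ => (hp i).ne_zero, Finset.sum_apply', card_filter]
  refine sum_congr rfl fun i _ => ?_
  rw [(hp i).factorization, Finsupp.single_apply]

theorem Hfun_prod_primes (h : ℕ → ℝ) (hp : ∀ i, (p i).Prime) :
    Hfun h (∏ i, p i) = ∏ q ∈ univ.image p,
      (h q / q * (1 - h q / q) ^ #(univ.filter fun i => p i = q)
        + (-(h q / q)) ^ #(univ.filter fun i => p i = q) * (1 - h q / q)) := by
  rw [Hfun, Finsupp.prod_of_support_subset _ ?_ _ fun q _ => by simp]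
  · exact prod_congr rfl fun q _ => by rw [factorization_prod_primes hp q]
  intro q hq
  obtain ⟨hq, hdvd, -⟩ := Nat.mem_primeFactors.mp (Nat.support_factorization _ ▸ hq)
  obtain ⟨i, -, hi⟩ := hq.prime.exists_mem_finset_dvd hdvd
  exact mem_image.mpr ⟨i, mem_univ i, ((Nat.prime_dvd_prime_iff_eq hq (hp i)).mp hi).symm⟩

theorem two_le_card_filter_of_squarefull (hp : ∀ i, (p i).Prime)
    (hsq : Squarefull (∏ i, p i)) (j : ι) : 2 ≤ #(univ.filter fun i => p i = p j) := by
  rw [← factorization_prod_primes hp, ← (hp j).pow_dvd_iff_le_factorization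
    (prod_ne_zero_iff.mpr fun i _ => (hp i).ne_zero)]
  exact hsq _ (hp j) (dvd_prod_of_mem _ (mem_univ j))

theorem abs_Hfun_prod_le {h : ℕ → ℝ} (hp : ∀ i, (p i).Prime) (hsq : Squarefull (∏ i, p i))
    (hh : ∀ i, 0 ≤ h (p i) / p i ∧ h (p i) / p i ≤ 1) :
    |Hfun h (∏ i, p i)| ≤ ∏ q ∈ univ.image p, h q / q * (1 - h q / q) := by
  rw [Hfun_prod_primes h hp, abs_prod]
  refine prod_le_prod (fun _ _ => abs_nonneg _) fun q hq => ?_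
  obtain ⟨j, -, rfl⟩ := mem_image.mp hq
  exact abs_mul_one_sub_pow_add_neg_pow_mul_le (hh j).1 (hh j).2
    (two_le_card_filter_of_squarefull hp hsq j)

end PrimeTuples

section FirstIndex

variable {ι α : Type*} [Fintype ι] [LinearOrder ι] [DecidableEq α]

def firstIndex (p : ι → α) (i : ι) : ι :=
  (univ.filter fun i' => p i' = p i).min' ⟨i, mem_filter.mpr ⟨mem_univ i, rfl⟩⟩

def firstIndices (p : ι → α) : Finset ι :=
  univ.filter fun j => firstIndex p j = j

variable (p : ι → α)

theorem apply_firstIndex (i : ι) : p (firstIndex p i) = p i :=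
  (mem_filter.mp (min'_mem (univ.filter fun i' => p i' = p i) _)).2

theorem firstIndex_eq_firstIndex_iff {i i' : ι} :
    firstIndex p i = firstIndex p i' ↔ p i = p i' :=
  ⟨fun h => by rw [← apply_firstIndex p i, h, apply_firstIndex p i'],
    fun h => by simp only [firstIndex, h]⟩

theorem firstIndex_firstIndex (i : ι) : firstIndex p (firstIndex p i) = firstIndex p i :=
  (firstIndex_eq_firstIndex_iff p).mpr (apply_firstIndex p i)

theorem mem_firstIndices {j : ι} : j ∈ firstIndices p ↔ firstIndex p j = j := by
  simp [firstIndices]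

theorem firstIndex_mem_firstIndices (i : ι) : firstIndex p i ∈ firstIndices p :=
  (mem_firstIndices p).mpr (firstIndex_firstIndex p i)

theorem injOn_firstIndices : Set.InjOn p (firstIndices p) := fun j hj j' hj' h => by
  rw [← (mem_firstIndices p).mp hj, ← (mem_firstIndices p).mp hj',
    (firstIndex_eq_firstIndex_iff p).mpr h]

theorem image_firstIndices : (firstIndices p).image p = univ.image p :=
  (image_subset_image (subset_univ _)).antisymm fun q hq => by
    obtain ⟨i, -, rfl⟩ := mem_image.mp hq
    exact mem_image.mpr ⟨firstIndex p i, firstIndex_mem_firstIndices p i, apply_firstIndex p i⟩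

theorem card_firstIndices : #(firstIndices p) = #(univ.image p) := by
  rw [← image_firstIndices, card_image_of_injOn (injOn_firstIndices p)]

theorem eq_of_firstIndex_eq {p' : ι → α} (h : firstIndex p = firstIndex p')
    (heq : ∀ j ∈ firstIndices p, p j = p' j) : p = p' := by
  funext i
  rw [← apply_firstIndex p, ← apply_firstIndex p', ← h]
  exact heq _ (firstIndex_mem_firstIndices p i)

theorem exists_other_index_of_two_le_card (hp : ∀ j, 2 ≤ #(univ.filter fun i => p i = p j)) :
    ∃ b : ι → ι, ∀ j ∈ firstIndices p, firstIndex p (b j) = j ∧ b j ≠ j := by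
  have (j : ι) : ∃ i, j ∈ firstIndices p → firstIndex p i = j ∧ i ≠ j := by
    obtain ⟨i, hi, hij⟩ := exists_mem_ne (hp j) j
    refine ⟨i, fun hj => ⟨?_, hij⟩⟩
    rw [(firstIndex_eq_firstIndex_iff p).mpr (mem_filter.mp hi).2, (mem_firstIndices p).mp hj]
  choose b hb using this
  exact ⟨b, hb⟩

end FirstIndex

theorem prod_le_mul_mul_pow_card_sub_two {ι : Type*} {s : Finset ι} {c : ι → ℝ} {M : ℝ}
    {a b : ι} (ha : a ∈ s) (hb : b ∈ s) (hab : b ≠ a) (hc₀ : ∀ i ∈ s, 0 ≤ c i)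
    (hcM : ∀ i ∈ s, c i ≤ M) : ∏ i ∈ s, c i ≤ c a * c b * M ^ (#s - 2) := by
  have hb' : b ∈ s.erase a := mem_erase.mpr ⟨hab, hb⟩
  have hcard : #((s.erase a).erase b) = #s - 2 := by
    rw [card_erase_of_mem hb', card_erase_of_mem ha, Nat.sub_sub]
  rw [← mul_prod_erase _ _ ha, ← mul_prod_erase _ _ hb', ← mul_assoc, ← hcard, ← prod_const]
  refine mul_le_mul_of_nonneg_left (prod_le_prod (fun i hi => hc₀ i ?_) fun i hi => hcM i ?_)
    (mul_nonneg (hc₀ a ha) (hc₀ b hb)) <;> exact mem_of_mem_erase (mem_of_mem_erase hi)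

theorem prod_le_pow_card_mul_prod_pairs {ι : Type*} [Fintype ι] {c : ι → ℝ} {M : ℝ}
    (hc₀ : ∀ i, 0 ≤ c i) (hcM : ∀ i, c i ≤ M) (hM : 1 ≤ M) {σ b : ι → ι} {R : Finset ι}
    (hσ : ∀ i, σ i ∈ R) (hR : ∀ j ∈ R, σ j = j) (hb : ∀ j ∈ R, σ (b j) = j ∧ b j ≠ j) :
    ∏ i, c i ≤ M ^ Fintype.card ι * ∏ j ∈ R, c j * c (b j) := by
  have hfibre : ∀ j ∈ R, ∏ i ∈ univ.filter (fun i => σ i = j), c i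
      ≤ c j * c (b j) * M ^ #(univ.filter fun i => σ i = j) := fun j hj =>
    (prod_le_mul_mul_pow_card_sub_two (by simp [hR j hj]) (by simp [(hb j hj).1]) (hb j hj).2
      (fun i _ => hc₀ i) fun i _ => hcM i).trans <|
      mul_le_mul_of_nonneg_left (pow_le_pow_right₀ hM (Nat.sub_le _ _))
        (mul_nonneg (hc₀ _) (hc₀ _))
  calc ∏ i, c i = ∏ j ∈ R, ∏ i ∈ univ.filter (fun i => σ i = j), c i :=
        (prod_fiberwise_of_maps_to (fun i _ => hσ i) c).symm
    _ ≤ ∏ j ∈ R, (c j * c (b j) * M ^ #(univ.filter fun i => σ i = j)) :=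
        prod_le_prod (fun j _ => prod_nonneg fun i _ => hc₀ i) hfibre
    _ = M ^ Fintype.card ι * ∏ j ∈ R, c j * c (b j) := by
        rw [prod_mul_distrib, prod_pow_eq_pow_sum, ← card_eq_sum_card_fiberwise fun i _ => hσ i,
          card_univ, mul_comm]

theorem sum_prod_le_prod_sum {ι α : Type*} {A : Finset (ι → α)} {R : Finset ι} {s : Finset α}
    {F : ι → α → ℝ} (hF : ∀ j ∈ R, ∀ x ∈ s, 0 ≤ F j x) (hA : ∀ p ∈ A, ∀ j ∈ R, p j ∈ s)
    (hinj : ∀ p ∈ A, ∀ p' ∈ A, (∀ j ∈ R, p j = p' j) → p = p') :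
    ∑ p ∈ A, ∏ j ∈ R, F j (p j) ≤ ∏ j ∈ R, ∑ x ∈ s, F j x := by
  set restrict : (ι → α) → (R → α) := fun p j => p j
  have hinj' : Set.InjOn restrict A := fun p hp p' hp' h =>
    hinj p hp p' hp' fun j hj => congrFun h ⟨j, hj⟩
  calc ∑ p ∈ A, ∏ j ∈ R, F j (p j) = ∑ q ∈ A.image restrict, ∏ j : R, F j (q j) := by
        rw [sum_image hinj']
        exact sum_congr rfl fun p _ => (prod_coe_sort R fun j => F j (p j)).symm
    _ ≤ ∑ q ∈ Fintype.piFinset fun _ : R => s, ∏ j : R, F j (q j) := by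
        refine sum_le_sum_of_subset_of_nonneg ?_ fun q hq _ => prod_nonneg fun j _ =>
          hF j j.2 _ (Fintype.mem_piFinset.mp hq j)
        intro q hq
        obtain ⟨p, hp, rfl⟩ := mem_image.mp hq
        exact Fintype.mem_piFinset.mpr fun j => hA p hp j j.2
    _ = ∏ j ∈ R, ∑ x ∈ s, F j x := by
        rw [← prod_univ_sum, prod_coe_sort R fun j => ∑ x ∈ s, F j x]

theorem abs_Hfun_mul_prod_le {ι : Type*} [Fintype ι] [LinearOrder ι] {h : ℕ → ℝ} {p : ι → ℕ}
    {g : ι → ℕ → ℝ} {M : ℝ} (hp : ∀ i, (p i).Prime) (hsq : Squarefull (∏ i, p i))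
    (hh : ∀ i, 0 ≤ h (p i) / p i ∧ h (p i) / p i ≤ 1) (hg : ∀ i, 0 ≤ g i (p i) ∧ g i (p i) ≤ M)
    (hM : 1 ≤ M) {b : ι → ι} (hb : ∀ j ∈ firstIndices p, firstIndex p (b j) = j ∧ b j ≠ j) :
    |Hfun h (∏ i, p i) * ∏ i, g i (p i)| ≤ M ^ Fintype.card ι * ∏ j ∈ firstIndices p,
      g j (p j) * g (b j) (p j) * (h (p j) / p j) * (1 - h (p j) / p j) := by
  set R := firstIndices p
  have hH : |Hfun h (∏ i, p i)| ≤ ∏ j ∈ R, h (p j) / p j * (1 - h (p j) / p j) := by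
    have := abs_Hfun_prod_le hp hsq hh
    rwa [← image_firstIndices p, prod_image (injOn_firstIndices p)] at this
  have hG : ∏ i, g i (p i) ≤ M ^ Fintype.card ι * ∏ j ∈ R, g j (p j) * g (b j) (p j) := by
    refine (prod_le_pow_card_mul_prod_pairs (c := fun i => g i (p i)) (fun i => (hg i).1)
      (fun i => (hg i).2) hM (firstIndex_mem_firstIndices p)
      (fun j hj => (mem_firstIndices p).mp hj) hb).trans_eq ?_
    refine congrArg _ (prod_congr rfl fun j hj => ?_)
    rw [← apply_firstIndex p (b j), (hb j hj).1]
  rw [abs_mul, abs_of_nonneg (prod_nonneg fun i _ => (hg i).1)]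
  calc |Hfun h (∏ i, p i)| * ∏ i, g i (p i)
      ≤ (∏ j ∈ R, h (p j) / p j * (1 - h (p j) / p j)) *
          (M ^ Fintype.card ι * ∏ j ∈ R, g j (p j) * g (b j) (p j)) :=
        mul_le_mul hH hG (prod_nonneg fun i _ => (hg i).1) <|
          prod_nonneg fun j _ => mul_nonneg (hh j).1 (sub_nonneg.mpr (hh j).2)
    _ = _ := by
        rw [mul_left_comm, ← prod_mul_distrib]
        exact congrArg _ (prod_congr rfl fun j _ => by ring)

def unpairedTuples (k : ℕ) (P : Finset ℕ) : Finset (Fin k → ℕ) :=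
  (Fintype.piFinset fun _ : Fin k => P).filter
    fun p => Squarefull (∏ i : Fin k, p i) ∧ 2 * (Finset.univ.image p).card < k

theorem mem_unpairedTuples {k : ℕ} {P : Finset ℕ} {p : Fin k → ℕ} :
    p ∈ unpairedTuples k P ↔
      (∀ i, p i ∈ P) ∧ Squarefull (∏ i, p i) ∧ 2 * #(univ.image p) < k := by
  simp [unpairedTuples]

section UnpairedSum

variable {k : ℕ} {h : ℕ → ℝ} {P : Finset ℕ} {g : Fin k → ℕ → ℝ} {M K r : ℝ}

theorem sum_abs_le_pow_mul_prod_kappaP (hP : ∀ q ∈ P, q.Prime)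
    (hh : ∀ q ∈ P, 0 ≤ h q / q ∧ h q / q ≤ 1) (hg : ∀ i, ∀ q ∈ P, 0 ≤ g i q ∧ g i q ≤ M)
    (hM : 1 ≤ M) {p₀ : Fin k → ℕ} {b : Fin k → Fin k}
    (hb : ∀ j ∈ firstIndices p₀, firstIndex p₀ (b j) = j ∧ b j ≠ j) :
    ∑ p ∈ (unpairedTuples k P).filter (fun p => firstIndex p = firstIndex p₀),
      |Hfun h (∏ i, p i) * ∏ i, g i (p i)|
      ≤ M ^ k * ∏ j ∈ firstIndices p₀, kappaP h P (g j) (g (b j)) := by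
  set A := (unpairedTuples k P).filter fun p => firstIndex p = firstIndex p₀
  set R := firstIndices p₀
  have hRA : ∀ p ∈ A, firstIndices p = R := fun p hp => by
    simp only [R, firstIndices, (mem_filter.mp hp).2]
  set F : Fin k → ℕ → ℝ := fun j x => g j x * g (b j) x * (h x / x) * (1 - h x / x)
  have hF : ∀ j ∈ R, ∀ x ∈ P, 0 ≤ F j x := fun j _ x hx =>
    mul_nonneg (mul_nonneg (mul_nonneg (hg j x hx).1 (hg (b j) x hx).1) (hh x hx).1)
      (sub_nonneg.mpr (hh x hx).2)
  have hpoint : ∀ p ∈ A, |Hfun h (∏ i, p i) * ∏ i, g i (p i)| ≤ M ^ k * ∏ j ∈ R, F j (p j) := by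
    intro p hp
    obtain ⟨hpP, hsq, -⟩ := mem_unpairedTuples.mp (mem_filter.mp hp).1
    have := abs_Hfun_mul_prod_le (h := h) (fun i => hP _ (hpP i)) hsq (fun i => hh _ (hpP i))
      (fun i => hg i _ (hpP i)) hM (b := b) (by rwa [hRA p hp, (mem_filter.mp hp).2])
    rwa [hRA p hp, Fintype.card_fin] at this
  have hinj : ∀ p ∈ A, ∀ p' ∈ A, (∀ j ∈ R, p j = p' j) → p = p' := fun p hp p' hp' hpp' =>
    eq_of_firstIndex_eq p ((mem_filter.mp hp).2.trans (mem_filter.mp hp').2.symm)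
      (hRA p hp ▸ hpp')
  calc ∑ p ∈ A, |Hfun h (∏ i, p i) * ∏ i, g i (p i)|
      ≤ ∑ p ∈ A, M ^ k * ∏ j ∈ R, F j (p j) := sum_le_sum hpoint
    _ = M ^ k * ∑ p ∈ A, ∏ j ∈ R, F j (p j) := (mul_sum _ _ _).symm
    _ ≤ M ^ k * ∏ j ∈ R, ∑ x ∈ P, F j x := by
        gcongr
        exact sum_prod_le_prod_sum hF
          (fun p hp j _ => (mem_unpairedTuples.mp (mem_filter.mp hp).1).1 j) hinj

theorem sum_abs_le_of_firstIndex_eq (hP : ∀ q ∈ P, q.Prime)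
    (hh : ∀ q ∈ P, 0 ≤ h q / q ∧ h q / q ≤ 1) (hg : ∀ i, ∀ q ∈ P, 0 ≤ g i q ∧ g i q ≤ M)
    (hM : 1 ≤ M) (hκ : ∀ i j, kappaP h P (g i) (g j) ≤ K) (hK : 1 ≤ K)
    (hr : ∀ m : ℕ, 2 * m < k → (m : ℝ) ≤ r) (σ : Fin k → Fin k) :
    ∑ p ∈ (unpairedTuples k P).filter (fun p => firstIndex p = σ),
      |Hfun h (∏ i, p i) * ∏ i, g i (p i)| ≤ M ^ k * K ^ r := by
  rcases ((unpairedTuples k P).filter fun p => firstIndex p = σ).eq_empty_or_nonempty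
    with hA | ⟨p₀, hp₀⟩
  · rw [hA, sum_empty]
    positivity
  obtain ⟨hp₀T, rfl⟩ := mem_filter.mp hp₀
  obtain ⟨hp₀P, hsq₀, hcard₀⟩ := mem_unpairedTuples.mp hp₀T
  obtain ⟨b, hb⟩ := exists_other_index_of_two_le_card p₀
    (two_le_card_filter_of_squarefull (fun i => hP _ (hp₀P i)) hsq₀)
  have hκ₀ : ∀ j, 0 ≤ kappaP h P (g j) (g (b j)) := fun j => sum_nonneg fun x hx =>
    mul_nonneg (mul_nonneg (mul_nonneg (hg j x hx).1 (hg (b j) x hx).1) (hh x hx).1)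
      (sub_nonneg.mpr (hh x hx).2)
  calc _ ≤ M ^ k * ∏ j ∈ firstIndices p₀, kappaP h P (g j) (g (b j)) :=
        sum_abs_le_pow_mul_prod_kappaP hP hh hg hM hb
    _ ≤ M ^ k * K ^ (#(firstIndices p₀) : ℝ) := by
        rw [Real.rpow_natCast, ← prod_const]
        gcongr with j
        · exact fun j _ => hκ₀ j
        · exact hκ j (b j)
    _ ≤ M ^ k * K ^ r := by
        gcongr
        exact hr _ (card_firstIndices p₀ ▸ hcard₀)

theorem sum_abs_unpairedTuples_le (hP : ∀ q ∈ P, q.Prime)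
    (hh : ∀ q ∈ P, 0 ≤ h q / q ∧ h q / q ≤ 1) (hg : ∀ i, ∀ q ∈ P, 0 ≤ g i q ∧ g i q ≤ M)
    (hM : 1 ≤ M) (hκ : ∀ i j, kappaP h P (g i) (g j) ≤ K) (hK : 1 ≤ K)
    (hr : ∀ m : ℕ, 2 * m < k → (m : ℝ) ≤ r) :
    ∑ p ∈ unpairedTuples k P, |Hfun h (∏ i, p i) * ∏ i, g i (p i)| ≤ k ^ k * M ^ k * K ^ r := by
  calc ∑ p ∈ unpairedTuples k P, |Hfun h (∏ i, p i) * ∏ i, g i (p i)|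
      = ∑ σ : Fin k → Fin k, ∑ p ∈ (unpairedTuples k P).filter (fun p => firstIndex p = σ),
          |Hfun h (∏ i, p i) * ∏ i, g i (p i)| := (sum_fiberwise _ _ _).symm
    _ ≤ ∑ _σ : Fin k → Fin k, M ^ k * K ^ r :=
        sum_le_sum fun σ _ => sum_abs_le_of_firstIndex_eq hP hh hg hM hκ hK hr σ
    _ = k ^ k * M ^ k * K ^ r := by
        rw [sum_const, card_univ, Fintype.card_fun, Fintype.card_fin, nsmul_eq_mul]
        push_cast
        ring

end UnpairedSum

theorem unpaired_off_lemma_general (k : ℕ) (G : ℝ) :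
    ∃ C : ℝ, ∀ (h : ℕ → ℝ), h 1 = 1 →
      (∀ m n : ℕ, Nat.Coprime m n → h (m * n) = h m * h n) →
      (∀ d : ℕ, 0 < d → 0 ≤ h d) → (∀ d : ℕ, 0 < d → h d ≤ (d : ℝ)) →
      ∀ (P : Finset ℕ), (∀ p ∈ P, p.Prime) →
      ∀ g : Fin k → ℕ → ℝ, (∀ j, StronglyAdditive (g j)) →
      (∀ j, ∀ p : ℕ, p.Prime → 0 ≤ g j p ∧ g j p ≤ G) →
      ∀ K : ℝ,
      (∀ i j : Fin k, |kappaP h P (g i) (g j)| ≤ K) →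
      (∃ i j : Fin k, K = |kappaP h P (g i) (g j)|) →
      1 ≤ K →
      (Even k →
        |∑ p ∈ (Fintype.piFinset fun _ : Fin k => P).filter
            (fun p : Fin k → ℕ =>
              Squarefull (∏ i : Fin k, p i) ∧ 2 * (Finset.univ.image p).card < k),
            Hfun h (∏ i : Fin k, p i) * ∏ i : Fin k, g i (p i)|
          ≤ C * K ^ ((k : ℝ) / 2 - 1)) ∧
      (Odd k →
        |∑ p ∈ (Fintype.piFinset fun _ : Fin k => P).filter
            (fun p : Fin k → ℕ =>
              Squarefull (∏ i : Fin k, p i) ∧ 2 * (Finset.univ.image p).card < k),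
            Hfun h (∏ i : Fin k, p i) * ∏ i : Fin k, g i (p i)|
          ≤ C * K ^ (((k : ℝ) - 1) / 2)) := by
  refine ⟨k ^ k * max 1 G ^ k, fun h _ _ hh₀ hh₁ P hP g _ hg K hκ _ hK => ?_⟩
  have hh : ∀ q ∈ P, 0 ≤ h q / q ∧ h q / q ≤ 1 := fun q hq =>
    have hq₀ : (0 : ℝ) < q := Nat.cast_pos.mpr (hP q hq).pos
    ⟨div_nonneg (hh₀ q (hP q hq).pos) hq₀.le, (div_le_one hq₀).mpr (hh₁ q (hP q hq).pos)⟩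
  have hgM : ∀ i, ∀ q ∈ P, 0 ≤ g i q ∧ g i q ≤ max 1 G := fun i q hq =>
    ⟨(hg i q (hP q hq)).1, (hg i q (hP q hq)).2.trans (le_max_right 1 G)⟩
  have hbound (r : ℝ) (hr : ∀ m : ℕ, 2 * m < k → (m : ℝ) ≤ r) :=
    (abs_sum_le_sum_abs _ _).trans <| sum_abs_unpairedTuples_le hP hh hgM (le_max_left 1 G)
      (fun i j => (le_abs_self _).trans (hκ i j)) hK hr
  refine ⟨fun ⟨t, ht⟩ => hbound _ fun m hm => ?_, fun ⟨t, ht⟩ => hbound _ fun m hm => ?_⟩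
  · have : (m : ℝ) + 1 ≤ t := by exact_mod_cast (show m + 1 ≤ t by omega)
    rw [ht]
    push_cast
    linarith
  · have : (m : ℝ) ≤ t := by exact_mod_cast (show m ≤ t by omega)
    rw [ht]
    push_cast
    linarith

/-- **Lemma 5.3**: the sum over `k`-tuples of primes of `P` whose product is squarefull
with fewer than `k/2` distinct primes is `O(𝔎^{k/2 − 1})` for even `k` and
`O(𝔎^{(k−1)/2})` for odd `k`. -/
theorem unpaired_off_lemma (k : ℕ) (hk : 2 ≤ k) (G : ℝ) (hG : 0 < G) :
    ∃ C : ℝ, ∀ (h : ℕ → ℝ), h 1 = 1 →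
      (∀ m n : ℕ, Nat.Coprime m n → h (m * n) = h m * h n) →
      (∀ d : ℕ, 0 < d → 0 ≤ h d) → (∀ d : ℕ, 0 < d → h d ≤ (d : ℝ)) →
      ∀ (P : Finset ℕ), (∀ p ∈ P, p.Prime) →
      ∀ g : Fin k → ℕ → ℝ, (∀ j, StronglyAdditive (g j)) →
      (∀ j, ∀ p : ℕ, p.Prime → 0 ≤ g j p ∧ g j p ≤ G) →
      ∀ K : ℝ,
      (∀ i j : Fin k, |kappaP h P (g i) (g j)| ≤ K) →
      (∃ i j : Fin k, K = |kappaP h P (g i) (g j)|) →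
      1 ≤ K →
      (Even k →
        |∑ p ∈ (Fintype.piFinset fun _ : Fin k => P).filter
            (fun p : Fin k → ℕ =>
              Squarefull (∏ i : Fin k, p i) ∧ 2 * (Finset.univ.image p).card < k),
            Hfun h (∏ i : Fin k, p i) * ∏ i : Fin k, g i (p i)|
          ≤ C * K ^ ((k : ℝ) / 2 - 1)) ∧
      (Odd k →
        |∑ p ∈ (Fintype.piFinset fun _ : Fin k => P).filter
            (fun p : Fin k → ℕ =>
              Squarefull (∏ i : Fin k, p i) ∧ 2 * (Finset.univ.image p).card < k),
            Hfun h (∏ i : Fin k, p i) * ∏ i : Fin k, g i (p i)|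
          ≤ C * K ^ (((k : ℝ) - 1) / 2)) :=
  unpaired_off_lemma_general k G
end
end
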